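/- arXiv:2010.01481 — 7 statements merged into one kernel-verified Lean document; each statement's English description precedes it below -/
import Mathlib

section
/- Let H be an r-uniform hypergraph of girth larger than ℓ (i.e., containing no Berge cycle of length between 2 and ℓ). If v_1,...,v_p are distinct vertices forming a cycle in the 2-shadow of H (i.e., each consecutive pair {v_i, v_{i+1}} and {v_p, v_1} lies in some hyperedge of H) with p ≤ ℓ, then there exists a single hyperedge e ∈ E(H) with {v_1,...,v_p} ⊆ e. -/
/-- `H` contains a Berge `p`-cycle: distinct vertices `v i` and distinct hyperedges `e i`
with `v i, v (i+1) ∈ e i` cyclically. -/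
def IsBergeCycle {V : Type*} (H : Finset (Finset V)) (p : ℕ) : Prop :=
  ∃ (v : ZMod p → V) (e : ZMod p → Finset V),
    Function.Injective v ∧ Function.Injective e ∧
    (∀ i, e i ∈ H) ∧ (∀ i, v i ∈ e i ∧ v (i + 1) ∈ e i)

/-- `H` has girth greater than `ℓ`: no Berge cycle of length between 2 and `ℓ`. -/
def GirthGt {V : Type*} (H : Finset (Finset V)) (ℓ : ℕ) : Prop :=
  ∀ p, 2 ≤ p → p ≤ ℓ → ¬ IsBergeCycle H p

/-- Girth greater than `ℓ ≥ 2` implies linearity: two distinct edges share at most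
one vertex. -/
lemma linear_of_girthGt {V : Type*} (H : Finset (Finset V)) (ℓ : ℕ)
    (hg : GirthGt H ℓ) (hℓ : 2 ≤ ℓ)
    {e f : Finset V} (he : e ∈ H) (hf : f ∈ H) (hef : e ≠ f)
    {a b : V} (hab : a ≠ b) (hae : a ∈ e) (haf : a ∈ f) (hbe : b ∈ e) (hbf : b ∈ f) :
    False := by
  apply hg 2 le_rfl hℓ
  refine ⟨fun i => if i = 0 then a else b, fun i => if i = 0 then e else f, ?_, ?_, ?_, ?_⟩
  · intro i j h
    rcases (show ∀ x : ZMod 2, x = 0 ∨ x = 1 by decide) i with rfl | rfl <;> rcases (show ∀ x : ZMod 2, x = 0 ∨ x = 1 by decide) j with rfl | rfl <;> simp_all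
  · intro i j h
    rcases (show ∀ x : ZMod 2, x = 0 ∨ x = 1 by decide) i with rfl | rfl <;> rcases (show ∀ x : ZMod 2, x = 0 ∨ x = 1 by decide) j with rfl | rfl <;> simp_all
  · intro i; rcases (show ∀ x : ZMod 2, x = 0 ∨ x = 1 by decide) i with rfl | rfl <;> simp [he, hf]
  · intro i
    have h01 : (0 + 1 : ZMod 2) ≠ 0 := by decide
    have h11 : (1 + 1 : ZMod 2) = 0 := by decide
    have h10 : (1 : ZMod 2) ≠ 0 := by decide
    rcases (show ∀ x : ZMod 2, x = 0 ∨ x = 1 by decide) i with rfl | rfl <;> simp [h01, h11, h10, hae, hbe, haf, hbf]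

lemma key_lemma {V : Type*} (H : Finset (Finset V)) (ℓ : ℕ)
    (hg : GirthGt H ℓ) (hℓ : 2 ≤ ℓ) :
    ∀ n, 1 ≤ n → n ≤ ℓ → ∀ u : ℕ → V,
      (∀ a, a < n → ∀ b, b < n → u a = u b → a = b) →
      (∀ k, k < n → ∃ e ∈ H, u k ∈ e ∧ u ((k + 1) % n) ∈ e) →
      ∃ e ∈ H, ∀ k, k < n → u k ∈ e := by
  intro n
  induction n using Nat.strong_induction_on with
  | _ n IH =>
  intro hn1 hnl u hinj hcyc
  -- small cases
  rcases lt_or_ge n 3 with hn3 | hn3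
  · interval_cases n
    · obtain ⟨e, he, h1, _⟩ := hcyc 0 (by omega)
      exact ⟨e, he, by intro k hk; interval_cases k; exact h1⟩
    · obtain ⟨e, he, h1, h2⟩ := hcyc 0 (by omega)
      refine ⟨e, he, ?_⟩
      intro k hk; interval_cases k
      · exact h1
      · simpa using h2
  -- main case: n ≥ 3
  obtain ⟨e₀, he₀, -, -⟩ := hcyc 0 (by omega)
  have hcyc' : ∀ k, ∃ e, e ∈ H ∧ (k < n → u k ∈ e ∧ u ((k + 1) % n) ∈ e) := by
    intro k
    by_cases h : k < n
    · obtain ⟨e, he, h1, h2⟩ := hcyc k h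
      exact ⟨e, he, fun _ => ⟨h1, h2⟩⟩
    · exact ⟨e₀, he₀, fun h' => absurd h' h⟩
  choose E hEH hEspec using hcyc'
  by_cases hEinj : ∀ a, a < n → ∀ b, b < n → E a = E b → a = b
  · -- all edges distinct : Berge n-cycle, contradiction
    exfalso
    haveI : NeZero n := ⟨by omega⟩
    haveI : Fact (1 < n) := ⟨by omega⟩
    apply hg n (by omega) hnl
    refine ⟨fun i => u i.val, fun i => E i.val, ?_, ?_, fun i => hEH i.val, ?_⟩
    · intro i j h
      exact ZMod.val_injective n (hinj _ i.val_lt _ j.val_lt h)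
    · intro i j h
      exact ZMod.val_injective n (hEinj _ i.val_lt _ j.val_lt h)
    · intro i
      refine ⟨(hEspec i.val i.val_lt).1, ?_⟩
      have hval : (i + 1).val = (i.val + 1) % n := by
        rw [ZMod.val_add, ZMod.val_one]
      show u (i + 1).val ∈ E i.val
      rw [hval]
      exact (hEspec i.val i.val_lt).2
  · -- two edges coincide
    push_neg at hEinj
    obtain ⟨a, ha, b, hb, hEab, hab⟩ := hEinj
    -- wlog i < j
    obtain ⟨i, j, hij, hjn, hEij⟩ : ∃ i j, i < j ∧ j < n ∧ E i = E j := by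
      rcases lt_or_gt_of_ne hab with h | h
      · exact ⟨a, b, h, hb, hEab⟩
      · exact ⟨b, a, h, ha, hEab.symm⟩
    set m1 := j - i with hm1
    set m2 := n - (j - i) with hm2
    have hin : i < n := by omega
    have hui : u i ∈ E i := (hEspec i hin).1
    have hui1 : u (i + 1) ∈ E i := by
      have := (hEspec i hin).2
      rwa [Nat.mod_eq_of_lt (by omega)] at this
    have huj : u j ∈ E i := by rw [hEij]; exact (hEspec j hjn).1
    have huj1 : u ((j + 1) % n) ∈ E i := by rw [hEij]; exact (hEspec j hjn).2
    -- arc 1 : vertices u (i+1), ..., u j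
    obtain ⟨f, hfH, hfmem⟩ :
        ∃ f ∈ H, ∀ k, k < m1 → u (i + 1 + k) ∈ f := by
      refine IH m1 (by omega) (by omega) (by omega) (fun k => u (i + 1 + k)) ?_ ?_
      · intro c hc d hd h
        have := hinj _ (by omega) _ (by omega) h
        omega
      · intro k hk
        show ∃ e ∈ H, u (i + 1 + k) ∈ e ∧ u (i + 1 + ((k + 1) % m1)) ∈ e
        by_cases h : k + 1 < m1
        · obtain ⟨e, he, h1, h2⟩ := hcyc (i + 1 + k) (by omega)
          rw [Nat.mod_eq_of_lt (by omega)] at h2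
          refine ⟨e, he, h1, ?_⟩
          rw [Nat.mod_eq_of_lt h, ← Nat.add_assoc]
          exact h2
        · have hk' : k + 1 = m1 := by omega
          refine ⟨E i, hEH i, ?_, ?_⟩
          · have hj' : i + 1 + k = j := by omega
            rw [hj']; exact huj
          · rw [hk', Nat.mod_self]
            simpa using hui1
    -- arc 2 : vertices u ((j+1) % n), ..., u i
    obtain ⟨g, hgH, hgmem⟩ :
        ∃ g ∈ H, ∀ k, k < m2 → u ((j + 1 + k) % n) ∈ g := by
      refine IH m2 (by omega) (by omega) (by omega) (fun k => u ((j + 1 + k) % n)) ?_ ?_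
      · intro c hc d hd h
        have h1 := hinj _ (Nat.mod_lt _ (by omega)) _ (Nat.mod_lt _ (by omega)) h
        have h2 : c ≡ d [MOD n] := Nat.ModEq.add_left_cancel' (j + 1) h1
        have h3 : c % n = d % n := h2
        rwa [Nat.mod_eq_of_lt (by omega), Nat.mod_eq_of_lt (by omega)] at h3
      · intro k hk
        show ∃ e ∈ H, u ((j + 1 + k) % n) ∈ e ∧ u ((j + 1 + ((k + 1) % m2)) % n) ∈ e
        by_cases h : k + 1 < m2
        · obtain ⟨e, he, h1, h2⟩ := hcyc ((j + 1 + k) % n) (Nat.mod_lt _ (by omega))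
          refine ⟨e, he, h1, ?_⟩
          rw [Nat.mod_eq_of_lt h]
          have h4 : ((j + 1 + k) % n + 1) % n = (j + 1 + (k + 1)) % n := by
            rw [Nat.mod_add_mod, Nat.add_assoc (j + 1) k 1]
          rwa [h4] at h2
        · have hk' : k + 1 = m2 := by omega
          refine ⟨E i, hEH i, ?_, ?_⟩
          · have h1 : j + 1 + k = n + i := by omega
            rw [h1, Nat.add_mod_left, Nat.mod_eq_of_lt hin]
            exact hui
          · rw [hk', Nat.mod_self]
            simpa using huj1
    -- glue: f = E i (if arc1 long), g = E i (if arc2 long)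
    have hf_all : ∀ t, i + 1 ≤ t → t ≤ j → u t ∈ E i := by
      intro t ht1 ht2
      rcases eq_or_lt_of_le (show 1 ≤ m1 by omega) with h1 | h1
      · have : t = j := by omega
        rw [this]; exact huj
      · have hfE : f = E i := by
          by_contra hne
          refine linear_of_girthGt H ℓ hg hℓ hfH (hEH i) hne
            (a := u (i + 1)) (b := u j) ?_ ?_ hui1 ?_ huj
          · intro h
            have := hinj _ (by omega) _ (by omega) h
            omega
          · simpa using hfmem 0 (by omega)
          · have := hfmem (m1 - 1) (by omega)
            have he : i + 1 + (m1 - 1) = j := by omega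
            rwa [he] at this
        have hm := hfmem (t - i - 1) (by omega)
        have he : i + 1 + (t - i - 1) = t := by omega
        rw [he, hfE] at hm
        exact hm
    have hg_all : ∀ t, t < n → (t ≤ i ∨ j + 1 ≤ t) → u t ∈ E i := by
      intro t htn ht
      rcases eq_or_lt_of_le (show 1 ≤ m2 by omega) with h1 | h1
      · -- m2 = 1 : i = 0, j = n - 1
        have hi0 : i = 0 := by omega
        have : t = i := by omega
        rw [this]; exact hui
      · have hgE : g = E i := by
          by_contra hne
          have hj1 : (j + 1) % n ≠ i := by
            rcases eq_or_lt_of_le (show j + 1 ≤ n by omega) with h | h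
            · rw [← h, Nat.mod_self]
              omega
            · rw [Nat.mod_eq_of_lt h]
              omega
          refine linear_of_girthGt H ℓ hg hℓ hgH (hEH i) hne
            (a := u ((j + 1) % n)) (b := u i) ?_ ?_ huj1 ?_ hui
          · intro h
            exact hj1 (hinj _ (Nat.mod_lt _ (by omega)) _ hin h)
          · simpa using hgmem 0 (by omega)
          · have := hgmem (m2 - 1) (by omega)
            have he : j + 1 + (m2 - 1) = n + i := by omega
            rw [he, Nat.add_mod_left, Nat.mod_eq_of_lt hin] at this
            exact this
        rcases ht with ht | ht
        · have := hgmem (n - j - 1 + t) (by omega)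
          have he : j + 1 + (n - j - 1 + t) = n + t := by omega
          rw [he, Nat.add_mod_left, Nat.mod_eq_of_lt htn] at this
          rwa [hgE] at this
        · have := hgmem (t - j - 1) (by omega)
          have he : j + 1 + (t - j - 1) = t := by omega
          rw [he, Nat.mod_eq_of_lt htn] at this
          rwa [hgE] at this
    refine ⟨E i, hEH i, ?_⟩
    intro t htn
    by_cases h : i + 1 ≤ t ∧ t ≤ j
    · exact hf_all t h.1 h.2
    · exact hg_all t htn (by omega)

theorem stmt1 {V : Type*} (H : Finset (Finset V)) (r ℓ p : ℕ)
    (hr : ∀ e ∈ H, e.card = r) (hg : GirthGt H ℓ)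
    (v : ZMod p → V) (hv : Function.Injective v)
    (hp3 : 3 ≤ p) (hpℓ : p ≤ ℓ)
    (hcyc : ∀ i : ZMod p, ∃ e ∈ H, v i ∈ e ∧ v (i + 1) ∈ e) :
    ∃ e ∈ H, ∀ i : ZMod p, v i ∈ e := by
  haveI : NeZero p := ⟨by omega⟩
  set u : ℕ → V := fun k => v ((k : ℕ) : ZMod p) with hu
  have hinj : ∀ a, a < p → ∀ b, b < p → u a = u b → a = b := by
    intro a ha b hb h
    have := hv h
    have h2 := congrArg ZMod.val this
    rwa [ZMod.val_cast_of_lt ha, ZMod.val_cast_of_lt hb] at h2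
  have hcyc' : ∀ k, k < p → ∃ e ∈ H, u k ∈ e ∧ u ((k + 1) % p) ∈ e := by
    intro k hk
    obtain ⟨e, he, h1, h2⟩ := hcyc ((k : ℕ) : ZMod p)
    refine ⟨e, he, h1, ?_⟩
    have : (((k + 1) % p : ℕ) : ZMod p) = ((k : ℕ) : ZMod p) + 1 := by
      rw [ZMod.natCast_mod]
      push_cast
      ring
    simpa [hu, this] using h2
  obtain ⟨e, he, hall⟩ := key_lemma H ℓ hg (by omega) p (by omega) hpℓ u hinj hcyc'
  refine ⟨e, he, ?_⟩
  intro i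
  have := hall i.val i.val_lt
  simpa [hu, ZMod.natCast_rightInverse i] using this
end

section
/- Let H be an r-uniform hypergraph of girth larger than ℓ ≥ 3. If the 2-shadow of H contains a book B on exactly r vertices all of whose pages are cycles of length at most ℓ, then the vertex set of B is a hyperedge of H. -/
/-- `F` is the edge set of a cycle of length `p` (vertices `v 0, …, v (p-1)`). -/
def IsCycleEdges {V : Type*} [DecidableEq V] (F : Finset (Finset V)) (p : ℕ) : Prop :=
  3 ≤ p ∧ ∃ v : ZMod p → V, Function.Injective v ∧
    ∀ s, s ∈ F ↔ ∃ i : ZMod p, s = ({v i, v (i + 1)} : Finset V)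

/-- `B` (an edge set) is a book all of whose pages are cycles of length at most `ℓ`:
a union of cycles `F i` pairwise intersecting exactly in the common spine edge `s`. -/
def IsBook {V : Type*} [DecidableEq V] (B : Finset (Finset V)) (ℓ : ℕ) : Prop :=
  ∃ (k : ℕ) (F : Fin (k + 1) → Finset (Finset V)) (s : Finset V),
    (∀ i, ∃ p, p ≤ ℓ ∧ IsCycleEdges (F i) p) ∧
    (∀ i, s ∈ F i) ∧
    (∀ i j, i ≠ j → F i ∩ F j = {s}) ∧
    B = Finset.univ.sup F

/-- The 2-shadow of `H`: all pairs of vertices lying in a common hyperedge. -/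
def shadow2 {V : Type*} (H : Finset (Finset V)) : Set (Finset V) :=
  {s | s.card = 2 ∧ ∃ e ∈ H, s ⊆ e}

lemma keyA {V : Type*} (H : Finset (Finset V)) (ℓ : ℕ) (hg : GirthGt H ℓ) :
    ∀ p, p ≤ ℓ → ∀ (v : ℕ → V) (f : ℕ → Finset V),
      (∀ i j, i < p → j < p → v i = v j → i = j) →
      (∀ i, i < p → f i ∈ H) →
      (∀ i, i < p → v i ∈ f i) →
      (∀ m, m < p → v ((m + 1) % p) ∈ f m) →
      ∀ i, i < p → f i = f 0 := by
  intro p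
  induction p using Nat.strong_induction_on with
  | _ p ih =>
    intro hpℓ v f h1 h2 h3 h4 i hip
    have hp0 : 0 < p := by omega
    by_cases hinj : ∀ a b, a < p → b < p → f a = f b → a = b
    · -- f injective on [0,p): either p = 1 (trivial) or Berge p-cycle, contradiction
      rcases Nat.eq_or_lt_of_le (Nat.one_le_iff_ne_zero.mpr hp0.ne') with h1p | h2p
      · have : i = 0 := by omega
        rw [this]
      · -- p ≥ 2
        haveI : NeZero p := ⟨hp0.ne'⟩
        exfalso
        apply hg p h2p hpℓ
        refine ⟨fun i => v i.val, fun i => f i.val, ?_, ?_, fun i => h2 _ (ZMod.val_lt i), ?_⟩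
        · intro a b hab
          exact ZMod.val_injective p (h1 _ _ (ZMod.val_lt a) (ZMod.val_lt b) hab)
        · intro a b hab
          exact ZMod.val_injective p (hinj _ _ (ZMod.val_lt a) (ZMod.val_lt b) hab)
        · intro a
          refine ⟨h3 _ (ZMod.val_lt a), ?_⟩
          have hv : (a + 1).val = (a.val + 1) % p := by
            conv_lhs => rw [← ZMod.natCast_rightInverse a]
            rw [← Nat.cast_one, ← Nat.cast_add, ZMod.val_natCast]
          show v (a + 1).val ∈ f a.val
          rw [hv]
          exact h4 _ (ZMod.val_lt a)
    · push_neg at hinj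
      obtain ⟨a, b, ha, hb, hfab, hne⟩ := hinj
      -- wlog a < b
      wlog hab : a < b generalizing a b
      · exact this b a hb ha hfab.symm (Ne.symm hne) (by omega)
      have hp2 : 2 ≤ p := by omega
      set d := b - a with hd
      have hd1 : 1 ≤ d := by omega
      have hdp : d < p := by omega
      set v' : ℕ → V := fun n => v ((a + n) % p) with hv'
      set f' : ℕ → Finset V := fun n => f ((a + n) % p) with hf'
      have hmodlt : ∀ x : ℕ, x % p < p := fun x => Nat.mod_lt x hp0
      have hmodinj : ∀ i j, i < p → j < p → (a + i) % p = (a + j) % p → i = j := by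
        intro i j hi hj h
        have h2i : (a + i) % p = if a + i < p then a + i else a + i - p := by
          split
          · exact Nat.mod_eq_of_lt (by omega)
          · rw [Nat.mod_eq_sub_mod (by omega)]; exact Nat.mod_eq_of_lt (by omega)
        have h2j : (a + j) % p = if a + j < p then a + j else a + j - p := by
          split
          · exact Nat.mod_eq_of_lt (by omega)
          · rw [Nat.mod_eq_sub_mod (by omega)]; exact Nat.mod_eq_of_lt (by omega)
        rw [h2i, h2j] at h
        split_ifs at h <;> omega
      have h1' : ∀ i j, i < p → j < p → v' i = v' j → i = j := by
        intro i j hi hj h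
        exact hmodinj i j hi hj (h1 _ _ (hmodlt _) (hmodlt _) h)
      have h2' : ∀ i, i < p → f' i ∈ H := fun i _ => h2 _ (hmodlt _)
      have h3' : ∀ i, i < p → v' i ∈ f' i := fun i _ => h3 _ (hmodlt _)
      have h4' : ∀ m, m < p → v' ((m + 1) % p) ∈ f' m := by
        intro m _
        have key : (a + (m + 1) % p) % p = ((a + m) % p + 1) % p := by
          conv_lhs => rw [Nat.add_mod]
          conv_rhs => rw [Nat.add_mod]
          rw [Nat.mod_mod_of_dvd _ dvd_rfl, Nat.mod_mod_of_dvd _ dvd_rfl]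
          rw [← Nat.add_mod, ← Nat.add_mod, Nat.add_assoc]
        show v ((a + (m + 1) % p) % p) ∈ f ((a + m) % p)
        rw [key]
        exact h4 _ (hmodlt _)
      have hf0d : f' 0 = f' d := by
        show f ((a + 0) % p) = f ((a + d) % p)
        have e1 : (a + 0) % p = a := by rw [Nat.add_zero]; exact Nat.mod_eq_of_lt (by omega)
        have e2 : (a + d) % p = b := by rw [show a + d = b by omega]; exact Nat.mod_eq_of_lt hb
        rw [e1, e2, hfab]
      -- cycle 1 : indices 1..d
      have hc1 : ∀ t, t < d → f' (t + 1) = f' 1 := by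
        have := ih d hdp (by omega) (fun t => v' (t + 1)) (fun t => f' (t + 1))
          (fun i j hi hj h => by
            have := h1' (i + 1) (j + 1) (by omega) (by omega) h; omega)
          (fun t ht => h2' _ (by omega))
          (fun t ht => h3' _ (by omega))
          ?_
        · intro t ht; exact this t ht
        · intro m hm
          by_cases hmd : m + 1 < d
          · show v' ((m + 1) % d + 1) ∈ f' (m + 1)
            rw [Nat.mod_eq_of_lt hmd]
            have := h4' (m + 1) (by omega)
            rwa [Nat.mod_eq_of_lt (by omega)] at this
          · have hmd' : m + 1 = d := by omega
            show v' ((m + 1) % d + 1) ∈ f' (m + 1)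
            rw [hmd', Nat.mod_self, ← hf0d]
            have := h4' 0 (by omega)
            rwa [Nat.mod_eq_of_lt (by omega)] at this
      have hcy1 : ∀ t, 1 ≤ t → t ≤ d → f' t = f' 0 := by
        intro t ht1 htd
        have e1 : f' t = f' 1 := by
          have := hc1 (t - 1) (by omega); rwa [show t - 1 + 1 = t by omega] at this
        have e2 : f' d = f' 1 := by
          have := hc1 (d - 1) (by omega); rwa [show d - 1 + 1 = d by omega] at this
        rw [e1, hf0d, e2]
      -- cycle 2 : indices d+1..p-1 (length q = p - d)
      set q := p - d with hq
      have hq1 : 1 ≤ q := by omega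
      have hqp : q < p := by omega
      have hc2 : ∀ t, t < q → f' ((d + 1 + t) % p) = f' ((d + 1) % p) := by
        have := ih q hqp (by omega) (fun t => v' ((d + 1 + t) % p)) (fun t => f' ((d + 1 + t) % p))
          (fun i j hi hj h => by
            have hlt : ∀ t, t < q → (d + 1 + t) % p = if d + 1 + t < p then d + 1 + t else d + 1 + t - p := by
              intro t htq
              split
              · exact Nat.mod_eq_of_lt (by omega)
              · rw [Nat.mod_eq_sub_mod (by omega)]; exact Nat.mod_eq_of_lt (by omega)
            have := h1' _ _ (hmodlt (d + 1 + i)) (hmodlt (d + 1 + j)) h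
            rw [hlt i hi, hlt j hj] at this
            split_ifs at this <;> omega)
          (fun t ht => h2' _ (hmodlt _))
          (fun t ht => h3' _ (hmodlt _))
          ?_
        · intro t ht; exact this t ht
        · intro m hm
          by_cases hmq : m + 1 < q
          · show v' ((d + 1 + (m + 1) % q) % p) ∈ f' ((d + 1 + m) % p)
            have hlt : d + 1 + m < p := by omega
            rw [Nat.mod_eq_of_lt hmq, Nat.mod_eq_of_lt hlt,
              show d + 1 + (m + 1) = d + 1 + m + 1 by omega]
            exact h4' (d + 1 + m) (by omega)
          · have hmq' : m + 1 = q := by omega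
            show v' ((d + 1 + (m + 1) % q) % p) ∈ f' ((d + 1 + m) % p)
            rw [hmq', Nat.mod_self, Nat.add_zero,
              show d + 1 + m = p by omega, Nat.mod_self, hf0d]
            exact h4' d (by omega)
      have hcy2 : ∀ t, d + 1 ≤ t → t < p → f' t = f' 0 := by
        intro t ht1 htp
        have hq2 : 2 ≤ q := by omega
        have hbase : f' ((d + 1) % p) = f' 0 := by
          have := hc2 (q - 1) (by omega)
          rw [show d + 1 + (q - 1) = p by omega, Nat.mod_self] at this
          exact this.symm
        have := hc2 (t - d - 1) (by omega)
        rw [show d + 1 + (t - d - 1) = t by omega, Nat.mod_eq_of_lt htp, hbase] at this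
        exact this
      have hall : ∀ t, t < p → f' t = f' 0 := by
        intro t htp
        rcases Nat.lt_or_ge t 1 with h | h
        · interval_cases t; rfl
        · rcases le_or_gt t d with h' | h'
          · exact hcy1 t h h'
          · exact hcy2 t (by omega) htp
      -- translate back
      have hback : ∀ j, j < p → f j = f a := by
        intro j hj
        have : ∃ t, t < p ∧ (a + t) % p = j := by
          rcases le_or_gt a j with h | h
          · exact ⟨j - a, by omega, by rw [show a + (j - a) = j by omega]; exact Nat.mod_eq_of_lt hj⟩
          · refine ⟨j + p - a, by omega, ?_⟩
            rw [show a + (j + p - a) = j + p by omega, Nat.add_mod_right]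
            exact Nat.mod_eq_of_lt hj
        obtain ⟨t, htp, hts⟩ := this
        have := hall t htp
        show f j = f a
        rw [← hts]
        have e0 : f' 0 = f a := by
          show f ((a + 0) % p) = f a
          rw [Nat.add_zero, Nat.mod_eq_of_lt (by omega)]
        calc f ((a + t) % p) = f' t := rfl
          _ = f' 0 := this
          _ = f a := e0
      rw [hback i hip, ← hback 0 hp0]

lemma pageLem {V : Type*} [DecidableEq V] (H : Finset (Finset V)) (ℓ p : ℕ)
    (hg : GirthGt H ℓ) (F : Finset (Finset V)) (hp : p ≤ ℓ)
    (hc : IsCycleEdges F p) (hsh : ∀ s ∈ F, s ∈ shadow2 H) :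
    ∃ E ∈ H, ∀ s ∈ F, s ⊆ E := by
  obtain ⟨hp3, v, hvinj, hmem⟩ := hc
  haveI : NeZero p := ⟨by omega⟩
  have hpair : ∀ i : ZMod p, ({v i, v (i + 1)} : Finset V) ∈ F :=
    fun i => (hmem _).mpr ⟨i, rfl⟩
  have hex : ∀ i : ZMod p, ∃ e ∈ H, v i ∈ e ∧ v (i + 1) ∈ e := by
    intro i
    obtain ⟨-, e, heH, hsub⟩ := hsh _ (hpair i)
    exact ⟨e, heH, hsub (Finset.mem_insert_self _ _),
      hsub (Finset.mem_insert_of_mem (Finset.mem_singleton_self _))⟩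
  choose e heH hei hei1 using hex
  have hkey := keyA H ℓ hg p hp (fun n => v (n : ZMod p)) (fun n => e (n : ZMod p))
    (fun i j hi hj h => by
      have := hvinj h
      have h1 : ((i : ZMod p)).val = ((j : ZMod p)).val := by rw [this]
      rwa [ZMod.val_natCast, ZMod.val_natCast, Nat.mod_eq_of_lt hi, Nat.mod_eq_of_lt hj] at h1)
    (fun i _ => heH _)
    (fun i _ => hei _)
    (fun m hm => by
      show v (((m + 1) % p : ℕ) : ZMod p) ∈ e ((m : ℕ) : ZMod p)
      have hcast : (((m + 1) % p : ℕ) : ZMod p) = ((m : ℕ) : ZMod p) + 1 := by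
        rw [ZMod.natCast_mod]
        push_cast
        ring
      rw [hcast]
      exact hei1 _)
  refine ⟨e ((0 : ℕ) : ZMod p), heH _, ?_⟩
  intro s hs
  obtain ⟨i, rfl⟩ := (hmem s).mp hs
  have hie : e i = e ((0 : ℕ) : ZMod p) := by
    have h2 : e ((i.val : ℕ) : ZMod p) = e (((0 : ℕ)) : ZMod p) := hkey i.val (ZMod.val_lt i)
    rwa [ZMod.natCast_rightInverse i] at h2
  intro x hx
  rw [Finset.mem_insert, Finset.mem_singleton] at hx
  rcases hx with rfl | rfl
  · rw [← hie]; exact hei i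
  · rw [← hie]; exact hei1 i

/-- No Berge 2-cycle: two distinct hyperedges cannot share two distinct vertices. -/
lemma linearLem {V : Type*} (H : Finset (Finset V)) (ℓ : ℕ) (hℓ : 2 ≤ ℓ)
    (hg : GirthGt H ℓ) {E1 E2 : Finset V} (h1 : E1 ∈ H) (h2 : E2 ∈ H)
    {x y : V} (hxy : x ≠ y) (hx1 : x ∈ E1) (hy1 : y ∈ E1) (hx2 : x ∈ E2) (hy2 : y ∈ E2) :
    E1 = E2 := by
  by_contra hne
  apply hg 2 le_rfl hℓ
  have h01 : ∀ i : ZMod 2, i = 0 ∨ i = 1 := by decide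
  refine ⟨fun i => if i = 0 then x else y, fun i => if i = 0 then E1 else E2, ?_, ?_, ?_, ?_⟩
  · intro i j h
    rcases h01 i with rfl | rfl <;> rcases h01 j with rfl | rfl <;> simp_all
  · intro i j h
    rcases h01 i with rfl | rfl <;> rcases h01 j with rfl | rfl <;> simp_all
  · intro i
    rcases h01 i with rfl | rfl <;> simp [h1, h2]
  · intro i
    rcases h01 i with rfl | rfl <;>
      simp_all [show ((1 : ZMod 2) + 1) = 0 from rfl, show ((0 : ZMod 2) + 1) = 1 from rfl,
        show (1 : ZMod 2) ≠ 0 from by decide]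

theorem stmt2 {V : Type*} [DecidableEq V] (H B : Finset (Finset V)) (r ℓ : ℕ)
    (hℓ : 3 ≤ ℓ) (hru : ∀ e ∈ H, e.card = r)
    (hg : GirthGt H ℓ)
    (hB : IsBook B ℓ) (hBsh : ∀ b ∈ B, b ∈ shadow2 H)
    (hcard : (B.sup id).card = r) :
    B.sup id ∈ H := by
  obtain ⟨k, F, s, hpages, hspine, hinter, hBeq⟩ := hB
  have hFB : ∀ i, F i ⊆ B := by
    intro i b hb
    rw [hBeq]
    exact Finset.mem_sup.mpr ⟨i, Finset.mem_univ i, hb⟩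
  choose p hpl hcyc using hpages
  have hE : ∀ i, ∃ E ∈ H, ∀ t ∈ F i, t ⊆ E :=
    fun i => pageLem H ℓ (p i) hg (F i) (hpl i) (hcyc i) (fun t ht => hBsh t (hFB i ht))
  choose E hEH hEsub using hE
  have hsB : s ∈ B := hFB 0 (hspine 0)
  obtain ⟨hs2, -⟩ := hBsh s hsB
  obtain ⟨x, y, hxy, rfl⟩ := Finset.card_eq_two.mp hs2
  have hxE : ∀ i, x ∈ E i := fun i => hEsub i _ (hspine i) (by simp)
  have hyE : ∀ i, y ∈ E i := fun i => hEsub i _ (hspine i) (by simp)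
  have hEconst : ∀ i, E i = E 0 := fun i =>
    linearLem H ℓ (by omega) hg (hEH i) (hEH 0) hxy (hxE i) (hyE i) (hxE 0) (hyE 0)
  have hsub : B.sup id ⊆ E 0 := by
    show B.sup id ≤ E 0
    apply Finset.sup_le
    intro b hb
    rw [hBeq] at hb
    obtain ⟨i, -, hbi⟩ := Finset.mem_sup.mp hb
    intro z hz
    have h := hEsub i b hbi
    rw [hEconst i] at h
    exact h hz
  have hcards : (E 0).card ≤ (B.sup id).card := by
    rw [hcard, hru _ (hEH 0)]
  rw [Finset.eq_of_subset_of_card_le hsub hcards]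
  exact hEH 0
end

section
/- Let ℓ, r ≥ 3 and λ = ⌈(r−2)/(ℓ−2)⌉. For all m, n ≥ 1, the number of r-uniform hypergraphs on [n] with m hyperedges and girth greater than ℓ is at most the (r−1+λ)-th power of the number of graphs on [n] with m edges and girth greater than ℓ; that is, N_m^r(n,ℓ) ≤ N_m^2(n,ℓ)^{r−1+λ}. -/
set_option linter.unusedSectionVars false
set_option linter.unusedVariables false

section Vtx
variable {V : Type*} [LinearOrder V] [DecidableEq V]

/-- the `j`-th smallest element of `e` (default `v₀`). -/
def vtx (v₀ : V) (e : Finset V) (j : ℕ) : V := (e.sort (· ≤ ·)).getD j v₀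

lemma vtx_mem {v₀ : V} {e : Finset V} {j : ℕ} (hj : j < e.card) : vtx v₀ e j ∈ e := by
  have hlen : (e.sort (· ≤ ·)).length = e.card := Finset.length_sort _
  have : vtx v₀ e j = (e.sort (· ≤ ·))[j]'(by omega) := List.getD_eq_getElem _ _ (by omega)
  rw [← Finset.mem_sort (α := V) (· ≤ ·), this]
  exact List.getElem_mem _

lemma vtx_lt {v₀ : V} {e : Finset V} {i j : ℕ} (hij : i < j) (hj : j < e.card) :
    vtx v₀ e i < vtx v₀ e j := by
  have hlen : (e.sort (· ≤ ·)).length = e.card := Finset.length_sort _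
  have hi : vtx v₀ e i = (e.sort (· ≤ ·))[i]'(by omega) := List.getD_eq_getElem _ _ (by omega)
  have hjj : vtx v₀ e j = (e.sort (· ≤ ·))[j]'(by omega) := List.getD_eq_getElem _ _ (by omega)
  rw [hi, hjj]
  exact (Finset.sortedLT_sort e).getElem_lt_getElem_iff.mpr hij

lemma eq_of_vtx_eq {v₀ : V} {e f : Finset V} {r : ℕ} (he : e.card = r) (hf : f.card = r)
    (hvall : ∀ j < r, vtx v₀ e j = vtx v₀ f j) : e = f := by
  have hle : (e.sort (· ≤ ·)).length = r := by rw [Finset.length_sort]; exact he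
  have hlf : (f.sort (· ≤ ·)).length = r := by rw [Finset.length_sort]; exact hf
  have : e.sort (· ≤ ·) = f.sort (· ≤ ·) := by
    apply List.ext_get (by omega)
    intro j h1 h2
    have h3 := hvall j (by omega)
    unfold vtx at h3
    rwa [List.getD_eq_getElem _ _ h1, List.getD_eq_getElem _ _ h2] at h3
  ext x
  rw [← Finset.mem_sort (α := V) (· ≤ ·), this, Finset.mem_sort]

/-- decoding positions from an equality of pairs -/
lemma vtx_pair_decode {v₀ : V} {e f : Finset V} {r i j : ℕ} (he : e.card = r) (hf : f.card = r)
    (hij : i < j) (hj : j < r)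
    (hp : ({vtx v₀ e i, vtx v₀ e j} : Finset V) = {vtx v₀ f i, vtx v₀ f j}) :
    vtx v₀ f i = vtx v₀ e i ∧ vtx v₀ f j = vtx v₀ e j := by
  have h1 : vtx v₀ f i ∈ ({vtx v₀ e i, vtx v₀ e j} : Finset V) := by
    rw [hp]; simp
  have h2 : vtx v₀ f j ∈ ({vtx v₀ e i, vtx v₀ e j} : Finset V) := by
    rw [hp]; simp
  simp only [Finset.mem_insert, Finset.mem_singleton] at h1 h2
  have hef : vtx v₀ e i < vtx v₀ e j := vtx_lt hij (he ▸ hj)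
  have hff : vtx v₀ f i < vtx v₀ f j := vtx_lt hij (hf ▸ hj)
  rcases h1 with h1 | h1
  · rcases h2 with h2 | h2
    · exfalso; rw [h1, h2] at hff; exact lt_irrefl _ hff
    · exact ⟨h1, h2⟩
  · rcases h2 with h2 | h2
    · exfalso; rw [h1, h2] at hff; exact lt_asymm hef hff
    · exfalso; rw [h1, h2] at hff; exact lt_irrefl _ hff

/-- In a hypergraph of girth `> ℓ`, any closed walk with distinct vertices of length
`≤ ℓ` must have all its hyperedges equal.  The walk is a path `u 0, …, u q` with
path edges `h 0, …, h (q-1)` together with a closing edge `c` containing `u 0, u q`. -/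
lemma walk_lemma {V : Type*} {H : Finset (Finset V)} {ℓ : ℕ} (hg : GirthGt H ℓ) :
    ∀ q : ℕ, 1 ≤ q → q + 1 ≤ ℓ →
    ∀ (u : ℕ → V) (h : ℕ → Finset V) (c : Finset V),
      (∀ i, i ≤ q → ∀ j, j ≤ q → u i = u j → i = j) →
      (∀ i, i < q → h i ∈ H) →
      (∀ i, i < q → u i ∈ h i ∧ u (i + 1) ∈ h i) →
      c ∈ H → u 0 ∈ c → u q ∈ c →
      ∀ i, i < q → h i = c := by
  intro q
  induction q using Nat.strong_induction_on with
  | _ q IH =>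
  intro hq hqℓ u h c hinj hmem hadj hcH hc0 hcq
  by_cases hic : ∃ a, a < q ∧ h a = c
  · -- a path edge equals the closing edge
    obtain ⟨a, haq, hac⟩ := hic
    have hL : ∀ i, i < a → h i = c := by
      rcases Nat.eq_zero_or_pos a with h0 | h1
      · omega
      · refine IH a haq h1 (by omega) u h c ?_ ?_ ?_ hcH hc0 ?_
        · exact fun i hi j hj => hinj i (by omega) j (by omega)
        · exact fun i hi => hmem i (by omega)
        · exact fun i hi => hadj i (by omega)
        · rw [← hac]; exact (hadj a haq).1
    have hR : ∀ i, a < i → i < q → h i = c := by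
      intro i hai hiq
      rcases Nat.lt_or_ge (a + 1) q with hR1 | hR1
      · have hqR : 1 ≤ q - (a + 1) := by omega
        have key := IH (q - (a + 1)) (by omega) hqR (by omega)
          (fun i => u (a + 1 + i)) (fun i => h (a + 1 + i)) c
          (fun i hi j hj huv => by
            have := hinj (a + 1 + i) (by omega) (a + 1 + j) (by omega) huv; omega)
          (fun i hi => hmem _ (by omega))
          (fun i hi => by
            show u (a + 1 + i) ∈ h (a + 1 + i) ∧ u (a + 1 + (i + 1)) ∈ h (a + 1 + i)
            have h3 : a + 1 + (i + 1) = (a + 1 + i) + 1 := by omega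
            rw [h3]; exact hadj (a + 1 + i) (by omega))
          hcH (by
            show u (a + 1 + 0) ∈ c
            have h1 : a + 1 + 0 = a + 1 := by omega
            rw [h1, ← hac]; exact (hadj a haq).2)
          (by
            show u (a + 1 + (q - (a + 1))) ∈ c
            have h1 : a + 1 + (q - (a + 1)) = q := by omega
            rw [h1]; exact hcq)
        have h2 : i = a + 1 + (i - (a + 1)) := by omega
        rw [h2]; exact key _ (by omega)
      · omega
    intro i hi
    rcases lt_trichotomy i a with h' | h' | h'
    · exact hL i h'
    · rw [h']; exact hac
    · exact hR i h' hi
  · by_cases hii : ∃ a b, a < b ∧ b < q ∧ h a = h b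
    · -- two path edges are equal
      obtain ⟨a, b, hab, hbq, habe⟩ := hii
      have haq : a < q := by omega
      -- the edge h a contains u a, u (a+1), u b, u (b+1)
      have hub : u b ∈ h a := by rw [habe]; exact (hadj b hbq).1
      have hub1 : u (b + 1) ∈ h a := by rw [habe]; exact (hadj b hbq).2
      -- inner walk : u (a+1) … u b closed by h a
      have hInner : ∀ i, a < i → i < b → h i = h a := by
        intro i hai hib
        have hqI : 1 ≤ b - (a + 1) := by omega
        have key := IH (b - (a + 1)) (by omega) hqI (by omega)
          (fun i => u (a + 1 + i)) (fun i => h (a + 1 + i)) (h a)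
          (fun i hi j hj huv => by
            have := hinj (a + 1 + i) (by omega) (a + 1 + j) (by omega) huv; omega)
          (fun i hi => hmem _ (by omega))
          (fun i hi => by
            show u (a + 1 + i) ∈ h (a + 1 + i) ∧ u (a + 1 + (i + 1)) ∈ h (a + 1 + i)
            have h3 : a + 1 + (i + 1) = (a + 1 + i) + 1 := by omega
            rw [h3]; exact hadj (a + 1 + i) (by omega))
          (hmem a haq)
          (by
            show u (a + 1 + 0) ∈ h a
            have h1 : a + 1 + 0 = a + 1 := by omega
            rw [h1]; exact (hadj a haq).2)
          (by
            show u (a + 1 + (b - (a + 1))) ∈ h a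
            have h1 : a + 1 + (b - (a + 1)) = b := by omega
            rw [h1]; exact hub)
        have h2 : i = a + 1 + (i - (a + 1)) := by omega
        rw [h2]; exact key _ (by omega)
      -- outer walk : u 0 … u a, u (b+1) … u q closed by c
      set d := b - a with hd
      set qO := q - d with hqO
      have haqO : a < qO := by omega
      have houter : ∀ i, i < qO →
          (if i < a then h i else if i = a then h a else h (i + d)) = c := by
        refine IH qO (by omega) (by omega) (by omega)
          (fun i => if i ≤ a then u i else u (i + d))
          (fun i => if i < a then h i else if i = a then h a else h (i + d)) c
          ?_ ?_ ?_ hcH ?_ ?_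
        · intro i hi j hj huv
          by_cases h1 : i ≤ a <;> by_cases h2 : j ≤ a <;>
            simp only [h1, h2, if_pos, if_neg, if_true, if_false] at huv
          · exact hinj i (by omega) j (by omega) huv
          · have := hinj i (by omega) (j + d) (by omega) huv; omega
          · have := hinj (i + d) (by omega) j (by omega) huv; omega
          · have := hinj (i + d) (by omega) (j + d) (by omega) huv; omega
        · intro i hi
          by_cases h1 : i < a
          · simp only [h1, if_true]; exact hmem i (by omega)
          · by_cases h2 : i = a
            · show (if i < a then h i else if i = a then h a else h (i + d)) ∈ H
              rw [if_neg h1, if_pos h2]; exact hmem a haq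
            · simp only [h1, h2, if_false]; exact hmem _ (by omega)
        · intro i hi
          by_cases h1 : i < a
          · simp only [h1, if_true, show i ≤ a by omega, show i + 1 ≤ a by omega]
            exact hadj i (by omega)
          · by_cases h2 : i = a
            · subst h2
              simp only [h1, if_false, if_true, le_refl, show ¬ (i + 1 ≤ i) by omega]
              refine ⟨(hadj i haq).1, ?_⟩
              have : i + 1 + d = b + 1 := by omega
              rw [this]; exact hub1
            · simp only [h1, h2, if_false, show ¬ (i ≤ a) by omega,
                show ¬ (i + 1 ≤ a) by omega]
              have h3 : i + 1 + d = (i + d) + 1 := by omega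
              rw [h3]
              exact hadj (i + d) (by omega)
        · simp only [show (0:ℕ) ≤ a by omega, if_true]; exact hc0
        · simp only [show ¬ (qO ≤ a) by omega, if_false, show qO + d = q by omega]
          exact hcq
      have hOa : h a = c := by
        have := houter a haqO
        simp only [lt_irrefl, if_false, if_true] at this
        exact this
      intro i hi
      rcases lt_trichotomy i a with h' | h' | h'
      · have := houter i (by omega)
        simp only [h', if_true] at this; exact this
      · rw [h']; exact hOa
      · rcases lt_trichotomy i b with h'' | h'' | h''
        · rw [hInner i h' h'']; exact hOa
        · rw [h'', habe] at *; rw [← habe]; exact hOa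
        · have := houter (i - d) (by omega)
          simp only [show ¬ (i - d < a) by omega, show ¬ (i - d = a) by omega,
            if_false, show i - d + d = i by omega] at this
          exact this
    · -- all edges distinct : Berge (q+1)-cycle, contradiction
      exfalso
      haveI : NeZero (q + 1) := ⟨Nat.succ_ne_zero q⟩
      haveI : Fact (1 < q + 1) := ⟨by omega⟩
      apply hg (q + 1) (by omega) hqℓ
      refine ⟨fun i => u i.val, fun i => if i.val < q then h i.val else c, ?_, ?_, ?_, ?_⟩
      · intro i j hij
        exact ZMod.val_injective (q+1)
          (hinj i.val (by have := ZMod.val_lt i; omega) j.val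
            (by have := ZMod.val_lt j; omega) hij)
      · intro i j hij
        have hiv := ZMod.val_lt i
        have hjv := ZMod.val_lt j
        by_cases h1 : i.val < q <;> by_cases h2 : j.val < q <;>
          simp only [h1, h2, if_true, if_false] at hij
        · rcases lt_trichotomy i.val j.val with h' | h' | h'
          · exact absurd ⟨i.val, j.val, h', h2, hij⟩ hii
          · exact ZMod.val_injective (q+1) h'
          · exact absurd ⟨j.val, i.val, h', h1, hij.symm⟩ hii
        · exact absurd ⟨i.val, h1, hij⟩ hic
        · exact absurd ⟨j.val, h2, hij.symm⟩ hic
        · exact ZMod.val_injective (q+1) (by omega)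
      · intro i
        by_cases h1 : i.val < q <;> simp only [h1, if_true, if_false]
        · exact hmem _ h1
        · exact hcH
      · intro i
        have hiv := ZMod.val_lt i
        have hval : (i + 1).val = (i.val + 1) % (q + 1) := by
          rw [ZMod.val_add, ZMod.val_one]
        by_cases h1 : i.val < q <;> simp only [h1, if_true, if_false]
        · have h2 : (i + 1).val = i.val + 1 := by
            rw [hval]; exact Nat.mod_eq_of_lt (by omega)
          rw [h2]
          exact hadj i.val h1
        · have h2 : i.val = q := by omega
          have h3 : (i + 1).val = 0 := by rw [hval, h2, Nat.mod_self]
          rw [h2, h3]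
          exact ⟨hcq, hc0⟩

section Aux

variable {V : Type*} [LinearOrder V] [DecidableEq V]

omit [LinearOrder V] [DecidableEq V] in
/-- In a hypergraph of girth `> ℓ` (with `2 ≤ ℓ`), two hyperedges sharing two distinct
vertices are equal ("linearity"). -/
lemma two_common {H : Finset (Finset V)} {ℓ : ℕ} (hg : GirthGt H ℓ) (hℓ : 2 ≤ ℓ)
    {e f : Finset V} (heH : e ∈ H) (hfH : f ∈ H) {x y : V} (hxy : x ≠ y)
    (hxe : x ∈ e) (hye : y ∈ e) (hxf : x ∈ f) (hyf : y ∈ f) : e = f := by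
  refine walk_lemma hg 1 le_rfl (by omega)
    (fun j => if j = 0 then x else y) (fun _ => e) f ?_ (fun _ _ => heH) ?_ hfH
    (by simp [hxf]) (by simp [hyf]) 0 Nat.one_pos
  · intro i hi j hj huv
    interval_cases i <;> interval_cases j <;> simp_all
  · intro i hi
    interval_cases i
    simp [hxe, hye]

/-- chord target positions (0-indexed): `min (1 + t (ℓ-2)) (r-1)`. -/
def chordPos (r ℓ t : ℕ) : ℕ := min (1 + t * (ℓ - 2)) (r - 1)

lemma chordPos_pos {r ℓ : ℕ} (hr : 3 ≤ r) (t : ℕ) : 1 ≤ chordPos r ℓ t := by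
  unfold chordPos; omega

lemma chordPos_le {r ℓ : ℕ} (t : ℕ) : chordPos r ℓ t ≤ r - 1 := min_le_right _ _

/-- the pair of vertices of `e` used for the `i`-th auxiliary graph. -/
def pairF (v₀ : V) (r ℓ i : ℕ) (e : Finset V) : Finset V :=
  if i < r - 1 then {vtx v₀ e i, vtx v₀ e (i + 1)}
  else {vtx v₀ e 0, vtx v₀ e (chordPos r ℓ (i - (r - 1) + 1))}

lemma pairF_subset {v₀ : V} {r ℓ i : ℕ} {e : Finset V} (he : e.card = r) (hr : 3 ≤ r) :
    pairF v₀ r ℓ i e ⊆ e := by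
  unfold pairF
  split
  · next hi =>
    rw [Finset.insert_subset_iff, Finset.singleton_subset_iff]
    exact ⟨vtx_mem (by omega), vtx_mem (by omega)⟩
  · next hi =>
    rw [Finset.insert_subset_iff, Finset.singleton_subset_iff]
    have h1 := chordPos_le (r := r) (ℓ := ℓ) (i - (r - 1) + 1)
    exact ⟨vtx_mem (by omega), vtx_mem (by omega)⟩

lemma pairF_card {v₀ : V} {r ℓ i : ℕ} {e : Finset V} (he : e.card = r) (hr : 3 ≤ r) :
    (pairF v₀ r ℓ i e).card = 2 := by
  unfold pairF
  split
  · next hi =>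
    exact Finset.card_pair (ne_of_lt (vtx_lt (Nat.lt_succ_self i) (by omega)))
  · next hi =>
    have h1 := chordPos_le (r := r) (ℓ := ℓ) (i - (r - 1) + 1)
    have h2 := chordPos_pos (ℓ := ℓ) hr (i - (r - 1) + 1)
    exact Finset.card_pair (ne_of_lt (vtx_lt (by omega) (by omega)))

lemma pairF_inj {H : Finset (Finset V)} {ℓ r : ℕ} (hg : GirthGt H ℓ) (hℓ : 3 ≤ ℓ)
    (hr : 3 ≤ r) (hunif : ∀ e ∈ H, e.card = r) {v₀ : V} {i : ℕ} {e f : Finset V}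
    (he : e ∈ H) (hf : f ∈ H) (hp : pairF v₀ r ℓ i e = pairF v₀ r ℓ i f) : e = f := by
  obtain ⟨x, y, hxy, hxy2⟩ := Finset.card_eq_two.mp (pairF_card (hunif e he) hr (v₀ := v₀) (ℓ := ℓ) (i := i))
  have hxp : x ∈ pairF v₀ r ℓ i e := by rw [hxy2]; simp
  have hyp : y ∈ pairF v₀ r ℓ i e := by rw [hxy2]; simp
  have hxp' : x ∈ pairF v₀ r ℓ i f := hp ▸ hxp
  have hyp' : y ∈ pairF v₀ r ℓ i f := hp ▸ hyp
  exact two_common hg (by omega) he hf hxy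
    (pairF_subset (hunif e he) hr hxp) (pairF_subset (hunif e he) hr hyp)
    (pairF_subset (hunif f hf) hr hxp') (pairF_subset (hunif f hf) hr hyp')

lemma girth_image {H : Finset (Finset V)} {ℓ r : ℕ} (hg : GirthGt H ℓ) (hℓ : 3 ≤ ℓ)
    (hr : 3 ≤ r) (hunif : ∀ e ∈ H, e.card = r) (v₀ : V) (i : ℕ) :
    GirthGt (H.image (pairF v₀ r ℓ i)) ℓ := by
  intro p hp hpl hcyc
  obtain ⟨v, E, hvinj, hEinj, hEH, hadj⟩ := hcyc
  have hex : ∀ j, ∃ x, x ∈ H ∧ pairF v₀ r ℓ i x = E j := by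
    intro j
    obtain ⟨x, hx, hxe⟩ := Finset.mem_image.mp (hEH j)
    exact ⟨x, hx, hxe⟩
  choose F hFH hFE using hex
  refine hg p hp hpl ⟨v, F, hvinj, ?_, fun j => hFH j, ?_⟩
  · intro a b hab
    exact hEinj (by rw [← hFE a, ← hFE b, hab])
  · intro j
    have hsub := pairF_subset (v₀ := v₀) (r := r) (ℓ := ℓ) (i := i) (hunif _ (hFH j)) hr
    constructor
    · exact hsub (by rw [hFE]; exact (hadj j).1)
    · exact hsub (by rw [hFE]; exact (hadj j).2)

end Aux

section Decode

variable {V : Type*} [LinearOrder V] [DecidableEq V]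

lemma decode (v₀ : V) {r ℓ lam : ℕ}
    (hr : 3 ≤ r) (hℓ : 3 ≤ ℓ) (hlam1 : 1 ≤ lam) (hlam2 : r - 2 ≤ lam * (ℓ - 2))
    {H H' : Finset (Finset V)}
    (hHr : ∀ e ∈ H, e.card = r) (hH'r : ∀ e ∈ H', e.card = r)
    (hgH' : GirthGt H' ℓ)
    (himg : ∀ i, i < r - 1 + lam →
      H.image (pairF v₀ r ℓ i) = H'.image (pairF v₀ r ℓ i)) :
    H ⊆ H' := by
  intro e he
  have hec : e.card = r := hHr e he
  -- witnesses for the consecutive pairs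
  have hcons : ∀ i, i < r - 1 → ∃ x, x ∈ H' ∧ pairF v₀ r ℓ i x = pairF v₀ r ℓ i e := by
    intro i hi
    have h1 : pairF v₀ r ℓ i e ∈ H'.image (pairF v₀ r ℓ i) := by
      rw [← himg i (by omega)]
      exact Finset.mem_image_of_mem _ he
    obtain ⟨x, hx, hxe⟩ := Finset.mem_image.mp h1
    exact ⟨x, hx, hxe⟩
  choose! f hfH hfp using hcons
  -- witnesses for the chord pairs
  have hch : ∀ t, 1 ≤ t → t ≤ lam → ∃ x, x ∈ H' ∧
      pairF v₀ r ℓ (r - 1 + (t - 1)) x = pairF v₀ r ℓ (r - 1 + (t - 1)) e := by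
    intro t h1 h2
    have h3 : pairF v₀ r ℓ (r - 1 + (t - 1)) e ∈ H'.image (pairF v₀ r ℓ (r - 1 + (t - 1))) := by
      rw [← himg (r - 1 + (t - 1)) (by omega)]
      exact Finset.mem_image_of_mem _ he
    obtain ⟨x, hx, hxe⟩ := Finset.mem_image.mp h3
    exact ⟨x, hx, hxe⟩
  choose! g hgmem hgp using hch
  -- position decoding for consecutive pairs
  have hfv : ∀ i, i < r - 1 →
      vtx v₀ (f i) i = vtx v₀ e i ∧ vtx v₀ (f i) (i + 1) = vtx v₀ e (i + 1) := by
    intro i hi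
    have hp := hfp i hi
    simp only [pairF, if_pos hi] at hp
    exact vtx_pair_decode hec (hH'r _ (hfH i hi)) (Nat.lt_succ_self i) (by omega) hp.symm
  -- position decoding for chord pairs
  have hgv : ∀ t, 1 ≤ t → t ≤ lam →
      vtx v₀ (g t) 0 = vtx v₀ e 0 ∧
      vtx v₀ (g t) (chordPos r ℓ t) = vtx v₀ e (chordPos r ℓ t) := by
    intro t h1 h2
    have hp := hgp t h1 h2
    have hidx : ¬ (r - 1 + (t - 1) < r - 1) := by omega
    have hidx2 : r - 1 + (t - 1) - (r - 1) + 1 = t := by omega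
    simp only [pairF, if_neg hidx, hidx2] at hp
    have hD1 := chordPos_pos (ℓ := ℓ) hr t
    have hD2 := chordPos_le (r := r) (ℓ := ℓ) t
    exact vtx_pair_decode hec (hH'r _ (hgmem t h1 h2)) (by omega) (by omega) hp.symm
  -- the chain of block hyperedges
  set G : ℕ → Finset V := fun t => if t = 0 then f 0 else g t with hG
  have hD0 : chordPos r ℓ 0 = 1 := by unfold chordPos; rw [Nat.zero_mul]; omega
  have hGmem : ∀ t, t ≤ lam → G t ∈ H' := by
    intro t ht
    by_cases h0 : t = 0
    · simp only [hG, h0, if_pos rfl]; exact hfH 0 (by omega)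
    · simp only [hG, if_neg h0]; exact hgmem t (by omega) ht
  have hGanchor : ∀ t, t ≤ lam → vtx v₀ (G t) 0 = vtx v₀ e 0 ∧
      vtx v₀ (G t) (chordPos r ℓ t) = vtx v₀ e (chordPos r ℓ t) := by
    intro t ht
    by_cases h0 : t = 0
    · subst h0
      simp only [hG, if_pos rfl, hD0]
      have h1 := hfv 0 (by omega)
      simpa using h1
    · simp only [hG, if_neg h0]; exact hgv t (by omega) ht
  -- main block step
  have hblock : ∀ t, 1 ≤ t → t ≤ lam →
      G t = G (t - 1) ∧
      ∀ i, chordPos r ℓ (t - 1) ≤ i → i < chordPos r ℓ t → f i = G t := by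
    intro t h1 h2
    have hA1 : 1 ≤ chordPos r ℓ (t - 1) := chordPos_pos hr _
    have hBle : chordPos r ℓ t ≤ r - 1 := chordPos_le _
    have hmul : t * (ℓ - 2) = (t - 1) * (ℓ - 2) + (ℓ - 2) := by
      have h3 : t - 1 + 1 = t := by omega
      calc t * (ℓ - 2) = (t - 1 + 1) * (ℓ - 2) := by rw [h3]
        _ = (t - 1) * (ℓ - 2) + (ℓ - 2) := by ring
    have hAB : chordPos r ℓ (t - 1) ≤ chordPos r ℓ t ∧
        chordPos r ℓ t - chordPos r ℓ (t - 1) ≤ ℓ - 2 := by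
      unfold chordPos; omega
    have hGa := hGanchor t h2
    have hGb := hGanchor (t - 1) (by omega)
    have hcardGt : (G t).card = r := hH'r _ (hGmem t h2)
    have hcardGb : (G (t - 1)).card = r := hH'r _ (hGmem (t - 1) (by omega))
    rcases Nat.eq_or_lt_of_le hAB.1 with hABeq | hABlt
    · -- degenerate block: the two chords share two vertices
      have hne : vtx v₀ e 0 ≠ vtx v₀ e (chordPos r ℓ t) :=
        ne_of_lt (vtx_lt (by omega) (by omega))
      have heq : G t = G (t - 1) := by
        refine two_common hgH' (by omega) (hGmem t h2) (hGmem (t - 1) (by omega)) hne ?_ ?_ ?_ ?_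
        · rw [← hGa.1]; exact vtx_mem (by rw [hcardGt]; omega)
        · rw [← hGa.2]; exact vtx_mem (by rw [hcardGt]; omega)
        · rw [← hGb.1]; exact vtx_mem (by rw [hcardGb]; omega)
        · rw [← hABeq, ← hGb.2]; exact vtx_mem (by rw [hcardGb]; omega)
      exact ⟨heq, fun i hi1 hi2 => by omega⟩
    · -- genuine block: use the walk lemma
      set A := chordPos r ℓ (t - 1) with hAdef
      set B := chordPos r ℓ t with hBdef
      set s := B - A with hsdef
      have hs1 : 1 ≤ s := by omega
      have hposlt : ∀ j, j ≤ s + 1 → (if j = 0 then 0 else A + j - 1) < r := by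
        intro j hj
        by_cases h0 : j = 0
        · rw [if_pos h0]; omega
        · rw [if_neg h0]; omega
      have hposmono : ∀ i j, i < j → j ≤ s + 1 →
          (if i = 0 then 0 else A + i - 1) < (if j = 0 then 0 else A + j - 1) := by
        intro i j hij hj
        by_cases h0 : i = 0
        · rw [if_pos h0, if_neg (by omega)]; omega
        · rw [if_neg h0, if_neg (by omega)]; omega
      have key := walk_lemma hgH' (s + 1) (by omega) (by omega)
        (fun j => vtx v₀ e (if j = 0 then 0 else A + j - 1))
        (fun j => if j = 0 then G (t - 1) else f (A + j - 1))
        (G t)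
        (by
          intro i hi j hj huv
          rcases lt_trichotomy i j with hlt | heq | hlt
          · exact absurd huv (ne_of_lt (vtx_lt (hposmono i j hlt hj) (by rw [hec]; exact hposlt j hj)))
          · exact heq
          · exact absurd huv.symm (ne_of_lt (vtx_lt (hposmono j i hlt hi) (by rw [hec]; exact hposlt i hi))))
        (by
          intro i hi
          cases i with
          | zero => exact hGmem (t - 1) (by omega)
          | succ i => exact hfH (A + (i + 1) - 1) (by omega))
        (by
          intro i hi
          cases i with
          | zero =>
            constructor
            · show vtx v₀ e 0 ∈ G (t - 1)
              rw [← hGb.1]; exact vtx_mem (by rw [hcardGb]; omega)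
            · show vtx v₀ e (A + 1 - 1) ∈ G (t - 1)
              rw [show A + 1 - 1 = A by omega, ← hGb.2]
              exact vtx_mem (by rw [hcardGb]; omega)
          | succ i =>
            have hm : A + (i + 1) - 1 < r - 1 := by omega
            have hfvm := hfv (A + (i + 1) - 1) hm
            have hcardf : (f (A + (i + 1) - 1)).card = r := hH'r _ (hfH _ hm)
            constructor
            · show vtx v₀ e (A + (i + 1) - 1) ∈ f (A + (i + 1) - 1)
              rw [← hfvm.1]; exact vtx_mem (by rw [hcardf]; omega)
            · show vtx v₀ e (A + (i + 1 + 1) - 1) ∈ f (A + (i + 1) - 1)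
              rw [show A + (i + 1 + 1) - 1 = (A + (i + 1) - 1) + 1 by omega, ← hfvm.2]
              exact vtx_mem (by rw [hcardf]; omega))
        (hGmem t h2)
        (by
          show vtx v₀ e 0 ∈ G t
          rw [← hGa.1]; exact vtx_mem (by rw [hcardGt]; omega))
        (by
          show vtx v₀ e (A + (s + 1) - 1) ∈ G t
          rw [show A + (s + 1) - 1 = B by omega, ← hGa.2]
          exact vtx_mem (by rw [hcardGt]; omega))
      constructor
      · exact (key 0 (by omega)).symm
      · intro i hi1 hi2
        have h3 : f (A + (i - A + 1) - 1) = G t := key (i - A + 1) (by omega)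
        rwa [show A + (i - A + 1) - 1 = i by omega] at h3
  -- chain the blocks together
  have hall : ∀ t, t ≤ lam → G t = f 0 ∧ ∀ i, i < chordPos r ℓ t → f i = f 0 := by
    intro t
    induction t with
    | zero =>
      intro _
      refine ⟨by simp [hG], ?_⟩
      intro i hi
      rw [hD0] at hi
      interval_cases i
      rfl
    | succ t IH =>
      intro ht
      have IH' := IH (by omega)
      have hb := hblock (t + 1) (by omega) ht
      have hG1 : G (t + 1) = f 0 := by
        rw [hb.1, show t + 1 - 1 = t from rfl]
        exact IH'.1
      refine ⟨hG1, ?_⟩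
      intro i hi
      by_cases hcase : i < chordPos r ℓ t
      · exact IH'.2 i hcase
      · have h4 := hb.2 i (by rw [show t + 1 - 1 = t from rfl]; omega) hi
        rw [h4]; exact hG1
  have hDlam : chordPos r ℓ lam = r - 1 := by unfold chordPos; omega
  have hfin := hall lam le_rfl
  have hfeq : ∀ i, i < r - 1 → f i = f 0 := by
    intro i hi
    exact hfin.2 i (by rw [hDlam]; exact hi)
  have hvall : ∀ j, j < r → vtx v₀ (f 0) j = vtx v₀ e j := by
    intro j hj
    rcases Nat.lt_or_ge j (r - 1) with h1 | h1
    · rw [← hfeq j h1]; exact (hfv j h1).1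
    · have hj' : j = r - 1 := by omega
      have h2 : r - 2 < r - 1 := by omega
      rw [hj', ← hfeq (r - 2) h2]
      have h3 := (hfv (r - 2) h2).2
      rwa [show r - 2 + 1 = r - 1 by omega] at h3
  have hfe : f 0 = e := eq_of_vtx_eq (hH'r _ (hfH 0 (by omega))) hec hvall
  rw [← hfe]
  exact hfH 0 (by omega)

end Decode

/-- `N_m^r(n, ℓ)`: the number of `r`-uniform hypergraphs on `[n]` with exactly `m`
hyperedges and girth greater than `ℓ`. -/
noncomputable def Ngirth (r n m ℓ : ℕ) : ℕ :=
  {H : Finset (Finset (Fin n)) | (∀ e ∈ H, e.card = r) ∧ H.card = m ∧ GirthGt H ℓ}.ncard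

theorem stmt4 (ℓ r m n : ℕ) (hℓ : 3 ≤ ℓ) (hr : 3 ≤ r) (hm : 1 ≤ m) (hn : 1 ≤ n) :
    Ngirth r n m ℓ ≤ Ngirth 2 n m ℓ ^ (r - 1 + ⌈((r : ℚ) - 2) / ((ℓ : ℚ) - 2)⌉₊) := by
  set lam := ⌈((r : ℚ) - 2) / ((ℓ : ℚ) - 2)⌉₊ with hlamdef
  have hl2 : (0 : ℚ) < (ℓ : ℚ) - 2 := by
    have : (3 : ℚ) ≤ (ℓ : ℚ) := by exact_mod_cast hℓ
    linarith
  have hr2 : (0 : ℚ) < (r : ℚ) - 2 := by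
    have : (3 : ℚ) ≤ (r : ℚ) := by exact_mod_cast hr
    linarith
  have hlam1 : 1 ≤ lam := Nat.ceil_pos.mpr (div_pos hr2 hl2)
  have hlam2 : r - 2 ≤ lam * (ℓ - 2) := by
    have h1 : ((r : ℚ) - 2) / ((ℓ : ℚ) - 2) ≤ (lam : ℚ) := Nat.le_ceil _
    have h2 : (r : ℚ) - 2 ≤ (lam : ℚ) * ((ℓ : ℚ) - 2) := by
      rw [div_le_iff₀ hl2] at h1; linarith
    have h3 : ((r - 2 : ℕ) : ℚ) ≤ ((lam * (ℓ - 2) : ℕ) : ℚ) := by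
      rw [Nat.cast_mul, Nat.cast_sub (by omega : 2 ≤ r), Nat.cast_sub (by omega : 2 ≤ ℓ)]
      push_cast
      linarith
    exact_mod_cast h3
  set k := r - 1 + lam with hkdef
  set v₀ : Fin n := ⟨0, hn⟩ with hv₀
  set X : Set (Finset (Finset (Fin n))) :=
    {H | (∀ e ∈ H, e.card = r) ∧ H.card = m ∧ GirthGt H ℓ} with hX
  set Y : Set (Finset (Finset (Fin n))) :=
    {H | (∀ e ∈ H, e.card = 2) ∧ H.card = m ∧ GirthGt H ℓ} with hY
  show X.ncard ≤ Y.ncard ^ k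
  rw [← Nat.card_coe_set_eq, ← Nat.card_coe_set_eq]
  -- the encoding map
  have hmemY : ∀ H : ↥X, ∀ i : Fin k, (H : Finset (Finset (Fin n))).image (pairF v₀ r ℓ i) ∈ Y := by
    rintro ⟨H, hHu, hHc, hHg⟩ i
    refine ⟨?_, ?_, ?_⟩
    · intro s hs
      obtain ⟨x, hx, hxe⟩ := Finset.mem_image.mp hs
      rw [← hxe]
      exact pairF_card (hHu x hx) hr
    · rw [Finset.card_image_of_injOn, hHc]
      intro a ha b hb hab
      exact pairF_inj hHg hℓ hr hHu ha hb hab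
    · exact girth_image hHg hℓ hr hHu v₀ i
  set F : ↥X → (Fin k → ↥Y) := fun H i => ⟨(H : Finset (Finset (Fin n))).image (pairF v₀ r ℓ i), hmemY H i⟩ with hF
  have hFinj : Function.Injective F := by
    rintro ⟨H1, hH1⟩ ⟨H2, hH2⟩ hFeq
    have himg : ∀ i, i < k →
        H1.image (pairF v₀ r ℓ i) = H2.image (pairF v₀ r ℓ i) := by
      intro i hi
      exact congrArg Subtype.val (congrFun hFeq ⟨i, hi⟩)
    have himg' : ∀ i, i < k →
        H2.image (pairF v₀ r ℓ i) = H1.image (pairF v₀ r ℓ i) :=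
      fun i hi => (himg i hi).symm
    apply Subtype.ext
    exact Finset.Subset.antisymm
      (decode v₀ hr hℓ hlam1 hlam2 hH1.1 hH2.1 hH2.2.2 himg)
      (decode v₀ hr hℓ hlam1 hlam2 hH2.1 hH1.1 hH1.2.2 himg')
  calc Nat.card ↥X ≤ Nat.card (Fin k → ↥Y) := Nat.card_le_card_of_injective F hFinj
    _ = Nat.card ↥Y ^ k := by
        rw [Nat.card_fun, Nat.card_eq_fintype_card (α := Fin k), Fintype.card_fin]
end Vtx
end

section
/- Let 3 ≤ ℓ ≤ r, and let H be an r-uniform hypergraph containing no Berge ℓ-cycle. Then H contains no core set. -/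
/-- `S` is a core set of `H`: there are pairwise distinct hyperedges `e v` (indexed by the
vertices `v` of `S`) with `S \ {v} ⊆ e v` for each `v ∈ S`. -/
def IsCoreSet {V : Type*} [DecidableEq V] (H : Finset (Finset V)) (S : Finset V) : Prop :=
  ∃ e : {x // x ∈ S} → Finset V, Function.Injective e ∧
    ∀ v : {x // x ∈ S}, e v ∈ H ∧ S \ {v.1} ⊆ e v

theorem stmt6 {V : Type*} [DecidableEq V] (H : Finset (Finset V)) (ℓ r : ℕ)
    (hℓ : 3 ≤ ℓ) (hℓr : ℓ ≤ r) (hu : ∀ e ∈ H, e.card = r)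
    (hfree : ¬ IsBergeCycle H ℓ) :
    ∀ S : Finset V, S.card = r → ¬ IsCoreSet H S := by
  intro S hS ⟨e, einj, he⟩
  haveI : NeZero ℓ := ⟨by omega⟩
  apply hfree
  -- embedding ZMod ℓ ↪ S
  have hcard : Fintype.card (ZMod ℓ) ≤ Fintype.card {x // x ∈ S} := by
    rw [ZMod.card, Fintype.card_coe, hS]; exact hℓr
  obtain ⟨g⟩ := Function.Embedding.nonempty_of_card_le hcard
  have hne : ∀ i j : ZMod ℓ, i ≠ j → (g i).1 ≠ (g j).1 := by
    intro i j hij h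
    exact hij (g.injective (Subtype.ext h))
  have h2 : (2 : ZMod ℓ) ≠ 0 := by
    have : ((2 : ℕ) : ZMod ℓ) ≠ 0 := by
      rw [Ne, ZMod.natCast_eq_zero_iff]
      intro h; have := Nat.le_of_dvd (by norm_num) h; omega
    simpa using this
  have h1 : (1 : ZMod ℓ) ≠ 0 := by
    have : ((1 : ℕ) : ZMod ℓ) ≠ 0 := by
      rw [Ne, ZMod.natCast_eq_zero_iff]
      intro h; have := Nat.le_of_dvd (by norm_num) h; omega
    simpa using this
  refine ⟨fun i => (g i).1, fun i => e (g (i + 2)), ?_, ?_, ?_, ?_⟩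
  · intro i j h
    exact g.injective (Subtype.ext h)
  · intro i j h
    have := g.injective (einj h)
    exact add_right_cancel this
  · intro i; exact (he (g (i + 2))).1
  · intro i
    constructor
    · apply (he (g (i + 2))).2
      rw [Finset.mem_sdiff]
      refine ⟨(g i).2, ?_⟩
      simp only [Finset.mem_singleton]
      apply hne
      intro h
      apply h2
      have : i + 2 - i = i - i := by rw [← h]
      simpa using this
    · apply (he (g (i + 2))).2
      rw [Finset.mem_sdiff]
      refine ⟨(g (i+1)).2, ?_⟩
      simp only [Finset.mem_singleton]
      apply hne
      intro h
      apply h1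
      have : i + 2 - (i + 1) = (i + 1) - (i + 1) := by rw [← h]
      have h2' : i + 2 - (i + 1) = 1 := by ring
      rw [h2'] at this
      simpa using this
end

section
/- Let ℓ, r ≥ 3 and let H be an r-uniform hypergraph with m hyperedges containing no Berge ℓ-cycle. Then the number of core sets of H is at most ℓ²r²m. -/
open Finset

section Aux

variable {V : Type*} [DecidableEq V]

open Classical in
/-- A fixed choice of witness edge for a core set. -/
noncomputable def witE (H : Finset (Finset V)) (S : Finset V) (x : V) : Finset V :=
  if h : IsCoreSet H S ∧ x ∈ S then h.1.choose ⟨x, h.2⟩ else ∅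

lemma witE_mem {H : Finset (Finset V)} {S : Finset V} {x : V}
    (hS : IsCoreSet H S) (hx : x ∈ S) : witE H S x ∈ H := by
  unfold witE
  rw [dif_pos (⟨hS, hx⟩ : IsCoreSet H S ∧ x ∈ S)]
  exact (hS.choose_spec.2 ⟨x, hx⟩).1

lemma witE_cov {H : Finset (Finset V)} {S : Finset V} {x : V}
    (hS : IsCoreSet H S) (hx : x ∈ S) : S \ {x} ⊆ witE H S x := by
  unfold witE
  rw [dif_pos (⟨hS, hx⟩ : IsCoreSet H S ∧ x ∈ S)]
  exact (hS.choose_spec.2 ⟨x, hx⟩).2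

lemma witE_ne {H : Finset (Finset V)} {S : Finset V} {x y : V}
    (hS : IsCoreSet H S) (hx : x ∈ S) (hy : y ∈ S) (hne : x ≠ y) :
    witE H S x ≠ witE H S y := by
  unfold witE
  rw [dif_pos (⟨hS, hx⟩ : IsCoreSet H S ∧ x ∈ S),
    dif_pos (⟨hS, hy⟩ : IsCoreSet H S ∧ y ∈ S)]
  intro hcon
  exact hne (congrArg Subtype.val (hS.choose_spec.1 hcon))

/-- The `k`-th core along the chain. -/
def CkF (b : V) (W : Finset V) (ts : ℕ → V) (k : ℕ) : Finset V :=
  if k = 0 then insert b (insert (ts 0) W) else insert (ts (k-1)) (insert (ts k) W)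

/-- The `l`-th edge along the chain. -/
noncomputable def EdF (H : Finset (Finset V)) (b w : V) (W : Finset V) (ts : ℕ → V)
    (l : ℕ) : Finset V :=
  if l = 0 then witE H (CkF b W ts 0) b else witE H (CkF b W ts l) w

lemma CkF_congr {b : V} {W : Finset V} {ts ts' : ℕ → V} {k : ℕ}
    (h : ∀ i ≤ k, ts i = ts' i) : CkF b W ts k = CkF b W ts' k := by
  unfold CkF
  split_ifs with h0
  · rw [h 0 (Nat.zero_le _)]
  · rw [h (k-1) (Nat.sub_le _ _), h k le_rfl]

lemma EdF_congr {H : Finset (Finset V)} {b w : V} {W : Finset V} {ts ts' : ℕ → V} {l : ℕ}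
    (h : ∀ i ≤ l, ts i = ts' i) : EdF H b w W ts l = EdF H b w W ts' l := by
  unfold EdF
  split_ifs with h0
  · rw [CkF_congr (fun i hi => h i (le_trans hi (Nat.zero_le _)))]
  · rw [CkF_congr (fun i hi => h i hi)]

lemma pick_ext {r K : ℕ} {X : Finset (Finset V)}
    (hX : ∀ S ∈ X, S.card = r) (T : Finset V) (hT : T.card + 1 = r)
    (F : Finset V) (hF : F.card ≤ K)
    (hbig : K < (X.filter (fun S' => T ⊆ S')).card) :
    ∃ t', t' ∉ F ∧ t' ∉ T ∧ insert t' T ∈ X := by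
  classical
  have hinj : Set.InjOn (fun S' => S' \ T) (X.filter (fun S' => T ⊆ S')) := by
    intro S1 h1 S2 h2 hEq
    have hT1 : T ⊆ S1 := (mem_filter.mp (Finset.mem_coe.mp h1)).2
    have hT2 : T ⊆ S2 := (mem_filter.mp (Finset.mem_coe.mp h2)).2
    have hEq' : S1 \ T = S2 \ T := hEq
    calc S1 = T ∪ S1 \ T := (Finset.union_sdiff_of_subset hT1).symm
    _ = T ∪ S2 \ T := by rw [hEq']
    _ = S2 := Finset.union_sdiff_of_subset hT2
  have hcard : (F.image (fun t => ({t} : Finset V))).card <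
      ((X.filter (fun S' => T ⊆ S')).image (fun S' => S' \ T)).card := by
    rw [Finset.card_image_of_injOn hinj]
    exact lt_of_le_of_lt (le_trans Finset.card_image_le hF) hbig
  have hex : ∃ E ∈ (X.filter (fun S' => T ⊆ S')).image (fun S' => S' \ T),
      E ∉ F.image (fun t => ({t} : Finset V)) := by
    by_contra hcon
    push_neg at hcon
    exact absurd (Finset.card_le_card hcon) (not_le.mpr hcard)
  obtain ⟨E, hEmem, hEnot⟩ := hex
  obtain ⟨S', hS'mem, hSE⟩ := Finset.mem_image.mp hEmem
  have hTS : T ⊆ S' := (mem_filter.mp hS'mem).2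
  have hS'X : S' ∈ X := (mem_filter.mp hS'mem).1
  have hc1 : (S' \ T).card = 1 := by
    rw [Finset.card_sdiff_of_subset hTS, hX S' hS'X]
    omega
  obtain ⟨t', ht'⟩ := Finset.card_eq_one.mp hc1
  have ht'mem : t' ∈ S' \ T := ht' ▸ Finset.mem_singleton_self t'
  refine ⟨t', ?_, (Finset.mem_sdiff.mp ht'mem).2, ?_⟩
  · intro hmem
    exact hEnot (Finset.mem_image.mpr ⟨t', hmem, by rw [← hSE, ht']⟩)
  · have : insert t' T = S' := by
      rw [Finset.insert_eq, Finset.union_comm, ← ht']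
      exact Finset.union_sdiff_of_subset hTS
    rw [this]
    exact hS'X

end Aux

section Main

variable {V : Type*} [DecidableEq V]

lemma buildCycle {H : Finset (Finset V)} {ℓ r : ℕ}
    (hl : 3 ≤ ℓ) (hr : 3 ≤ r) (hu : ∀ e ∈ H, e.card = r)
    (X : Finset (Finset V)) (hX : ∀ S ∈ X, S.card = r ∧ IsCoreSet H S)
    (hne : X.Nonempty)
    (hext : ∀ S ∈ X, ∀ t ∈ S, 3*ℓ*r < (X.filter (fun S' => S \ {t} ⊆ S')).card) :
    IsBergeCycle H ℓ := by
  classical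
  obtain ⟨S₀, hS₀⟩ := hne
  have hS₀r : S₀.card = r := (hX S₀ hS₀).1
  obtain ⟨a, ha⟩ : S₀.Nonempty := Finset.card_pos.mp (by omega)
  obtain ⟨b, hb⟩ : (S₀.erase a).Nonempty :=
    Finset.card_pos.mp (by rw [Finset.card_erase_of_mem ha]; omega)
  set W : Finset V := (S₀.erase a).erase b with hWdef
  obtain ⟨w, hw⟩ : W.Nonempty := by
    apply Finset.card_pos.mp
    rw [hWdef, Finset.card_erase_of_mem hb, Finset.card_erase_of_mem ha, hS₀r]
    omega
  have hbS₀ : b ∈ S₀ := Finset.mem_of_mem_erase hb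
  have hWsub : W ⊆ S₀ := fun x hx => Finset.mem_of_mem_erase (Finset.mem_of_mem_erase hx)
  have hwS₀ : w ∈ S₀ := hWsub hw
  have hbW : b ∉ W := Finset.notMem_erase _ _
  have hwb : w ≠ b := (Finset.mem_erase.mp hw).1
  have hWcard : W.card = r - 2 := by
    rw [hWdef, Finset.card_erase_of_mem hb, Finset.card_erase_of_mem ha, hS₀r]
    omega
  have hbIns : insert b W = S₀.erase a := Finset.insert_erase hb
  -- the chain of cores
  have chain : ∀ j : ℕ, 1 ≤ j → j ≤ ℓ - 1 → ∃ ts : ℕ → V,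
      (∀ k < j, CkF b W ts k ∈ X) ∧
      (∀ k < j, ts k ∉ S₀) ∧
      (∀ k < j, ∀ l < k, ts k ≠ ts l) ∧
      (∀ k < j, ∀ l < k, ts k ∉ EdF H b w W ts l) := by
    intro j
    induction j with
    | zero => omega
    | succ j ih =>
      intro _ hjl
      by_cases hj0 : j = 0
      · subst hj0
        have hbig := hext S₀ hS₀ a ha
        have hTeq : S₀ \ {a} = insert b W := by
          rw [← Finset.erase_eq, ← hbIns]
        rw [hTeq] at hbig
        have hTcard : (insert b W).card + 1 = r := by
          rw [Finset.card_insert_of_notMem hbW, hWcard]; omega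
        have hS₀le : S₀.card ≤ 3*ℓ*r := by
          rw [hS₀r, mul_assoc]
          calc r ≤ ℓ * r := Nat.le_mul_of_pos_left r (by omega)
          _ ≤ 3 * (ℓ * r) := Nat.le_mul_of_pos_left (ℓ * r) (by omega)
        obtain ⟨t', ht'F, ht'T, ht'X⟩ :=
          pick_ext (fun S hS => (hX S hS).1) (insert b W) hTcard S₀ hS₀le hbig
        refine ⟨fun _ => t', ?_, ?_, ?_, ?_⟩
        · intro k hk
          have hk0 : k = 0 := by omega
          subst hk0
          have hCeq : CkF b W (fun _ => t') 0 = insert t' (insert b W) := by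
            unfold CkF
            rw [if_pos rfl, Finset.insert_comm]
          rw [hCeq]
          exact ht'X
        · intro k _; exact ht'F
        · intro k hk l hl
          exact absurd hl (by omega)
        · intro k hk l hl
          exact absurd hl (by omega)
      · have hj1 : 1 ≤ j := by omega
        obtain ⟨ts, h1, h2, h3, h4⟩ := ih hj1 (by omega)
        have hSX : CkF b W ts (j-1) ∈ X := h1 _ (by omega)
        have htsW : ∀ k < j, ts k ∉ W := fun k hk hmem => h2 k hk (hWsub hmem)
        -- hub identity
        have hhub : ∃ p ∈ CkF b W ts (j-1), CkF b W ts (j-1) \ {p} = insert (ts (j-1)) W := by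
          by_cases hj1' : j = 1
          · subst hj1'
            refine ⟨b, ?_, ?_⟩
            · unfold CkF; rw [if_pos rfl]; exact Finset.mem_insert_self _ _
            · unfold CkF; rw [if_pos rfl, ← Finset.erase_eq]
              apply Finset.erase_insert
              intro hmem
              rcases Finset.mem_insert.mp hmem with h' | h'
              · exact h2 0 (by omega) (h' ▸ hbS₀)
              · exact hbW h'
          · have hj2 : 2 ≤ j := by omega
            refine ⟨ts (j-2), ?_, ?_⟩
            · unfold CkF; rw [if_neg (by omega : ¬ (j - 1 = 0))]
              have he : j - 1 - 1 = j - 2 := by omega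
              rw [he]
              exact Finset.mem_insert_self _ _
            · unfold CkF; rw [if_neg (by omega : ¬ (j - 1 = 0)), ← Finset.erase_eq]
              have he : j - 1 - 1 = j - 2 := by omega
              rw [he]
              apply Finset.erase_insert
              intro hmem
              rcases Finset.mem_insert.mp hmem with h' | h'
              · exact (h3 (j-1) (by omega) (j-2) (by omega)) h'.symm
              · exact htsW (j-2) (by omega) h'
        obtain ⟨p, hpC, hpEq⟩ := hhub
        have hbig := hext _ hSX p hpC
        rw [hpEq] at hbig
        have hTcard : (insert (ts (j-1)) W).card + 1 = r := by
          rw [Finset.card_insert_of_notMem (htsW (j-1) (by omega)), hWcard]; omega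
        -- forbidden set
        set F : Finset V := S₀ ∪ (Finset.range j).image ts ∪
          (Finset.range j).biUnion (fun l => EdF H b w W ts l) with hFdef
        have hEH : ∀ l, l < j → EdF H b w W ts l ∈ H := by
          intro l hl
          unfold EdF
          split_ifs with h0
          · apply witE_mem (hX _ (h1 0 (by omega))).2
            unfold CkF; rw [if_pos rfl]; exact Finset.mem_insert_self _ _
          · apply witE_mem (hX _ (h1 l hl)).2
            unfold CkF; rw [if_neg h0]
            exact Finset.mem_insert_of_mem (Finset.mem_insert_of_mem hw)
        have hFcard : F.card ≤ 3*ℓ*r := by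
          have c1 : ((Finset.range j).image ts).card ≤ j := by
            apply le_trans Finset.card_image_le
            rw [Finset.card_range]
          have c2 : ((Finset.range j).biUnion (fun l => EdF H b w W ts l)).card ≤ j * r := by
            refine le_trans Finset.card_biUnion_le (le_of_eq ?_)
            have hcong : ∀ l ∈ Finset.range j, (EdF H b w W ts l).card = r := by
              intro l hl
              exact hu _ (hEH l (Finset.mem_range.mp hl))
            calc ∑ l ∈ Finset.range j, (EdF H b w W ts l).card
                = ∑ _l ∈ Finset.range j, r := Finset.sum_congr rfl hcong
              _ = j * r := by rw [Finset.sum_const, Finset.card_range, smul_eq_mul]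
          have c3 : F.card ≤ S₀.card + ((Finset.range j).image ts).card +
              ((Finset.range j).biUnion (fun l => EdF H b w W ts l)).card := by
            rw [hFdef]
            exact le_trans (Finset.card_union_le _ _)
              (Nat.add_le_add_right (Finset.card_union_le _ _) _)
          have e1 : j * r ≤ ℓ * r := Nat.mul_le_mul_right r (by omega)
          have e2 : r ≤ ℓ * r := Nat.le_mul_of_pos_left r (by omega)
          have e3 : j ≤ ℓ * r := le_trans (by omega : j ≤ ℓ)
            (Nat.le_mul_of_pos_right ℓ (by omega))
          rw [mul_assoc]
          obtain ⟨A, hA⟩ : ∃ A, ℓ * r = A := ⟨_, rfl⟩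
          obtain ⟨B, hB⟩ : ∃ B, j * r = B := ⟨_, rfl⟩
          rw [hA] at e1 e2 e3 ⊢
          rw [hB] at e1 c2
          omega
        obtain ⟨t', ht'F, ht'T, ht'X⟩ :=
          pick_ext (fun S hS => (hX S hS).1) _ hTcard F hFcard hbig
        have hagree : ∀ i, i < j → Function.update ts j t' i = ts i :=
          fun i hi => Function.update_of_ne (by omega) _ _
        have hCk : ∀ k, k < j → CkF b W (Function.update ts j t') k = CkF b W ts k := by
          intro k hk
          exact (CkF_congr (fun i hi => (hagree i (by omega)).symm)).symm
        have hEd : ∀ l, l < j → EdF H b w W (Function.update ts j t') l = EdF H b w W ts l := by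
          intro l hl
          exact (EdF_congr (fun i hi => (hagree i (by omega)).symm)).symm
        have hupj : Function.update ts j t' j = t' := Function.update_self _ _ _
        refine ⟨Function.update ts j t', ?_, ?_, ?_, ?_⟩
        · intro k hk
          rcases Nat.lt_or_ge k j with hkj | hkj
          · rw [hCk k hkj]; exact h1 k hkj
          · obtain rfl : k = j := by omega
            have hCeq : CkF b W (Function.update ts k t') k
                = insert t' (insert (ts (k-1)) W) := by
              unfold CkF
              rw [if_neg (by omega : ¬ (k = 0)), hupj,
                Function.update_of_ne (by omega : k - 1 ≠ k), Finset.insert_comm]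
            rw [hCeq]
            exact ht'X
        · intro k hk
          rcases Nat.lt_or_ge k j with hkj | hkj
          · rw [hagree k hkj]; exact h2 k hkj
          · obtain rfl : k = j := by omega
            rw [hupj]
            intro hmem
            exact ht'F (by
              rw [hFdef]
              exact Finset.mem_union_left _ (Finset.mem_union_left _ hmem))
        · intro k hk l hl
          rcases Nat.lt_or_ge k j with hkj | hkj
          · rw [hagree k hkj, hagree l (by omega)]; exact h3 k hkj l hl
          · obtain rfl : k = j := by omega
            rw [hupj, hagree l (by omega)]
            intro heq
            apply ht'F
            rw [hFdef]
            exact Finset.mem_union_left _ (Finset.mem_union_right _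
              (Finset.mem_image.mpr ⟨l, Finset.mem_range.mpr (by omega), heq.symm⟩))
        · intro k hk l hl
          rcases Nat.lt_or_ge k j with hkj | hkj
          · rw [hagree k hkj, hEd l (by omega)]; exact h4 k hkj l hl
          · obtain rfl : k = j := by omega
            rw [hupj, hEd l (by omega)]
            intro hmem
            apply ht'F
            rw [hFdef]
            exact Finset.mem_union_right _
              (Finset.mem_biUnion.mpr ⟨l, Finset.mem_range.mpr (by omega), hmem⟩)
  -- use the chain of length ℓ - 1
  obtain ⟨ts, h1, h2, h3, h4⟩ := chain (ℓ - 1) (by omega) le_rfl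
  set n := ℓ - 1 with hn
  have hn2 : 2 ≤ n := by omega
  have hnl : n < ℓ := by omega
  haveI : NeZero ℓ := ⟨by omega⟩
  set D : Finset V := witE H (CkF b W ts (n-1)) (ts (n-2)) with hDdef
  have hCcore : ∀ k, k < n → IsCoreSet H (CkF b W ts k) := fun k hk => (hX _ (h1 k hk)).2
  have htsW : ∀ k, k < n → ts k ∉ W := fun k hk hmem => h2 k hk (hWsub hmem)
  have htsw : ∀ k, k < n → ts k ≠ w := fun k hk h' => h2 k hk (h' ▸ hwS₀)
  have htsb : ∀ k, k < n → ts k ≠ b := fun k hk h' => h2 k hk (h' ▸ hbS₀)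
  have hwC : ∀ k, k < n → w ∈ CkF b W ts k := by
    intro k hk
    unfold CkF
    split_ifs <;> exact Finset.mem_insert_of_mem (Finset.mem_insert_of_mem hw)
  have hbC0 : b ∈ CkF b W ts 0 := by
    unfold CkF; rw [if_pos rfl]; exact Finset.mem_insert_self _ _
  have hts0C0 : ts 0 ∈ CkF b W ts 0 := by
    unfold CkF; rw [if_pos rfl]
    exact Finset.mem_insert_of_mem (Finset.mem_insert_self _ _)
  have htskCk : ∀ k, 1 ≤ k → ts k ∈ CkF b W ts k ∧ ts (k-1) ∈ CkF b W ts k := by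
    intro k hk1
    unfold CkF
    rw [if_neg (by omega : ¬ (k = 0))]
    exact ⟨Finset.mem_insert_of_mem (Finset.mem_insert_self _ _),
      Finset.mem_insert_self _ _⟩
  -- coverage
  have hcov0 : ∀ x ∈ CkF b W ts 0, x ≠ b → x ∈ EdF H b w W ts 0 := by
    intro x hx hxb
    have hc := witE_cov (hCcore 0 (by omega)) hbC0
    have hx' : x ∈ CkF b W ts 0 \ {b} := Finset.mem_sdiff.mpr ⟨hx, by simp [hxb]⟩
    have := hc hx'
    unfold EdF
    rw [if_pos rfl]
    exact this
  have hcovl : ∀ l, 1 ≤ l → l < n → ∀ x ∈ CkF b W ts l, x ≠ w → x ∈ EdF H b w W ts l := by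
    intro l hl1 hln x hx hxw
    have hc := witE_cov (hCcore l hln) (hwC l hln)
    have hx' : x ∈ CkF b W ts l \ {w} := Finset.mem_sdiff.mpr ⟨hx, by simp [hxw]⟩
    have := hc hx'
    unfold EdF
    rw [if_neg (by omega : ¬ (l = 0))]
    exact this
  have he12 : n - 1 - 1 = n - 2 := by omega
  have htsn2mem : ts (n-2) ∈ CkF b W ts (n-1) := by
    have := (htskCk (n-1) (by omega)).2
    rwa [he12] at this
  have hcovD : ∀ x ∈ CkF b W ts (n-1), x ≠ ts (n-2) → x ∈ D := by
    intro x hx hxne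
    have hc := witE_cov (hCcore (n-1) (by omega)) htsn2mem
    exact hc (Finset.mem_sdiff.mpr ⟨hx, by simp [hxne]⟩)
  have hEHn : ∀ l, l < n → EdF H b w W ts l ∈ H := by
    intro l hl
    unfold EdF
    split_ifs with h0
    · exact witE_mem (hCcore 0 (by omega)) hbC0
    · exact witE_mem (hCcore l hl) (hwC l hl)
  have hDH : D ∈ H := witE_mem (hCcore (n-1) (by omega)) htsn2mem
  -- membership facts for the cycle
  have hwE0 : w ∈ EdF H b w W ts 0 := hcov0 w (hwC 0 (by omega)) hwb
  have hts0E0 : ts 0 ∈ EdF H b w W ts 0 := hcov0 (ts 0) hts0C0 (htsb 0 (by omega))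
  have htslEl : ∀ l, 1 ≤ l → l < n →
      ts l ∈ EdF H b w W ts l ∧ ts (l-1) ∈ EdF H b w W ts l := by
    intro l hl1 hln
    constructor
    · exact hcovl l hl1 hln _ (htskCk l hl1).1 (htsw l hln)
    · exact hcovl l hl1 hln _ (htskCk l hl1).2 (htsw (l-1) (by omega))
  have hwD : w ∈ D :=
    hcovD w (hwC (n-1) (by omega)) (fun h' => (htsw (n-2) (by omega)) h'.symm)
  have htsn1D : ts (n-1) ∈ D := by
    apply hcovD _ (htskCk (n-1) (by omega)).1
    intro heq
    exact (h3 (n-1) (by omega) (n-2) (by omega)) heq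
  -- val arithmetic helpers
  have h1val : (1 : ZMod ℓ).val = 1 := by
    rw [← Nat.cast_one, ZMod.val_natCast_of_lt (by omega)]
  have hvadd : ∀ i : ZMod ℓ, (i + 1).val = (i.val + 1) % ℓ := by
    intro i
    rw [ZMod.val_add, h1val]
  have hvallt : ∀ i : ZMod ℓ, i.val < ℓ := fun i => ZMod.val_lt i
  have hvalinj : ∀ i j : ZMod ℓ, i.val = j.val → i = j :=
    fun i j hij => ZMod.val_injective ℓ hij
  -- the Berge cycle
  refine ⟨fun i => if i.val = 0 then w else ts (i.val - 1),
          fun i => if i.val = n then D else EdF H b w W ts i.val, ?_, ?_, ?_, ?_⟩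
  · -- injectivity of v
    intro i j hij
    simp only at hij
    have hi := hvallt i
    have hj := hvallt j
    by_cases h0i : i.val = 0 <;> by_cases h0j : j.val = 0
    · exact hvalinj i j (by omega)
    · rw [if_pos h0i, if_neg h0j] at hij
      exact absurd (hij ▸ hwS₀) (h2 (j.val - 1) (by omega))
    · rw [if_neg h0i, if_pos h0j] at hij
      exact absurd (hij.symm ▸ hwS₀) (h2 (i.val - 1) (by omega))
    · rw [if_neg h0i, if_neg h0j] at hij
      apply hvalinj
      by_contra hne
      rcases Nat.lt_or_ge (i.val - 1) (j.val - 1) with hlt | hge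
      · exact (h3 (j.val - 1) (by omega) (i.val - 1) hlt) hij.symm
      · have hgt : j.val - 1 < i.val - 1 := by omega
        exact (h3 (i.val - 1) (by omega) (j.val - 1) hgt) hij
  · -- injectivity of e
    have hdist : ∀ p q : ℕ, p < q → q ≤ n →
        (if p = n then D else EdF H b w W ts p) ≠
        (if q = n then D else EdF H b w W ts q) := by
      intro p q hpq hq
      rw [if_neg (by omega : ¬ (p = n))]
      by_cases hqn : q = n
      · rw [if_pos hqn]
        by_cases hpn1 : p = n - 1
        · subst hpn1
          rw [hDdef]
          unfold EdF
          rw [if_neg (by omega : ¬ (n - 1 = 0))]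
          apply witE_ne (hCcore (n-1) (by omega)) (hwC (n-1) (by omega)) htsn2mem
          exact fun h' => (htsw (n-2) (by omega)) h'.symm
        · intro heq
          have hmem : ts (n-1) ∈ EdF H b w W ts p := heq ▸ htsn1D
          exact (h4 (n-1) (by omega) p (by omega)) hmem
      · rw [if_neg hqn]
        intro heq
        have hq1 : 1 ≤ q := by omega
        have hqn' : q < n := by omega
        have hmem : ts q ∈ EdF H b w W ts p := heq ▸ (htslEl q hq1 hqn').1
        exact (h4 q hqn' p hpq) hmem
    intro i j hij
    simp only at hij
    have hi := hvallt i
    have hj := hvallt j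
    apply hvalinj
    by_contra hne
    rcases Nat.lt_or_ge i.val j.val with hlt | hge
    · exact (hdist i.val j.val hlt (by omega)) hij
    · exact (hdist j.val i.val (by omega) (by omega)) hij.symm
  · -- edges in H
    intro i
    simp only
    split_ifs with hin
    · exact hDH
    · exact hEHn i.val (by have := hvallt i; omega)
  · -- cycle conditions
    intro i
    simp only
    have hi := hvallt i
    have hadd := hvadd i
    by_cases h0 : i.val = 0
    · rw [if_pos h0, if_neg (by omega : ¬ (i.val = n))]
      constructor
      · rw [h0]
        exact hwE0
      · have hv1 : (i + 1).val = 1 := by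
          rw [hadd, h0]
          have h1l : (1 : ℕ) < ℓ := by omega
          simp [Nat.mod_eq_of_lt h1l]
        rw [hv1, if_neg (by omega : ¬ (1 = 0)), h0]
        simpa using hts0E0
    · by_cases hN : i.val = n
      · rw [if_neg h0, if_pos hN]
        constructor
        · rw [hN]; exact htsn1D
        · have hv0 : (i + 1).val = 0 := by
            rw [hadd, hN]
            have hnl' : n + 1 = ℓ := by omega
            rw [hnl', Nat.mod_self]
          rw [hv0, if_pos rfl]
          exact hwD
      · rw [if_neg h0, if_neg hN]
        have hv1 : 1 ≤ i.val := by omega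
        have hvn : i.val < n := by omega
        constructor
        · exact (htslEl i.val hv1 hvn).2
        · have hval : (i + 1).val = i.val + 1 := by
            rw [hadd]
            exact Nat.mod_eq_of_lt (by omega)
          rw [hval, if_neg (by omega : ¬ (i.val + 1 = 0))]
          have : i.val + 1 - 1 = i.val := by omega
          rw [this]
          exact (htslEl i.val hv1 hvn).1

lemma core_count {H : Finset (Finset V)} {ℓ r : ℕ}
    (hl : 3 ≤ ℓ) (hr : 3 ≤ r) (hu : ∀ e ∈ H, e.card = r)
    (hfree : ¬ IsBergeCycle H ℓ) :
    ∀ X : Finset (Finset V), (∀ S ∈ X, S.card = r ∧ IsCoreSet H S) →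
      X.card ≤ ∑ T ∈ H.biUnion (fun f => f.image (fun x => f.erase x)),
        min (3*ℓ*r) ((X.filter (fun S' => T ⊆ S')).card) := by
  classical
  intro X
  induction X using Finset.strongInductionOn with
  | _ X ih =>
    intro hX
    by_cases hA : ∃ S ∈ X, ∃ t ∈ S, (X.filter (fun S' => S \ {t} ⊆ S')).card ≤ 3*ℓ*r
    · obtain ⟨S, hS, t, ht, hc⟩ := hA
      have hSr : S.card = r := (hX S hS).1
      have hSc : IsCoreSet H S := (hX S hS).2
      set T := S \ {t} with hTdef
      -- T is a hub
      have hTH : T ∈ H.biUnion (fun f => f.image (fun x => f.erase x)) := by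
        set f := witE H S t with hfdef
        have hfH : f ∈ H := witE_mem hSc ht
        have hTf : T ⊆ f := witE_cov hSc ht
        have hTcard : T.card = r - 1 := by
          rw [hTdef, Finset.card_sdiff_of_subset (Finset.singleton_subset_iff.mpr ht),
            Finset.card_singleton, hSr]
        have hfcard : f.card = r := hu f hfH
        have hfT1 : (f \ T).card = 1 := by
          rw [Finset.card_sdiff_of_subset hTf, hfcard, hTcard]
          omega
        obtain ⟨x, hx⟩ := Finset.card_eq_one.mp hfT1
        have hxf : x ∈ f := (Finset.mem_sdiff.mp (hx ▸ Finset.mem_singleton_self x)).1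
        have hxT : x ∉ T := (Finset.mem_sdiff.mp (hx ▸ Finset.mem_singleton_self x)).2
        have herase : f.erase x = T := by
          have hsub : T ⊆ f.erase x := by
            intro y hy
            rw [Finset.mem_erase]
            exact ⟨fun h' => hxT (h' ▸ hy), hTf hy⟩
          have hcard2 : (f.erase x).card ≤ T.card := by
            rw [Finset.card_erase_of_mem hxf, hfcard, hTcard]
          exact (Finset.eq_of_subset_of_card_le hsub hcard2).symm
        exact Finset.mem_biUnion.mpr ⟨f, hfH, Finset.mem_image.mpr ⟨x, hxf, herase⟩⟩
      -- counting
      have hSfil : S ∈ X.filter (fun S' => T ⊆ S') :=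
        Finset.mem_filter.mpr ⟨hS, Finset.sdiff_subset⟩
      have hc1 : 1 ≤ (X.filter (fun S' => T ⊆ S')).card :=
        Finset.card_pos.mpr ⟨S, hSfil⟩
      have hXe : ∀ S' ∈ X.erase S, S'.card = r ∧ IsCoreSet H S' :=
        fun S' h => hX S' (Finset.mem_of_mem_erase h)
      have ihX := ih (X.erase S) (Finset.erase_ssubset hS) hXe
      have hmono : ∀ T' ∈ H.biUnion (fun f => f.image (fun x => f.erase x)),
          min (3*ℓ*r) (((X.erase S).filter (fun S' => T' ⊆ S')).card) ≤
          min (3*ℓ*r) ((X.filter (fun S' => T' ⊆ S')).card) := by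
        intro T' _
        have hss : (X.erase S).filter (fun S' => T' ⊆ S') ⊆ X.filter (fun S' => T' ⊆ S') :=
          Finset.filter_subset_filter _ (Finset.erase_subset _ _)
        have := Finset.card_le_card hss
        omega
      have hdrop : min (3*ℓ*r) (((X.erase S).filter (fun S' => T ⊆ S')).card) + 1 =
          min (3*ℓ*r) ((X.filter (fun S' => T ⊆ S')).card) := by
        have hfe : (X.erase S).filter (fun S' => T ⊆ S') =
            (X.filter (fun S' => T ⊆ S')).erase S := by
          ext S'
          simp only [Finset.mem_filter, Finset.mem_erase]
          tauto
        rw [hfe, Finset.card_erase_of_mem hSfil]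
        omega
      have hfinal : (∑ T' ∈ H.biUnion (fun f => f.image (fun x => f.erase x)),
            min (3*ℓ*r) (((X.erase S).filter (fun S' => T' ⊆ S')).card)) + 1
          ≤ ∑ T' ∈ H.biUnion (fun f => f.image (fun x => f.erase x)),
            min (3*ℓ*r) ((X.filter (fun S' => T' ⊆ S')).card) := by
        rw [← Finset.add_sum_erase _
            (fun T' => min (3*ℓ*r) (((X.erase S).filter (fun S' => T' ⊆ S')).card)) hTH,
          ← Finset.add_sum_erase _
            (fun T' => min (3*ℓ*r) ((X.filter (fun S' => T' ⊆ S')).card)) hTH]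
        have hrest : ∑ T' ∈ (H.biUnion (fun f => f.image (fun x => f.erase x))).erase T,
              min (3*ℓ*r) (((X.erase S).filter (fun S' => T' ⊆ S')).card)
            ≤ ∑ T' ∈ (H.biUnion (fun f => f.image (fun x => f.erase x))).erase T,
              min (3*ℓ*r) ((X.filter (fun S' => T' ⊆ S')).card) :=
          Finset.sum_le_sum (fun T' hT' => hmono T' (Finset.mem_of_mem_erase hT'))
        omega
      calc X.card = (X.erase S).card + 1 := by rw [Finset.card_erase_add_one hS]
        _ ≤ (∑ T' ∈ H.biUnion (fun f => f.image (fun x => f.erase x)),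
              min (3*ℓ*r) (((X.erase S).filter (fun S' => T' ⊆ S')).card)) + 1 :=
            Nat.add_le_add_right ihX 1
        _ ≤ _ := hfinal
    · push_neg at hA
      rcases X.eq_empty_or_nonempty with hX0 | hne
      · simp [hX0]
      · exact absurd (buildCycle hl hr hu X hX hne hA) hfree

end Main

theorem stmt7 {V : Type*} [DecidableEq V] (H : Finset (Finset V)) (ℓ r m : ℕ)
    (hℓ : 3 ≤ ℓ) (hr : 3 ≤ r) (hu : ∀ e ∈ H, e.card = r) (hm : H.card = m)
    (hfree : ¬ IsBergeCycle H ℓ) :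
    {S : Finset V | S.card = r ∧ IsCoreSet H S}.ncard ≤ ℓ ^ 2 * r ^ 2 * m := by
  classical
  subst hm
  set C := ((H.sup id).powersetCard r).filter (fun S => IsCoreSet H S) with hCdef
  have hsetEq : {S : Finset V | S.card = r ∧ IsCoreSet H S} = ↑C := by
    ext S
    simp only [Set.mem_setOf_eq, hCdef, Finset.coe_filter, Finset.mem_powersetCard,
      Set.mem_setOf_eq]
    constructor
    · rintro ⟨hcard, hcore⟩
      refine ⟨⟨?_, hcard⟩, hcore⟩
      intro x hx
      obtain ⟨y, hy, hyx⟩ := Finset.exists_mem_ne (s := S) (by omega) x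
      have hxy : x ∈ S \ {y} := Finset.mem_sdiff.mpr ⟨hx, by simp [hyx.symm]⟩
      exact Finset.mem_sup.mpr ⟨witE H S y, witE_mem hcore hy, witE_cov hcore hy hxy⟩
    · rintro ⟨⟨_, hcard⟩, hcore⟩
      exact ⟨hcard, hcore⟩
  rw [hsetEq, Set.ncard_coe_finset]
  have hXC : ∀ S ∈ C, S.card = r ∧ IsCoreSet H S := by
    intro S hS
    rw [hCdef, Finset.mem_filter, Finset.mem_powersetCard] at hS
    exact ⟨hS.1.2, hS.2⟩
  have hmain := core_count hℓ hr hu hfree C hXC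
  have hHub : (H.biUnion (fun f => f.image (fun x => f.erase x))).card ≤ H.card * r := by
    apply le_trans Finset.card_biUnion_le
    calc ∑ f ∈ H, (f.image (fun x => f.erase x)).card
        ≤ ∑ f ∈ H, f.card := Finset.sum_le_sum (fun f _ => Finset.card_image_le)
      _ = ∑ _f ∈ H, r := Finset.sum_congr rfl (fun f hf => hu f hf)
      _ = H.card * r := by rw [Finset.sum_const, smul_eq_mul]
  have hsum : ∑ T ∈ H.biUnion (fun f => f.image (fun x => f.erase x)),
      min (3*ℓ*r) ((C.filter (fun S' => T ⊆ S')).card) ≤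
      (H.biUnion (fun f => f.image (fun x => f.erase x))).card * (3*ℓ*r) := by
    calc ∑ T ∈ H.biUnion (fun f => f.image (fun x => f.erase x)),
          min (3*ℓ*r) ((C.filter (fun S' => T ⊆ S')).card)
        ≤ ∑ _T ∈ H.biUnion (fun f => f.image (fun x => f.erase x)), (3*ℓ*r) :=
          Finset.sum_le_sum (fun T _ => Nat.min_le_left _ _)
      _ = _ := by rw [Finset.sum_const, smul_eq_mul]
  have hfin : C.card ≤ H.card * r * (3*ℓ*r) :=
    le_trans hmain (le_trans hsum (Nat.mul_le_mul_right _ hHub))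
  calc C.card ≤ H.card * r * (3*ℓ*r) := hfin
    _ = 3 * (ℓ * (r * r * H.card)) := by ring
    _ ≤ ℓ * (ℓ * (r * r * H.card)) := mul_le_mul_left hℓ _
    _ = ℓ ^ 2 * r ^ 2 * H.card := by ring
end

section
/- For each ℓ, r ≥ 3 there exists a constant c = c(ℓ,r) such that for all m, n ≥ 1, the number of r-uniform hypergraphs on [n] with at most m hyperedges containing no Berge ℓ-cycle satisfies N_{[m]}^r(n, C_ℓ^r) ≤ 2^{cm} · N_{[m]}^{r−1}(n, C_ℓ^{r−1})^r, where N_{[m]}^{r−1}(n, C_ℓ^{r−1}) is the number of (r−1)-uniform hypergraphs on [n] with at most m hyperedges containing no Berge ℓ-cycle. -/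
/-- `N_{[m]}^k(n, C_ℓ^k)`: the number of `k`-uniform hypergraphs on `[n]` with at most `m`
hyperedges that contain no Berge `ℓ`-cycle. -/
noncomputable def NleBerge (k n m ℓ : ℕ) : ℕ :=
  {H : Finset (Finset (Fin n)) | (∀ e ∈ H, e.card = k) ∧ H.card ≤ m ∧ ¬ IsBergeCycle H ℓ}.ncard

open Finset

namespace Stmt8
set_option linter.unusedSectionVars false
set_option maxHeartbeats 1000000

section Deletion
variable {T A B C : Type*} [DecidableEq T] [DecidableEq A] [DecidableEq B] [DecidableEq C]

def Spread (f : T → A) (g : T → B) (h : T → C) (D : ℕ) (Δ : Finset T) : Prop :=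
  (∀ p ∈ Δ.image f, D ≤ (Δ.filter (fun t => f t = p)).card) ∧
  (∀ p ∈ Δ.image g, D ≤ (Δ.filter (fun t => g t = p)).card) ∧
  (∀ p ∈ Δ.image h, D ≤ (Δ.filter (fun t => h t = p)).card)
/-- generic one-light-pin reduction step -/
private lemma light_step {f : T → A} {Δ : Finset T} {D : ℕ} {p : A}
    (hp : p ∈ Δ.image f) (hlight : (Δ.filter (fun t => f t = p)).card < D) :
    (Δ.filter (fun t => ¬ f t = p)) ⊂ Δ ∧
    Δ.card ≤ (D - 1) + (Δ.filter (fun t => ¬ f t = p)).card ∧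
    ((Δ.filter (fun t => ¬ f t = p)).image f).card + 1 ≤ (Δ.image f).card := by
  classical
  set Δ₂ := Δ.filter (fun t => ¬ f t = p) with hΔ₂
  have hsub : Δ₂ ⊆ Δ := filter_subset _ _
  obtain ⟨t, ht, hft⟩ := mem_image.mp hp
  have htmem : t ∈ Δ.filter (fun t => f t = p) := mem_filter.mpr ⟨ht, hft⟩
  have hppos : 0 < (Δ.filter (fun t => f t = p)).card := card_pos.mpr ⟨t, htmem⟩
  have hsplit : (Δ.filter (fun t => f t = p)).card + Δ₂.card = Δ.card :=
    card_filter_add_card_filter_not _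
  refine ⟨?_, by omega, ?_⟩
  · refine (ssubset_iff_of_subset hsub).mpr ⟨t, ht, ?_⟩
    simp only [hΔ₂, mem_filter, not_and, not_not]
    intro _; exact hft
  · have hsub2 : Δ₂.image f ⊆ (Δ.image f).erase p := by
      intro q hq
      rw [mem_image] at hq
      obtain ⟨u, hu, rfl⟩ := hq
      exact mem_erase.mpr ⟨(mem_filter.mp hu).2, mem_image_of_mem f (hsub hu)⟩
    have h1 := card_le_card hsub2
    rw [card_erase_of_mem hp] at h1
    have h2 : 0 < (Δ.image f).card := card_pos.mpr ⟨p, hp⟩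
    omega
lemma deletion (f : T → A) (g : T → B) (h : T → C) (D : ℕ) :
    ∀ Δ : Finset T,
      Δ.card ≤ D * ((Δ.image f).card + (Δ.image g).card + (Δ.image h).card) ∨
      ∃ Δ' ⊆ Δ, Δ'.Nonempty ∧ Spread f g h D Δ' := by
  intro Δ
  induction Δ using Finset.strongInduction with
  | _ Δ IH =>
  rcases Δ.eq_empty_or_nonempty with rfl | hne
  · left; simp
  by_cases hsp : Spread f g h D Δ
  · right; exact ⟨Δ, Finset.Subset.refl _, hne, hsp⟩
  have light : (∃ p ∈ Δ.image f, (Δ.filter (fun t => f t = p)).card < D) ∨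
      (∃ p ∈ Δ.image g, (Δ.filter (fun t => g t = p)).card < D) ∨
      (∃ p ∈ Δ.image h, (Δ.filter (fun t => h t = p)).card < D) := by
    by_cases h1 : ∀ p ∈ Δ.image f, D ≤ (Δ.filter (fun t => f t = p)).card
    · by_cases h2 : ∀ p ∈ Δ.image g, D ≤ (Δ.filter (fun t => g t = p)).card
      · have h3 : ¬ ∀ p ∈ Δ.image h, D ≤ (Δ.filter (fun t => h t = p)).card :=
          fun h3 => hsp ⟨h1, h2, h3⟩
        push_neg at h3
        exact Or.inr (Or.inr (by obtain ⟨p, hp, hl⟩ := h3; exact ⟨p, hp, hl⟩))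
      · push_neg at h2
        exact Or.inr (Or.inl (by obtain ⟨p, hp, hl⟩ := h2; exact ⟨p, hp, hl⟩))
    · push_neg at h1
      exact Or.inl (by obtain ⟨p, hp, hl⟩ := h1; exact ⟨p, hp, hl⟩)
  have hD : 1 ≤ D := by
    rcases light with ⟨p, _, hl⟩ | ⟨p, _, hl⟩ | ⟨p, _, hl⟩ <;> omega
  rcases light with ⟨p, hp, hl⟩ | ⟨p, hp, hl⟩ | ⟨p, hp, hl⟩
  · obtain ⟨hss, hcard, himf⟩ := light_step hp hl
    set Δ₂ := Δ.filter (fun t => ¬ f t = p) with hΔ₂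
    rcases IH Δ₂ hss with hbound | ⟨Δ', hΔ'sub, hΔ'ne, hΔ'sp⟩
    · left
      have himg : (Δ₂.image g).card ≤ (Δ.image g).card :=
        card_le_card (image_subset_image (filter_subset _ _))
      have himh : (Δ₂.image h).card ≤ (Δ.image h).card :=
        card_le_card (image_subset_image (filter_subset _ _))
      have key : D * ((Δ₂.image f).card + (Δ₂.image g).card + (Δ₂.image h).card) + D ≤
          D * ((Δ.image f).card + (Δ.image g).card + (Δ.image h).card) := by
        have : (Δ₂.image f).card + (Δ₂.image g).card + (Δ₂.image h).card + 1 ≤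
            (Δ.image f).card + (Δ.image g).card + (Δ.image h).card := by omega
        calc D * ((Δ₂.image f).card + (Δ₂.image g).card + (Δ₂.image h).card) + D
            = D * ((Δ₂.image f).card + (Δ₂.image g).card + (Δ₂.image h).card + 1) := by ring
          _ ≤ _ := Nat.mul_le_mul_left D this
      omega
    · right; exact ⟨Δ', hΔ'sub.trans (filter_subset _ _), hΔ'ne, hΔ'sp⟩
  · obtain ⟨hss, hcard, himg⟩ := light_step hp hl
    set Δ₂ := Δ.filter (fun t => ¬ g t = p) with hΔ₂
    rcases IH Δ₂ hss with hbound | ⟨Δ', hΔ'sub, hΔ'ne, hΔ'sp⟩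
    · left
      have himf : (Δ₂.image f).card ≤ (Δ.image f).card :=
        card_le_card (image_subset_image (filter_subset _ _))
      have himh : (Δ₂.image h).card ≤ (Δ.image h).card :=
        card_le_card (image_subset_image (filter_subset _ _))
      have key : D * ((Δ₂.image f).card + (Δ₂.image g).card + (Δ₂.image h).card) + D ≤
          D * ((Δ.image f).card + (Δ.image g).card + (Δ.image h).card) := by
        have : (Δ₂.image f).card + (Δ₂.image g).card + (Δ₂.image h).card + 1 ≤
            (Δ.image f).card + (Δ.image g).card + (Δ.image h).card := by omega
        calc D * ((Δ₂.image f).card + (Δ₂.image g).card + (Δ₂.image h).card) + D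
            = D * ((Δ₂.image f).card + (Δ₂.image g).card + (Δ₂.image h).card + 1) := by ring
          _ ≤ _ := Nat.mul_le_mul_left D this
      omega
    · right; exact ⟨Δ', hΔ'sub.trans (filter_subset _ _), hΔ'ne, hΔ'sp⟩
  · obtain ⟨hss, hcard, himh⟩ := light_step hp hl
    set Δ₂ := Δ.filter (fun t => ¬ h t = p) with hΔ₂
    rcases IH Δ₂ hss with hbound | ⟨Δ', hΔ'sub, hΔ'ne, hΔ'sp⟩
    · left
      have himf : (Δ₂.image f).card ≤ (Δ.image f).card :=
        card_le_card (image_subset_image (filter_subset _ _))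
      have himg : (Δ₂.image g).card ≤ (Δ.image g).card :=
        card_le_card (image_subset_image (filter_subset _ _))
      have key : D * ((Δ₂.image f).card + (Δ₂.image g).card + (Δ₂.image h).card) + D ≤
          D * ((Δ.image f).card + (Δ.image g).card + (Δ.image h).card) := by
        have : (Δ₂.image f).card + (Δ₂.image g).card + (Δ₂.image h).card + 1 ≤
            (Δ.image f).card + (Δ.image g).card + (Δ.image h).card := by omega
        calc D * ((Δ₂.image f).card + (Δ₂.image g).card + (Δ₂.image h).card) + D
            = D * ((Δ₂.image f).card + (Δ₂.image g).card + (Δ₂.image h).card + 1) := by ring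
          _ ≤ _ := Nat.mul_le_mul_left D this
      omega
    · right; exact ⟨Δ', hΔ'sub.trans (filter_subset _ _), hΔ'ne, hΔ'sp⟩
end Deletion

section Main
variable {n : ℕ} [NeZero n]
noncomputable def mn (s : Finset (Fin n)) : Fin n :=
  if h : s.Nonempty then s.min' h else ⟨0, Nat.pos_of_ne_zero (NeZero.ne n)⟩
noncomputable def m1 (s : Finset (Fin n)) : Fin n := mn (s.erase (mn s))
noncomputable def m2 (s : Finset (Fin n)) : Fin n := mn ((s.erase (mn s)).erase (m1 s))
noncomputable def tail3 (s : Finset (Fin n)) : Finset (Fin n) :=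
  (((s.erase (mn s)).erase (m1 s)).erase (m2 s))
noncomputable def sh1 (s : Finset (Fin n)) : Finset (Fin n) := s.erase (mn s)
noncomputable def sh2 (s : Finset (Fin n)) : Finset (Fin n) := s.erase (m1 s)
noncomputable def sh3 (s : Finset (Fin n)) : Finset (Fin n) := s.erase (m2 s)
lemma mn_mem {s : Finset (Fin n)} (h : s.Nonempty) : mn s ∈ s := by
  rw [mn, dif_pos h]; exact s.min'_mem h
lemma mn_le {s : Finset (Fin n)} {x : Fin n} (hx : x ∈ s) : mn s ≤ x := by
  rw [mn, dif_pos ⟨x, hx⟩]; exact s.min'_le x hx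
lemma mn_eq_min {s : Finset (Fin n)} {a : Fin n} (ha : a ∈ s) (hle : ∀ x ∈ s, a ≤ x) :
    mn s = a := le_antisymm (mn_le ha) (hle _ (mn_mem ⟨a, ha⟩))
lemma card_pos_of_three {s : Finset (Fin n)} (h : 3 ≤ s.card) : s.Nonempty :=
  card_pos.mp (by omega)
lemma erase1_card {s : Finset (Fin n)} (h : 3 ≤ s.card) : 2 ≤ (s.erase (mn s)).card := by
  rw [card_erase_of_mem (mn_mem (card_pos_of_three h))]; omega
lemma m1_mem_erase {s : Finset (Fin n)} (h : 3 ≤ s.card) : m1 s ∈ s.erase (mn s) :=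
  mn_mem (card_pos.mp (by have := erase1_card h; omega))
lemma m1_mem {s : Finset (Fin n)} (h : 3 ≤ s.card) : m1 s ∈ s :=
  mem_of_mem_erase (m1_mem_erase h)
lemma m1_ne_mn {s : Finset (Fin n)} (h : 3 ≤ s.card) : m1 s ≠ mn s :=
  ne_of_mem_erase (m1_mem_erase h)
lemma erase2_card {s : Finset (Fin n)} (h : 3 ≤ s.card) :
    1 ≤ ((s.erase (mn s)).erase (m1 s)).card := by
  rw [card_erase_of_mem (m1_mem_erase h)]; have := erase1_card h; omega
lemma m2_mem_erase2 {s : Finset (Fin n)} (h : 3 ≤ s.card) :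
    m2 s ∈ (s.erase (mn s)).erase (m1 s) :=
  mn_mem (card_pos.mp (by have := erase2_card h; omega))
lemma m2_mem {s : Finset (Fin n)} (h : 3 ≤ s.card) : m2 s ∈ s :=
  mem_of_mem_erase (mem_of_mem_erase (m2_mem_erase2 h))
lemma m2_ne_m1 {s : Finset (Fin n)} (h : 3 ≤ s.card) : m2 s ≠ m1 s :=
  ne_of_mem_erase (m2_mem_erase2 h)
lemma m2_ne_mn {s : Finset (Fin n)} (h : 3 ≤ s.card) : m2 s ≠ mn s :=
  ne_of_mem_erase (mem_of_mem_erase (m2_mem_erase2 h))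
lemma recon {s : Finset (Fin n)} (h : 3 ≤ s.card) :
    insert (mn s) (insert (m1 s) (insert (m2 s) (tail3 s))) = s := by
  rw [tail3, insert_erase (m2_mem_erase2 h), insert_erase (m1_mem_erase h),
    insert_erase (mn_mem (card_pos_of_three h))]
-- expressing data via sh1
lemma m1_via_sh1 (e : Finset (Fin n)) : m1 e = mn (sh1 e) := rfl
lemma m2_via_sh1 (e : Finset (Fin n)) : m2 e = m1 (sh1 e) := rfl
lemma tail3_via_sh1 (e : Finset (Fin n)) :
    tail3 e = ((sh1 e).erase (mn (sh1 e))).erase (m1 (sh1 e)) := rfl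
lemma pins_of_sh1_eq {e f : Finset (Fin n)} (h : sh1 e = sh1 f) :
    m1 e = m1 f ∧ m2 e = m2 f ∧ tail3 e = tail3 f := by
  refine ⟨?_, ?_, ?_⟩
  · rw [m1_via_sh1, m1_via_sh1, h]
  · rw [m2_via_sh1, m2_via_sh1, h]
  · rw [tail3_via_sh1, tail3_via_sh1, h]
-- expressing via sh2
lemma mn_via_sh2 {e : Finset (Fin n)} (h : 3 ≤ e.card) : mn e = mn (sh2 e) := by
  refine (mn_eq_min ?_ ?_).symm
  · exact mem_erase.mpr ⟨(m1_ne_mn h).symm, mn_mem (card_pos_of_three h)⟩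
  · exact fun x hx => mn_le (mem_of_mem_erase hx)
lemma m2_via_sh2 {e : Finset (Fin n)} (h : 3 ≤ e.card) : m2 e = m1 (sh2 e) := by
  rw [m1, ← mn_via_sh2 h, sh2, erase_right_comm, m2]
lemma tail3_via_sh2 {e : Finset (Fin n)} (h : 3 ≤ e.card) :
    tail3 e = ((sh2 e).erase (mn (sh2 e))).erase (m1 (sh2 e)) := by
  rw [← mn_via_sh2 h, ← m2_via_sh2 h, sh2, tail3]
  ext x; simp only [mem_erase]; tauto
lemma pins_of_sh2_eq {e f : Finset (Fin n)} (he : 3 ≤ e.card) (hf : 3 ≤ f.card)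
    (h : sh2 e = sh2 f) : mn e = mn f ∧ m2 e = m2 f ∧ tail3 e = tail3 f := by
  refine ⟨?_, ?_, ?_⟩
  · rw [mn_via_sh2 he, mn_via_sh2 hf, h]
  · rw [m2_via_sh2 he, m2_via_sh2 hf, h]
  · rw [tail3_via_sh2 he, tail3_via_sh2 hf, h]
-- expressing via sh3
lemma mn_via_sh3 {e : Finset (Fin n)} (h : 3 ≤ e.card) : mn e = mn (sh3 e) := by
  refine (mn_eq_min ?_ ?_).symm
  · exact mem_erase.mpr ⟨(m2_ne_mn h).symm, mn_mem (card_pos_of_three h)⟩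
  · exact fun x hx => mn_le (mem_of_mem_erase hx)
lemma m1_via_sh3 {e : Finset (Fin n)} (h : 3 ≤ e.card) : m1 e = m1 (sh3 e) := by
  have h2 : (sh3 e).erase (mn (sh3 e)) = (e.erase (m2 e)).erase (mn e) := by
    rw [← mn_via_sh3 h, sh3]
  show m1 e = mn ((sh3 e).erase (mn (sh3 e)))
  rw [h2]
  refine (mn_eq_min ?_ ?_).symm
  · exact mem_erase.mpr ⟨m1_ne_mn h, mem_erase.mpr ⟨(m2_ne_m1 h).symm, m1_mem h⟩⟩
  · intro x hx
    rw [mem_erase, mem_erase] at hx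
    exact mn_le (mem_erase.mpr ⟨hx.1, hx.2.2⟩)
lemma tail3_via_sh3 {e : Finset (Fin n)} (h : 3 ≤ e.card) :
    tail3 e = ((sh3 e).erase (mn (sh3 e))).erase (m1 (sh3 e)) := by
  rw [← mn_via_sh3 h, ← m1_via_sh3 h, sh3, tail3]
  ext x; simp only [mem_erase]; tauto
lemma pins_of_sh3_eq {e f : Finset (Fin n)} (he : 3 ≤ e.card) (hf : 3 ≤ f.card)
    (h : sh3 e = sh3 f) : mn e = mn f ∧ m1 e = m1 f ∧ tail3 e = tail3 f := by
  refine ⟨?_, ?_, ?_⟩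
  · rw [mn_via_sh3 he, mn_via_sh3 hf, h]
  · rw [m1_via_sh3 he, m1_via_sh3 hf, h]
  · rw [tail3_via_sh3 he, tail3_via_sh3 hf, h]
noncomputable def repA (H : Finset (Finset (Fin n))) (q : Fin n × Fin n) : Finset (Fin n) :=
  if h : ∃ e ∈ H, mn e = q.1 ∧ m1 e = q.2 then h.choose else ∅
noncomputable def repB (H : Finset (Finset (Fin n))) (q : Fin n × Fin n) : Finset (Fin n) :=
  if h : ∃ e ∈ H, mn e = q.1 ∧ m2 e = q.2 then h.choose else ∅
noncomputable def repC (H : Finset (Finset (Fin n))) (q : Fin n × Fin n) : Finset (Fin n) :=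
  if h : ∃ e ∈ H, m1 e = q.1 ∧ m2 e = q.2 then h.choose else ∅
lemma repA_spec {H : Finset (Finset (Fin n))} {q : Fin n × Fin n}
    (h : ∃ e ∈ H, mn e = q.1 ∧ m1 e = q.2) :
    repA H q ∈ H ∧ mn (repA H q) = q.1 ∧ m1 (repA H q) = q.2 := by
  rw [repA, dif_pos h]
  exact ⟨h.choose_spec.1, h.choose_spec.2.1, h.choose_spec.2.2⟩
lemma repB_spec {H : Finset (Finset (Fin n))} {q : Fin n × Fin n}
    (h : ∃ e ∈ H, mn e = q.1 ∧ m2 e = q.2) :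
    repB H q ∈ H ∧ mn (repB H q) = q.1 ∧ m2 (repB H q) = q.2 := by
  rw [repB, dif_pos h]
  exact ⟨h.choose_spec.1, h.choose_spec.2.1, h.choose_spec.2.2⟩
lemma repC_spec {H : Finset (Finset (Fin n))} {q : Fin n × Fin n}
    (h : ∃ e ∈ H, m1 e = q.1 ∧ m2 e = q.2) :
    repC H q ∈ H ∧ m1 (repC H q) = q.1 ∧ m2 (repC H q) = q.2 := by
  rw [repC, dif_pos h]
  exact ⟨h.choose_spec.1, h.choose_spec.2.1, h.choose_spec.2.2⟩

def trip (a₀ : Fin n) (x : ℕ → Fin n) (i : ℕ) : Fin n × Fin n × Fin n :=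
  if Odd i then (a₀, x i, x (i+1)) else (a₀, x (i+1), x i)
noncomputable def pe (H : Finset (Finset (Fin n))) (a₀ : Fin n) (x : ℕ → Fin n) (i : ℕ) :
    Finset (Fin n) := repC H (trip a₀ x i).2
noncomputable def Re (H : Finset (Finset (Fin n))) (a₀ : Fin n) (x : ℕ → Fin n) (i : ℕ) :
    Finset (Fin n) := if Odd i then repA H (a₀, x i) else repB H (a₀, x i)
def Good (H : Finset (Finset (Fin n))) (Δ' : Finset (Fin n × Fin n × Fin n))
    (a₀ : Fin n) (x : ℕ → Fin n) (j : ℕ) : Prop :=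
  (∀ i, 1 ≤ i → i ≤ j → x i ≠ a₀) ∧
  (∀ i k, 1 ≤ i → i < k → k ≤ j → x i ≠ x k) ∧
  (∀ i, 1 ≤ i → i < j → trip a₀ x i ∈ Δ') ∧
  (∀ i, 1 ≤ i → i ≤ j →
    (Odd i → (a₀, x i) ∈ Δ'.image (fun t => (t.1, t.2.1))) ∧
    (¬ Odd i → (a₀, x i) ∈ Δ'.image (fun t => (t.1, t.2.2)))) ∧
  (∀ i k, 1 ≤ i → i < k → k < j → pe H a₀ x i ≠ pe H a₀ x k) ∧
  (∀ i k, 1 ≤ i → i < k → k ≤ j → Re H a₀ x i ≠ Re H a₀ x k) ∧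
  (∀ i k, 1 ≤ i → i ≤ j → 1 ≤ k → k < j → k ≠ i - 1 → Re H a₀ x i ≠ pe H a₀ x k)
lemma trip_congr {a₀ : Fin n} {x x' : ℕ → Fin n} {j i : ℕ} (hi : i + 1 ≤ j)
    (hagree : ∀ k ≤ j, x' k = x k) : trip a₀ x' i = trip a₀ x i := by
  rw [trip, trip, hagree i (by omega), hagree (i+1) hi]
lemma pe_congr {H : Finset (Finset (Fin n))} {a₀ : Fin n} {x x' : ℕ → Fin n} {j i : ℕ}
    (hi : i + 1 ≤ j) (hagree : ∀ k ≤ j, x' k = x k) : pe H a₀ x' i = pe H a₀ x i := by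
  rw [pe, pe, trip_congr hi hagree]
lemma Re_congr {H : Finset (Finset (Fin n))} {a₀ : Fin n} {x x' : ℕ → Fin n} {j i : ℕ}
    (hi : i ≤ j) (hagree : ∀ k ≤ j, x' k = x k) : Re H a₀ x' i = Re H a₀ x i := by
  rw [Re, Re, hagree i hi]
/-- one-step extension of a good path, common part -/
lemma good_succ {H : Finset (Finset (Fin n))} {Δ' : Finset (Fin n × Fin n × Fin n)}
    {a₀ : Fin n} {x x' : ℕ → Fin n} {j : ℕ} {ν : Fin n}
    (hagree : ∀ k ≤ j, x' k = x k) (hnew : x' (j+1) = ν)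
    (hg : Good H Δ' a₀ x j) (hj1 : 1 ≤ j)
    (hν_ne : ν ≠ a₀) (hν_fresh : ∀ i, 1 ≤ i → i ≤ j → x i ≠ ν)
    (htrip : trip a₀ x' j ∈ Δ')
    (hhub1 : Odd (j+1) → (a₀, ν) ∈ Δ'.image (fun t => (t.1, t.2.1)))
    (hhub2 : ¬ Odd (j+1) → (a₀, ν) ∈ Δ'.image (fun t => (t.1, t.2.2)))
    (hpnew : ∀ i, 1 ≤ i → i ≤ j-1 → pe H a₀ x i ≠ pe H a₀ x' j)
    (hpnewR : ∀ i, 1 ≤ i → i ≤ j → Re H a₀ x i ≠ pe H a₀ x' j)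
    (hRnewP : ∀ k, 1 ≤ k → k ≤ j-1 → Re H a₀ x' (j+1) ≠ pe H a₀ x k)
    (hRnewR : ∀ i, 1 ≤ i → i ≤ j → Re H a₀ x i ≠ Re H a₀ x' (j+1)) :
    Good H Δ' a₀ x' (j+1) := by
  obtain ⟨g1, g2, g3, g4, g5, g6, g7⟩ := hg
  refine ⟨?_, ?_, ?_, ?_, ?_, ?_, ?_⟩
  · intro i h1 h2
    rcases Nat.lt_or_ge i (j+1) with h | h
    · rw [hagree i (by omega)]; exact g1 i h1 (by omega)
    · have : i = j + 1 := by omega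
      rw [this, hnew]; exact hν_ne
  · intro i k h1 h2 h3
    rcases Nat.lt_or_ge k (j+1) with h | h
    · rw [hagree i (by omega), hagree k (by omega)]; exact g2 i k h1 h2 (by omega)
    · have hk : k = j + 1 := by omega
      rw [hk, hnew, hagree i (by omega)]; exact hν_fresh i h1 (by omega)
  · intro i h1 h2
    rcases Nat.lt_or_ge i j with h | h
    · rw [trip_congr (by omega) hagree]; exact g3 i h1 h
    · have : i = j := by omega
      rw [this]; exact htrip
  · intro i h1 h2
    rcases Nat.lt_or_ge i (j+1) with h | h
    · rw [hagree i (by omega)]; exact g4 i h1 (by omega)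
    · have : i = j + 1 := by omega
      subst this; rw [hnew]; exact ⟨hhub1, hhub2⟩
  · intro i k h1 h2 h3
    rcases Nat.lt_or_ge k j with h | h
    · rw [pe_congr (by omega) hagree, pe_congr (by omega) hagree]
      exact g5 i k h1 h2 h
    · have hk : k = j := by omega
      subst hk
      rw [pe_congr (by omega) hagree]
      exact hpnew i h1 (by omega)
  · intro i k h1 h2 h3
    rcases Nat.lt_or_ge k (j+1) with h | h
    · rw [Re_congr (by omega) hagree, Re_congr (by omega) hagree]
      exact g6 i k h1 h2 (by omega)
    · have hk : k = j + 1 := by omega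
      subst hk
      rw [Re_congr (by omega) hagree]
      exact hRnewR i h1 (by omega)
  · intro i k h1 h2 h3 h4 h5
    rcases Nat.lt_or_ge i (j+1) with hi | hi
    · rcases Nat.lt_or_ge k j with hk | hk
      · rw [Re_congr (by omega) hagree, pe_congr (by omega) hagree]
        exact g7 i k h1 (by omega) h3 hk h5
      · have hk' : k = j := by omega
        subst hk'
        rw [Re_congr (by omega) hagree]
        exact hpnewR i h1 (by omega)
    · have hi' : i = j + 1 := by omega
      subst hi'
      have hk : k ≤ j - 1 := by omega
      rw [pe_congr (by omega) hagree]
      exact hRnewP k h3 hk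

def Spread' (D : ℕ) (Δ' : Finset (Fin n × Fin n × Fin n)) : Prop :=
  Spread (fun t => (t.1, t.2.1)) (fun t => (t.1, t.2.2)) (fun t => t.2) D Δ'

lemma extend_step {H : Finset (Finset (Fin n))} {Δ' : Finset (Fin n × Fin n × Fin n)}
    {a₀ : Fin n} {D : ℕ}
    (hB : ∀ t ∈ Δ', ∃ e ∈ H, mn e = t.1 ∧ m2 e = t.2.2)
    (hC : ∀ t ∈ Δ', ∃ e ∈ H, m1 e = t.2.1 ∧ m2 e = t.2.2)
    (hA : ∀ t ∈ Δ', ∃ e ∈ H, mn e = t.1 ∧ m1 e = t.2.1)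
    (hsp : Spread' D Δ')
    {L : ℕ} (hD : 5 * L + 5 ≤ D)
    {x : ℕ → Fin n} {j : ℕ} (hj1 : 1 ≤ j) (hjL : j < L) (hg : Good H Δ' a₀ x j) :
    ∃ x' : ℕ → Fin n, (∀ k ≤ j, x' k = x k) ∧ Good H Δ' a₀ x' (j+1) := by
  classical
  obtain ⟨hsp1, hsp2, hsp3⟩ := hsp
  set usedV : Finset (Fin n) := insert a₀ ((Finset.Icc 1 j).image x) with husedV
  set usedE : Finset (Finset (Fin n)) :=
    ((Finset.Icc 1 (j-1)).image (pe H a₀ x)) ∪ ((Finset.Icc 1 j).image (Re H a₀ x)) with husedE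
  have husedVcard : usedV.card ≤ j + 1 := by
    calc usedV.card ≤ ((Finset.Icc 1 j).image x).card + 1 := card_insert_le _ _
      _ ≤ (Finset.Icc 1 j).card + 1 := by
          have := card_image_le (s := Finset.Icc 1 j) (f := x); omega
      _ = j + 1 := by rw [Nat.card_Icc]; omega
  have husedEcard : usedE.card ≤ 2 * j := by
    calc usedE.card ≤ ((Finset.Icc 1 (j-1)).image (pe H a₀ x)).card
          + ((Finset.Icc 1 j).image (Re H a₀ x)).card := card_union_le _ _
      _ ≤ (Finset.Icc 1 (j-1)).card + (Finset.Icc 1 j).card := by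
          have h1 := card_image_le (s := Finset.Icc 1 (j-1)) (f := pe H a₀ x)
          have h2 := card_image_le (s := Finset.Icc 1 j) (f := Re H a₀ x)
          omega
      _ ≤ 2 * j := by rw [Nat.card_Icc, Nat.card_Icc]; omega
  by_cases hodd : Odd j
  -- ODD CASE ------------------------------------------------------------
  · have hq : (a₀, x j) ∈ Δ'.image (fun t => (t.1, t.2.1)) :=
      (hg.2.2.2.1 j hj1 le_rfl).1 hodd
    have hext := hsp1 _ hq
    set F := Δ'.filter (fun t => (t.1, t.2.1) = (a₀, x j)) with hF
    have hFinj : Set.InjOn (fun t : Fin n × Fin n × Fin n => t.2.2) F := by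
      intro t ht t' ht' h22
      have h1 := (mem_filter.mp ht).2
      have h2 := (mem_filter.mp ht').2
      rw [Prod.ext_iff] at h1 h2
      simp only at h1 h2 h22
      ext1
      · rw [h1.1, h2.1]
      · ext1
        · rw [h1.2, h2.2]
        · exact h22
    set cands := F.image (fun t => t.2.2) with hcands
    have hcandcard : D ≤ cands.card := by
      rw [hcands, card_image_of_injOn hFinj]; exact hext
    have htripc : ∀ ν ∈ cands, (a₀, x j, ν) ∈ Δ' := by
      intro ν hν
      obtain ⟨t, htF, h22⟩ := mem_image.mp hν
      have hmem := (mem_filter.mp htF).1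
      have hcond := (mem_filter.mp htF).2
      rw [Prod.ext_iff] at hcond
      simp only at hcond h22
      have : t = (a₀, x j, ν) := by
        ext1
        · exact hcond.1
        · ext1
          · exact hcond.2
          · exact h22
      rwa [this] at hmem
    -- validity of new reps
    have hvC : ∀ ν ∈ cands, ∃ e ∈ H, m1 e = x j ∧ m2 e = ν := by
      intro ν hν; exact hC _ (htripc ν hν)
    have hvB : ∀ ν ∈ cands, ∃ e ∈ H, mn e = a₀ ∧ m2 e = ν := by
      intro ν hν; exact hB _ (htripc ν hν)
    set newP : Fin n → Finset (Fin n) := fun ν => repC H (x j, ν) with hnewP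
    set newR : Fin n → Finset (Fin n) := fun ν => repB H (a₀, ν) with hnewR
    have hnewPinj : ∀ ν ∈ cands, m2 (newP ν) = ν := by
      intro ν hν; exact (repC_spec (hvC ν hν)).2.2
    have hnewRinj : ∀ ν ∈ cands, m2 (newR ν) = ν := by
      intro ν hν; exact (repB_spec (hvB ν hν)).2.2
    set bad2 := cands.filter (fun ν => newP ν ∈ usedE) with hbad2
    set bad3 := cands.filter (fun ν => newR ν ∈ usedE) with hbad3
    have hbad2card : bad2.card ≤ usedE.card := by
      apply card_le_card_of_injOn newP
      · intro ν hν; exact (mem_filter.mp hν).2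
      · intro ν hν ν' hν' heq
        rw [← hnewPinj ν (mem_filter.mp hν).1, ← hnewPinj ν' (mem_filter.mp hν').1, heq]
    have hbad3card : bad3.card ≤ usedE.card := by
      apply card_le_card_of_injOn newR
      · intro ν hν; exact (mem_filter.mp hν).2
      · intro ν hν ν' hν' heq
        rw [← hnewRinj ν (mem_filter.mp hν).1, ← hnewRinj ν' (mem_filter.mp hν').1, heq]
    have hgoodne : (cands \ (usedV ∪ bad2 ∪ bad3)).Nonempty := by
      rw [← card_pos]
      have h1 : (usedV ∪ bad2 ∪ bad3).card ≤ usedV.card + bad2.card + bad3.card := by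
        calc (usedV ∪ bad2 ∪ bad3).card ≤ (usedV ∪ bad2).card + bad3.card := card_union_le _ _
          _ ≤ usedV.card + bad2.card + bad3.card := by have := card_union_le usedV bad2; omega
      have h2 := le_card_sdiff (usedV ∪ bad2 ∪ bad3) cands
      omega
    obtain ⟨ν, hνmem⟩ := hgoodne
    rw [mem_sdiff] at hνmem
    obtain ⟨hνc, hνbad⟩ := hνmem
    rw [mem_union, mem_union] at hνbad
    push_neg at hνbad
    obtain ⟨⟨hνV, hνb2⟩, hνb3⟩ := hνbad
    have hνnotE : newP ν ∉ usedE := fun h => hνb2 (mem_filter.mpr ⟨hνc, h⟩)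
    have hνRnotE : newR ν ∉ usedE := fun h => hνb3 (mem_filter.mpr ⟨hνc, h⟩)
    refine ⟨Function.update x (j+1) ν, ?_, ?_⟩
    · intro k hk; exact Function.update_of_ne (by omega) _ _
    · set x' := Function.update x (j+1) ν with hx'
      have hagree : ∀ k ≤ j, x' k = x k := fun k hk => Function.update_of_ne (by omega) _ _
      have hnew : x' (j+1) = ν := Function.update_self _ _ _
      have htrip' : trip a₀ x' j = (a₀, x j, ν) := by
        rw [trip, if_pos hodd, hagree j le_rfl, hnew]
      have hpe' : pe H a₀ x' j = newP ν := by
        rw [pe, htrip']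
      have hRe' : Re H a₀ x' (j+1) = newR ν := by
        rw [Re, if_neg (by simp [Nat.odd_add_one, hodd]), hnew]
      apply good_succ hagree hnew hg hj1
      · intro heq; exact hνV (heq ▸ mem_insert_self _ _)
      · intro i h1 h2 heq
        exact hνV (mem_insert_of_mem (mem_image.mpr ⟨i, by rw [mem_Icc]; omega, heq⟩))
      · rw [htrip']; exact htripc ν hνc
      · intro hcontra; rw [Nat.odd_add_one] at hcontra; exact absurd hodd hcontra
      · intro _
        exact mem_image.mpr ⟨(a₀, x j, ν), htripc ν hνc, rfl⟩
      · intro i h1 h2 heq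
        rw [hpe'] at heq
        exact hνnotE (heq ▸ mem_union_left _ (mem_image.mpr ⟨i, by rw [mem_Icc]; omega, rfl⟩))
      · intro i h1 h2 heq
        rw [hpe'] at heq
        exact hνnotE (heq ▸ mem_union_right _ (mem_image.mpr ⟨i, by rw [mem_Icc]; omega, rfl⟩))
      · intro k h1 h2 heq
        rw [hRe'] at heq
        exact hνRnotE (heq ▸ mem_union_left _ (mem_image.mpr ⟨k, by rw [mem_Icc]; omega, rfl⟩))
      · intro i h1 h2 heq
        rw [hRe'] at heq
        exact hνRnotE (heq ▸ mem_union_right _ (mem_image.mpr ⟨i, by rw [mem_Icc]; omega, rfl⟩))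
  -- EVEN CASE ------------------------------------------------------------
  · have hq : (a₀, x j) ∈ Δ'.image (fun t => (t.1, t.2.2)) :=
      (hg.2.2.2.1 j hj1 le_rfl).2 hodd
    have hext := hsp2 _ hq
    set F := Δ'.filter (fun t => (t.1, t.2.2) = (a₀, x j)) with hF
    have hFinj : Set.InjOn (fun t : Fin n × Fin n × Fin n => t.2.1) F := by
      intro t ht t' ht' h21
      have h1 := (mem_filter.mp ht).2
      have h2 := (mem_filter.mp ht').2
      rw [Prod.ext_iff] at h1 h2
      simp only at h1 h2 h21
      ext1
      · rw [h1.1, h2.1]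
      · ext1
        · exact h21
        · rw [h1.2, h2.2]
    set cands := F.image (fun t => t.2.1) with hcands
    have hcandcard : D ≤ cands.card := by
      rw [hcands, card_image_of_injOn hFinj]; exact hext
    have htripc : ∀ ν ∈ cands, (a₀, ν, x j) ∈ Δ' := by
      intro ν hν
      obtain ⟨t, htF, h21⟩ := mem_image.mp hν
      have hmem := (mem_filter.mp htF).1
      have hcond := (mem_filter.mp htF).2
      rw [Prod.ext_iff] at hcond
      simp only at hcond h21
      have : t = (a₀, ν, x j) := by
        ext1
        · exact hcond.1
        · ext1
          · exact h21
          · exact hcond.2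
      rwa [this] at hmem
    have hvC : ∀ ν ∈ cands, ∃ e ∈ H, m1 e = ν ∧ m2 e = x j := by
      intro ν hν; exact hC _ (htripc ν hν)
    have hvA : ∀ ν ∈ cands, ∃ e ∈ H, mn e = a₀ ∧ m1 e = ν := by
      intro ν hν; exact hA _ (htripc ν hν)
    set newP : Fin n → Finset (Fin n) := fun ν => repC H (ν, x j) with hnewP
    set newR : Fin n → Finset (Fin n) := fun ν => repA H (a₀, ν) with hnewR
    have hnewPinj : ∀ ν ∈ cands, m1 (newP ν) = ν := by
      intro ν hν; exact (repC_spec (hvC ν hν)).2.1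
    have hnewRinj : ∀ ν ∈ cands, m1 (newR ν) = ν := by
      intro ν hν; exact (repA_spec (hvA ν hν)).2.2
    set bad2 := cands.filter (fun ν => newP ν ∈ usedE) with hbad2
    set bad3 := cands.filter (fun ν => newR ν ∈ usedE) with hbad3
    have hbad2card : bad2.card ≤ usedE.card := by
      apply card_le_card_of_injOn newP
      · intro ν hν; exact (mem_filter.mp hν).2
      · intro ν hν ν' hν' heq
        rw [← hnewPinj ν (mem_filter.mp hν).1, ← hnewPinj ν' (mem_filter.mp hν').1, heq]
    have hbad3card : bad3.card ≤ usedE.card := by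
      apply card_le_card_of_injOn newR
      · intro ν hν; exact (mem_filter.mp hν).2
      · intro ν hν ν' hν' heq
        rw [← hnewRinj ν (mem_filter.mp hν).1, ← hnewRinj ν' (mem_filter.mp hν').1, heq]
    have hgoodne : (cands \ (usedV ∪ bad2 ∪ bad3)).Nonempty := by
      rw [← card_pos]
      have h1 : (usedV ∪ bad2 ∪ bad3).card ≤ usedV.card + bad2.card + bad3.card := by
        calc (usedV ∪ bad2 ∪ bad3).card ≤ (usedV ∪ bad2).card + bad3.card := card_union_le _ _
          _ ≤ usedV.card + bad2.card + bad3.card := by have := card_union_le usedV bad2; omega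
      have h2 := le_card_sdiff (usedV ∪ bad2 ∪ bad3) cands
      omega
    obtain ⟨ν, hνmem⟩ := hgoodne
    rw [mem_sdiff] at hνmem
    obtain ⟨hνc, hνbad⟩ := hνmem
    rw [mem_union, mem_union] at hνbad
    push_neg at hνbad
    obtain ⟨⟨hνV, hνb2⟩, hνb3⟩ := hνbad
    have hνnotE : newP ν ∉ usedE := fun h => hνb2 (mem_filter.mpr ⟨hνc, h⟩)
    have hνRnotE : newR ν ∉ usedE := fun h => hνb3 (mem_filter.mpr ⟨hνc, h⟩)
    refine ⟨Function.update x (j+1) ν, ?_, ?_⟩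
    · intro k hk; exact Function.update_of_ne (by omega) _ _
    · set x' := Function.update x (j+1) ν with hx'
      have hagree : ∀ k ≤ j, x' k = x k := fun k hk => Function.update_of_ne (by omega) _ _
      have hnew : x' (j+1) = ν := Function.update_self _ _ _
      have htrip' : trip a₀ x' j = (a₀, ν, x j) := by
        rw [trip, if_neg hodd, hagree j le_rfl, hnew]
      have hpe' : pe H a₀ x' j = newP ν := by
        rw [pe, htrip']
      have hRe' : Re H a₀ x' (j+1) = newR ν := by
        rw [Re, if_pos (by rw [Nat.odd_add_one]; exact hodd), hnew]
      apply good_succ hagree hnew hg hj1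
      · intro heq; exact hνV (heq ▸ mem_insert_self _ _)
      · intro i h1 h2 heq
        exact hνV (mem_insert_of_mem (mem_image.mpr ⟨i, by rw [mem_Icc]; omega, heq⟩))
      · rw [htrip']; exact htripc ν hνc
      · intro _
        exact mem_image.mpr ⟨(a₀, ν, x j), htripc ν hνc, rfl⟩
      · intro hcontra
        rw [Nat.odd_add_one] at hcontra; exact absurd (hcontra) (by simp [hodd])
      · intro i h1 h2 heq
        rw [hpe'] at heq
        exact hνnotE (heq ▸ mem_union_left _ (mem_image.mpr ⟨i, by rw [mem_Icc]; omega, rfl⟩))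
      · intro i h1 h2 heq
        rw [hpe'] at heq
        exact hνnotE (heq ▸ mem_union_right _ (mem_image.mpr ⟨i, by rw [mem_Icc]; omega, rfl⟩))
      · intro k h1 h2 heq
        rw [hRe'] at heq
        exact hνRnotE (heq ▸ mem_union_left _ (mem_image.mpr ⟨k, by rw [mem_Icc]; omega, rfl⟩))
      · intro i h1 h2 heq
        rw [hRe'] at heq
        exact hνRnotE (heq ▸ mem_union_right _ (mem_image.mpr ⟨i, by rw [mem_Icc]; omega, rfl⟩))

/-- assemble an ℓ-cycle from a window of a good path -/
lemma assemble {H : Finset (Finset (Fin n))} {ℓ : ℕ} (hl : 3 ≤ ℓ)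
    {a₀ : Fin n} {x : ℕ → Fin n} {s : ℕ} (hs : 1 ≤ s)
    {Ein Eout : Finset (Fin n)}
    (hEinH : Ein ∈ H) (hEoutH : Eout ∈ H)
    (hEin1 : a₀ ∈ Ein) (hEin2 : x s ∈ Ein)
    (hEout1 : a₀ ∈ Eout) (hEout2 : x (s + ℓ - 2) ∈ Eout)
    (hpH : ∀ k, s ≤ k → k + 3 ≤ s + ℓ →
      pe H a₀ x k ∈ H ∧ x k ∈ pe H a₀ x k ∧ x (k+1) ∈ pe H a₀ x k)
    (hvdist : ∀ i k, s ≤ i → i < k → k ≤ s + ℓ - 2 → x i ≠ x k)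
    (hva : ∀ i, s ≤ i → i ≤ s + ℓ - 2 → x i ≠ a₀)
    (hpdist : ∀ i k, s ≤ i → i < k → k + 3 ≤ s + ℓ → pe H a₀ x i ≠ pe H a₀ x k)
    (hEinP : ∀ k, s ≤ k → k + 3 ≤ s + ℓ → Ein ≠ pe H a₀ x k)
    (hEoutP : ∀ k, s ≤ k → k + 3 ≤ s + ℓ → Eout ≠ pe H a₀ x k)
    (hEinOut : Ein ≠ Eout) : IsBergeCycle H ℓ := by
  haveI : NeZero ℓ := ⟨by omega⟩
  haveI : Fact (1 < ℓ) := ⟨by omega⟩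
  set v : ZMod ℓ → Fin n := fun i => if i.val = 0 then a₀ else x (s + i.val - 1) with hv
  set e : ZMod ℓ → Finset (Fin n) := fun i =>
    if i.val = 0 then Ein else if i.val = ℓ - 1 then Eout else pe H a₀ x (s + i.val - 1) with he
  have hvalbound : ∀ i : ZMod ℓ, i.val < ℓ := fun i => ZMod.val_lt i
  have hsucc : ∀ i : ZMod ℓ, (i + 1).val = (i.val + 1) % ℓ := by
    intro i
    rw [ZMod.val_add, ZMod.val_one]
  refine ⟨v, e, ?_, ?_, ?_, ?_⟩
  · -- v injective
    intro i j hij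
    simp only [hv] at hij
    by_cases hi : i.val = 0 <;> by_cases hj : j.val = 0
    · exact ZMod.val_injective ℓ (by omega)
    · rw [if_pos hi, if_neg hj] at hij
      exact absurd hij.symm (hva _ (by omega) (by have := hvalbound j; omega))
    · rw [if_neg hi, if_pos hj] at hij
      exact absurd hij (hva _ (by omega) (by have := hvalbound i; omega))
    · rw [if_neg hi, if_neg hj] at hij
      have : i.val = j.val := by
        by_contra hne
        rcases Nat.lt_or_ge i.val j.val with h | h
        · exact hvdist (s + i.val - 1) (s + j.val - 1) (by omega) (by omega)
            (by have := hvalbound j; omega) hij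
        · exact hvdist (s + j.val - 1) (s + i.val - 1) (by omega) (by omega)
            (by have := hvalbound i; omega) hij.symm
      exact ZMod.val_injective ℓ this
  · -- e injective
    intro i j hij
    simp only [he] at hij
    by_cases hi : i.val = 0 <;> by_cases hj : j.val = 0
    · exact ZMod.val_injective ℓ (by omega)
    · rw [if_pos hi, if_neg hj] at hij
      by_cases hj' : j.val = ℓ - 1
      · rw [if_pos hj'] at hij; exact absurd hij hEinOut
      · rw [if_neg hj'] at hij
        exact absurd hij (hEinP _ (by omega) (by have := hvalbound j; omega))
    · rw [if_neg hi, if_pos hj] at hij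
      by_cases hi' : i.val = ℓ - 1
      · rw [if_pos hi'] at hij; exact absurd hij.symm hEinOut
      · rw [if_neg hi'] at hij
        exact absurd hij.symm (hEinP _ (by omega) (by have := hvalbound i; omega))
    · rw [if_neg hi, if_neg hj] at hij
      by_cases hi' : i.val = ℓ - 1 <;> by_cases hj' : j.val = ℓ - 1
      · exact ZMod.val_injective ℓ (by omega)
      · rw [if_pos hi', if_neg hj'] at hij
        exact absurd hij (hEoutP _ (by omega) (by have := hvalbound j; omega))
      · rw [if_neg hi', if_pos hj'] at hij
        exact absurd hij.symm (hEoutP _ (by omega) (by have := hvalbound i; omega))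
      · rw [if_neg hi', if_neg hj'] at hij
        have : i.val = j.val := by
          by_contra hne
          rcases Nat.lt_or_ge i.val j.val with h | h
          · exact hpdist (s + i.val - 1) (s + j.val - 1) (by omega) (by omega)
              (by have := hvalbound j; omega) hij
          · exact hpdist (s + j.val - 1) (s + i.val - 1) (by omega) (by omega)
              (by have := hvalbound i; omega) hij.symm
        exact ZMod.val_injective ℓ this
  · -- membership in H
    intro i
    simp only [he]
    by_cases hi : i.val = 0
    · rw [if_pos hi]; exact hEinH
    · rw [if_neg hi]
      by_cases hi' : i.val = ℓ - 1
      · rw [if_pos hi']; exact hEoutH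
      · rw [if_neg hi']
        exact (hpH _ (by omega) (by have := hvalbound i; omega)).1
  · -- incidences
    intro i
    have hival := hvalbound i
    have hsucci := hsucc i
    by_cases hi : i.val = 0
    · have h1 : (i + 1).val = 1 := by rw [hsucci, hi]; exact Nat.mod_eq_of_lt (by omega)
      constructor
      · simp only [hv, he, if_pos hi]; exact hEin1
      · simp only [hv, he, if_pos hi, h1]
        rw [if_neg (by omega : ¬ (1:ℕ) = 0)]
        have hidx : s + 1 - 1 = s := by omega
        rw [hidx]
        exact hEin2
    · by_cases hi' : i.val = ℓ - 1
      · have h1 : (i + 1).val = 0 := by rw [hsucci, hi']; simp [Nat.sub_add_cancel (by omega : 1 ≤ ℓ)]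
        constructor
        · simp only [hv, he, if_neg hi, if_pos hi']
          convert hEout2 using 2
          omega
        · simp only [hv, he, if_neg hi, if_pos hi', h1]
          simpa using hEout1
      · have h1 : (i + 1).val = i.val + 1 := by rw [hsucci]; exact Nat.mod_eq_of_lt (by omega)
        have hfacts := hpH (s + i.val - 1) (by omega) (by omega)
        constructor
        · simp only [hv, he, if_neg hi, if_neg hi']
          exact hfacts.2.1
        · simp only [hv, he, if_neg hi, if_neg hi', h1]
          have h2 : ¬ (i.val + 1 = 0) := by omega
          rw [if_neg h2]
          convert hfacts.2.2 using 2
          omega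

lemma pe_facts {H : Finset (Finset (Fin n))} {Δ' : Finset (Fin n × Fin n × Fin n)}
    {a₀ : Fin n} {x : ℕ → Fin n} {j : ℕ}
    (hH3 : ∀ e ∈ H, 3 ≤ e.card)
    (hC : ∀ t ∈ Δ', ∃ e ∈ H, m1 e = t.2.1 ∧ m2 e = t.2.2)
    (hg : Good H Δ' a₀ x j) {i : ℕ} (h1 : 1 ≤ i) (h2 : i < j) :
    pe H a₀ x i ∈ H ∧ x i ∈ pe H a₀ x i ∧ x (i+1) ∈ pe H a₀ x i := by
  have ht := hg.2.2.1 i h1 h2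
  have hval := hC _ ht
  have hspec := repC_spec hval
  have hmem := hspec.1
  have hcard := hH3 _ hmem
  have hm1 : m1 (repC H (trip a₀ x i).2) ∈ repC H (trip a₀ x i).2 := m1_mem hcard
  have hm2 : m2 (repC H (trip a₀ x i).2) ∈ repC H (trip a₀ x i).2 := m2_mem hcard
  rw [hspec.2.1] at hm1
  rw [hspec.2.2] at hm2
  rw [pe]
  by_cases hodd : Odd i
  · have htt : trip a₀ x i = (a₀, x i, x (i+1)) := by rw [trip, if_pos hodd]
    rw [htt] at hm1 hm2 hmem ⊢
    exact ⟨hmem, hm1, hm2⟩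
  · have htt : trip a₀ x i = (a₀, x (i+1), x i) := by rw [trip, if_neg hodd]
    rw [htt] at hm1 hm2 hmem ⊢
    exact ⟨hmem, hm2, hm1⟩

lemma Re_facts {H : Finset (Finset (Fin n))} {Δ' : Finset (Fin n × Fin n × Fin n)}
    {a₀ : Fin n} {x : ℕ → Fin n} {j : ℕ}
    (hH3 : ∀ e ∈ H, 3 ≤ e.card)
    (hA : ∀ t ∈ Δ', ∃ e ∈ H, mn e = t.1 ∧ m1 e = t.2.1)
    (hB : ∀ t ∈ Δ', ∃ e ∈ H, mn e = t.1 ∧ m2 e = t.2.2)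
    (hg : Good H Δ' a₀ x j) {i : ℕ} (h1 : 1 ≤ i) (h2 : i ≤ j) :
    Re H a₀ x i ∈ H ∧ a₀ ∈ Re H a₀ x i ∧ x i ∈ Re H a₀ x i := by
  have hh := hg.2.2.2.1 i h1 h2
  by_cases hodd : Odd i
  · obtain ⟨t, htΔ, hteq⟩ := mem_image.mp (hh.1 hodd)
    rw [Prod.ext_iff] at hteq
    simp only at hteq
    have hval : ∃ e ∈ H, mn e = a₀ ∧ m1 e = x i := by
      obtain ⟨e, he, h1', h2'⟩ := hA _ htΔ
      exact ⟨e, he, by rw [h1', hteq.1], by rw [h2', hteq.2]⟩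
    have hspec := repA_spec (q := (a₀, x i)) hval
    have hcard := hH3 _ hspec.1
    have hm0 : mn (repA H (a₀, x i)) ∈ repA H (a₀, x i) := mn_mem (card_pos_of_three hcard)
    have hm1' : m1 (repA H (a₀, x i)) ∈ repA H (a₀, x i) := m1_mem hcard
    rw [hspec.2.1] at hm0
    rw [hspec.2.2] at hm1'
    rw [Re, if_pos hodd]
    exact ⟨hspec.1, hm0, hm1'⟩
  · obtain ⟨t, htΔ, hteq⟩ := mem_image.mp (hh.2 hodd)
    rw [Prod.ext_iff] at hteq
    simp only at hteq
    have hval : ∃ e ∈ H, mn e = a₀ ∧ m2 e = x i := by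
      obtain ⟨e, he, h1', h2'⟩ := hB _ htΔ
      exact ⟨e, he, by rw [h1', hteq.1], by rw [h2', hteq.2]⟩
    have hspec := repB_spec (q := (a₀, x i)) hval
    have hcard := hH3 _ hspec.1
    have hm0 : mn (repB H (a₀, x i)) ∈ repB H (a₀, x i) := mn_mem (card_pos_of_three hcard)
    have hm2' : m2 (repB H (a₀, x i)) ∈ repB H (a₀, x i) := m2_mem hcard
    rw [hspec.2.1] at hm0
    rw [hspec.2.2] at hm2'
    rw [Re, if_neg hodd]
    exact ⟨hspec.1, hm0, hm2'⟩

theorem spread_cycle {H : Finset (Finset (Fin n))} {Δ' : Finset (Fin n × Fin n × Fin n)}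
    {D ℓ : ℕ}
    (hH3 : ∀ e ∈ H, 3 ≤ e.card)
    (hA : ∀ t ∈ Δ', ∃ e ∈ H, mn e = t.1 ∧ m1 e = t.2.1)
    (hB : ∀ t ∈ Δ', ∃ e ∈ H, mn e = t.1 ∧ m2 e = t.2.2)
    (hC : ∀ t ∈ Δ', ∃ e ∈ H, m1 e = t.2.1 ∧ m2 e = t.2.2)
    (hdist : ∀ t ∈ Δ', t.1 ≠ t.2.1)
    (hl : 3 ≤ ℓ) (hD : 10 * ℓ + 10 ≤ D)
    (hsp : Spread' D Δ') (hne : Δ'.Nonempty) : IsBergeCycle H ℓ := by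
  classical
  obtain ⟨t₀, ht₀⟩ := hne
  set a₀ := t₀.1 with ha₀
  -- base path
  have hbase : Good H Δ' a₀ (fun _ => t₀.2.1) 1 := by
    refine ⟨?_, ?_, ?_, ?_, ?_, ?_, ?_⟩
    · intro i _ _; exact (hdist t₀ ht₀).symm
    · intro i k h1 h2 h3; omega
    · intro i h1 h2; omega
    · intro i h1 h2
      have hi : i = 1 := by omega
      subst hi
      constructor
      · intro _; exact mem_image.mpr ⟨t₀, ht₀, rfl⟩
      · intro hno; exact absurd odd_one hno
    · intro i k h1 h2 h3; omega
    · intro i k h1 h2 h3; omega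
    · intro i k h1 h2 h3 h4 h5; omega
  -- build the path up to length 2ℓ
  have hbuild : ∀ j, 1 ≤ j → j ≤ 2 * ℓ → ∃ x : ℕ → Fin n, Good H Δ' a₀ x j := by
    intro j
    induction j with
    | zero => intro h; omega
    | succ k IH =>
      intro hk1 hkL
      rcases Nat.eq_or_lt_of_le hk1 with h1 | h1
      · exact ⟨_, h1 ▸ hbase⟩
      · obtain ⟨x, hx⟩ := IH (by omega) (by omega)
        obtain ⟨x', _, hx'⟩ := extend_step hB hC hA hsp (L := 2 * ℓ) (by omega)
          (by omega) (by omega) hx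
        exact ⟨x', hx'⟩
  obtain ⟨x, hg⟩ := hbuild (2 * ℓ) (by omega) le_rfl
  have g1 := hg.1
  have g2 := hg.2.1
  have g5 := hg.2.2.2.2.1
  have g6 := hg.2.2.2.2.2.1
  have g7 := hg.2.2.2.2.2.2
  by_cases hfail : ∀ j, ℓ - 1 ≤ j → j ≤ 2*ℓ - 1 → Re H a₀ x j = pe H a₀ x (j-1)
  · -- all slots fail: fan-path cycle on window [ℓ, 2ℓ-2]
    have hEin := hfail ℓ (by omega) (by omega)
    have hEout := hfail (2*ℓ-1) (by omega) (by omega)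
    have hidx1 : ℓ - 1 = ℓ - 1 := rfl
    have RFin := Re_facts hH3 hA hB hg (i := ℓ) (by omega) (by omega)
    have RFout := Re_facts hH3 hA hB hg (i := 2*ℓ-1) (by omega) (by omega)
    have PFout := pe_facts hH3 hC hg (i := 2*ℓ-2) (by omega) (by omega)
    refine assemble (s := ℓ) hl (by omega) RFin.1 RFout.1 RFin.2.1 RFin.2.2 RFout.2.1 ?_
      ?_ ?_ ?_ ?_ ?_ ?_ ?_
    · -- x (ℓ + ℓ - 2) ∈ Eout = pe (2ℓ-2)
      have heq : ℓ + ℓ - 2 = (2*ℓ-2) := by omega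
      rw [heq, hEout]
      have heq2 : 2*ℓ-1-1 = 2*ℓ-2 := by omega
      rw [heq2]
      exact PFout.2.1
    · intro k hk1 hk2
      exact pe_facts hH3 hC hg (by omega) (by omega)
    · intro i k h1 h2 h3
      exact g2 i k (by omega) h2 (by omega)
    · intro i h1 h2
      exact g1 i (by omega) (by omega)
    · intro i k h1 h2 h3
      exact g5 i k (by omega) h2 (by omega)
    · intro k h1 h2
      rw [hEin]
      have heq : ℓ - 1 = ℓ - 1 := rfl
      exact g5 (ℓ-1) k (by omega) (by omega) (by omega)
    · intro k h1 h2
      rw [hEout]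
      have heq2 : 2*ℓ-1-1 = 2*ℓ-2 := by omega
      rw [heq2]
      exact (g5 k (2*ℓ-2) (by omega) (by omega) (by omega)).symm
    · rw [hEin, hEout]
      have heq2 : 2*ℓ-1-1 = 2*ℓ-2 := by omega
      rw [heq2]
      exact g5 (ℓ-1) (2*ℓ-2) (by omega) (by omega) (by omega)
  · -- some slot j does not fail: standard window cycle ending at j
    push_neg at hfail
    obtain ⟨j, hj1, hj2, hjne⟩ := hfail
    obtain ⟨s, hs⟩ : ∃ s, s + ℓ = j + 2 := ⟨j + 2 - ℓ, by omega⟩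
    have hs1 : 1 ≤ s := by omega
    have hswin : s + ℓ - 2 = j := by omega
    have RFin := Re_facts hH3 hA hB hg (i := s) (by omega) (by omega)
    have RFout := Re_facts hH3 hA hB hg (i := j) (by omega) (by omega)
    refine assemble (s := s) hl hs1 RFin.1 RFout.1 RFin.2.1 RFin.2.2 RFout.2.1 ?_
      ?_ ?_ ?_ ?_ ?_ ?_ ?_
    · rw [hswin]; exact RFout.2.2
    · intro k hk1 hk2
      exact pe_facts hH3 hC hg (by omega) (by omega)
    · intro i k h1 h2 h3
      exact g2 i k (by omega) h2 (by omega)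
    · intro i h1 h2
      exact g1 i (by omega) (by omega)
    · intro i k h1 h2 h3
      exact g5 i k (by omega) h2 (by omega)
    · intro k h1 h2
      exact g7 s k (by omega) (by omega) (by omega) (by omega) (by omega)
    · intro k h1 h2
      by_cases hk : k = j - 1
      · rw [hk]; exact hjne
      · exact g7 j k (by omega) (by omega) (by omega) (by omega) (by omega)
    · exact g6 s j (by omega) (by omega) (by omega)

open scoped Classical in
/-- the set of "fake" candidate edges relative to H -/
noncomputable def Fk (H : Finset (Finset (Fin n))) (r : ℕ) : Finset (Finset (Fin n)) :=
  Finset.univ.filter (fun f => f.card = r ∧ f ∉ H ∧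
    (∃ e ∈ H, sh1 e = sh1 f) ∧ (∃ e ∈ H, sh2 e = sh2 f) ∧ (∃ e ∈ H, sh3 e = sh3 f))

/-- Lemma F : in a Berge-ℓ-cycle-free r-uniform hypergraph, fakes are few -/
theorem fake_bound {H : Finset (Finset (Fin n))} {r ℓ : ℕ}
    (huni : ∀ e ∈ H, e.card = r) (hr : 3 ≤ r) (hl : 3 ≤ ℓ)
    (hnb : ¬ IsBergeCycle H ℓ) :
    (Fk H r).card ≤ (30 * ℓ + 30) * H.card := by
  classical
  set D := 10 * ℓ + 10 with hD
  have hH3 : ∀ e ∈ H, 3 ≤ e.card := fun e he => by rw [huni e he]; exact hr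
  -- fiberwise decomposition by tail3
  set W := (Fk H r).image tail3 with hW
  have hfib : (Fk H r).card = ∑ w ∈ W, ((Fk H r).filter (fun f => tail3 f = w)).card :=
    card_eq_sum_card_fiberwise (fun f hf => mem_image_of_mem _ hf)
  -- per-stratum bound
  have hstrat : ∀ w ∈ W, ((Fk H r).filter (fun f => tail3 f = w)).card ≤
      3 * D * (H.filter (fun e => tail3 e = w)).card := by
    intro w hw
    set Hw := H.filter (fun e => tail3 e = w) with hHw
    set Aw := Hw.image (fun e => (mn e, m1 e)) with hAw
    set Bw := Hw.image (fun e => (mn e, m2 e)) with hBw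
    set Cw := Hw.image (fun e => (m1 e, m2 e)) with hCw
    set Δw := Finset.univ.filter (fun t : Fin n × Fin n × Fin n =>
      (t.1, t.2.1) ∈ Aw ∧ (t.1, t.2.2) ∈ Bw ∧ (t.2.1, t.2.2) ∈ Cw) with hΔw
    -- injection of stratum fakes into Δw
    have hinj : ((Fk H r).filter (fun f => tail3 f = w)).card ≤ Δw.card := by
      apply card_le_card_of_injOn (fun f => (mn f, m1 f, m2 f))
      · intro f hf
        rw [mem_coe, mem_filter] at hf
        obtain ⟨hfk, hftail⟩ := hf
        rw [Fk, mem_filter] at hfk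
        obtain ⟨-, hcard, hnot, ⟨e1, he1, hsh1⟩, ⟨e2, he2, hsh2⟩, ⟨e3, he3, hsh3⟩⟩ := hfk
        have hf3 : 3 ≤ f.card := by omega
        have p1 := pins_of_sh1_eq hsh1
        have p2 := pins_of_sh2_eq (by rw [huni e2 he2]; exact hr) hf3 hsh2
        have p3 := pins_of_sh3_eq (by rw [huni e3 he3]; exact hr) hf3 hsh3
        rw [mem_coe, hΔw, mem_filter]
        refine ⟨mem_univ _, ?_, ?_, ?_⟩
        · -- (mn f, m1 f) ∈ Aw via e3
          refine mem_image.mpr ⟨e3, ?_, ?_⟩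
          · rw [hHw, mem_filter]; exact ⟨he3, by rw [p3.2.2, hftail]⟩
          · rw [p3.1, p3.2.1]
        · refine mem_image.mpr ⟨e2, ?_, ?_⟩
          · rw [hHw, mem_filter]; exact ⟨he2, by rw [p2.2.2, hftail]⟩
          · rw [p2.1, p2.2.1]
        · refine mem_image.mpr ⟨e1, ?_, ?_⟩
          · rw [hHw, mem_filter]; exact ⟨he1, by rw [p1.2.2, hftail]⟩
          · rw [p1.1, p1.2.1]
      · intro f hf f' hf' heq
        rw [mem_coe, mem_filter] at hf hf'
        have hfk1 := hf.1
        have hfk2 := hf'.1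
        rw [Fk, mem_filter] at hfk1 hfk2
        have hc : 3 ≤ f.card := by have := hfk1.2.1; omega
        have hc' : 3 ≤ f'.card := by have := hfk2.2.1; omega
        rw [Prod.ext_iff, Prod.ext_iff] at heq
        simp only at heq
        rw [← recon hc, ← recon hc', heq.1, heq.2.1, heq.2.2, hf.2, hf'.2]
    -- bound Δw.card via deletion/spread dichotomy
    have hΔbound : Δw.card ≤ D * 3 * Hw.card := by
      rcases deletion (fun t : Fin n × Fin n × Fin n => (t.1, t.2.1))
        (fun t : Fin n × Fin n × Fin n => (t.1, t.2.2))
        (fun t : Fin n × Fin n × Fin n => t.2) D Δw with hb | ⟨Δ'', hsub, hne, hsp⟩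
      · -- projections are inside the pin sets
        have h12 : (Δw.image (fun t : Fin n × Fin n × Fin n => (t.1, t.2.1))).card ≤ Hw.card := by
          calc _ ≤ Aw.card := card_le_card (by
              intro q hq
              obtain ⟨t, ht, rfl⟩ := mem_image.mp hq
              exact ((mem_filter.mp ht).2).1)
            _ ≤ Hw.card := card_image_le
        have h13 : (Δw.image (fun t : Fin n × Fin n × Fin n => (t.1, t.2.2))).card ≤ Hw.card := by
          calc _ ≤ Bw.card := card_le_card (by
              intro q hq
              obtain ⟨t, ht, rfl⟩ := mem_image.mp hq
              exact ((mem_filter.mp ht).2).2.1)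
            _ ≤ Hw.card := card_image_le
        have h23 : (Δw.image (fun t : Fin n × Fin n × Fin n => t.2)).card ≤ Hw.card := by
          calc _ ≤ Cw.card := card_le_card (by
              intro q hq
              obtain ⟨t, ht, rfl⟩ := mem_image.mp hq
              exact ((mem_filter.mp ht).2).2.2)
            _ ≤ Hw.card := card_image_le
        calc Δw.card ≤ D * ((Δw.image (fun t : Fin n × Fin n × Fin n => (t.1, t.2.1))).card
              + (Δw.image (fun t : Fin n × Fin n × Fin n => (t.1, t.2.2))).card
              + (Δw.image (fun t : Fin n × Fin n × Fin n => t.2)).card) := hb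
          _ ≤ D * (Hw.card + Hw.card + Hw.card) := Nat.mul_le_mul_left D (by omega)
          _ = D * 3 * Hw.card := by ring
      · -- spread branch: build a Berge cycle, contradiction
        exfalso
        apply hnb
        have hwit : ∀ t ∈ Δ'', t ∈ Δw := fun t ht => hsub ht
        refine spread_cycle (D := D) hH3 ?_ ?_ ?_ ?_ hl (by omega) hsp hne
        · intro t ht
          obtain ⟨e, he, heq⟩ := mem_image.mp ((mem_filter.mp (hwit t ht)).2).1
          rw [Prod.ext_iff] at heq
          simp only at heq
          exact ⟨e, (mem_filter.mp he).1, heq.1, heq.2⟩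
        · intro t ht
          obtain ⟨e, he, heq⟩ := mem_image.mp ((mem_filter.mp (hwit t ht)).2).2.1
          rw [Prod.ext_iff] at heq
          simp only at heq
          exact ⟨e, (mem_filter.mp he).1, heq.1, heq.2⟩
        · intro t ht
          obtain ⟨e, he, heq⟩ := mem_image.mp ((mem_filter.mp (hwit t ht)).2).2.2
          rw [Prod.ext_iff] at heq
          simp only at heq
          exact ⟨e, (mem_filter.mp he).1, heq.1, heq.2⟩
        · intro t ht
          obtain ⟨e, he, heq⟩ := mem_image.mp ((mem_filter.mp (hwit t ht)).2).1
          rw [Prod.ext_iff] at heq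
          simp only at heq
          rw [← heq.1, ← heq.2]
          have h3 : 3 ≤ e.card := hH3 e (mem_filter.mp he).1
          exact (m1_ne_mn h3).symm
    calc ((Fk H r).filter (fun f => tail3 f = w)).card ≤ Δw.card := hinj
      _ ≤ D * 3 * Hw.card := hΔbound
      _ = 3 * D * Hw.card := by ring
  -- sum the strata
  have hsum : ∑ w ∈ W, (H.filter (fun e => tail3 e = w)).card ≤ H.card := by
    have hself : (H.filter (fun e => tail3 e ∈ W)).card =
        ∑ w ∈ W, ((H.filter (fun e => tail3 e ∈ W)).filter (fun e => tail3 e = w)).card :=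
      card_eq_sum_card_fiberwise (fun e he => (mem_filter.mp he).2)
    have heqfib : ∀ w ∈ W, ((H.filter (fun e => tail3 e ∈ W)).filter (fun e => tail3 e = w))
        = H.filter (fun e => tail3 e = w) := by
      intro w hw
      ext e
      simp only [mem_filter]
      constructor
      · rintro ⟨⟨he, -⟩, ht⟩; exact ⟨he, ht⟩
      · rintro ⟨he, ht⟩; exact ⟨⟨he, ht ▸ hw⟩, ht⟩
    calc ∑ w ∈ W, (H.filter (fun e => tail3 e = w)).card
        = ∑ w ∈ W, ((H.filter (fun e => tail3 e ∈ W)).filter (fun e => tail3 e = w)).card := by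
          refine Finset.sum_congr rfl ?_
          intro w hw; rw [heqfib w hw]
      _ = (H.filter (fun e => tail3 e ∈ W)).card := hself.symm
      _ ≤ H.card := card_filter_le _ _
  calc (Fk H r).card = ∑ w ∈ W, ((Fk H r).filter (fun f => tail3 f = w)).card := hfib
    _ ≤ ∑ w ∈ W, 3 * D * (H.filter (fun e => tail3 e = w)).card :=
        Finset.sum_le_sum hstrat
    _ = 3 * D * ∑ w ∈ W, (H.filter (fun e => tail3 e = w)).card := by
        rw [Finset.mul_sum]
    _ ≤ 3 * D * H.card := Nat.mul_le_mul_left _ hsum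
    _ = (30 * ℓ + 30) * H.card := by rw [hD]; ring

end Main


lemma berge_mono {V : Type*} {H H' : Finset (Finset V)} (hsub : H ⊆ H') {p : ℕ}
    (h : IsBergeCycle H p) : IsBergeCycle H' p := by
  obtain ⟨v, e, hv, he, hmem, hcond⟩ := h
  exact ⟨v, e, hv, he, fun i => hsub (hmem i), hcond⟩
lemma berge_lift {V : Type*} [DecidableEq V] {H : Finset (Finset V)}
    {φ : Finset V → Finset V} (hφ : ∀ e ∈ H, φ e ⊆ e) {p : ℕ}
    (h : IsBergeCycle (H.image φ) p) : IsBergeCycle H p := by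
  classical
  obtain ⟨v, s, hv, hs, hmem, hcond⟩ := h
  set ε : Finset V → Finset V := fun g => if h : ∃ e ∈ H, φ e = g then h.choose else ∅ with hε
  have key : ∀ g ∈ H.image φ, ε g ∈ H ∧ φ (ε g) = g := by
    intro g hg
    rw [mem_image] at hg
    obtain ⟨e, he, hfe⟩ := hg
    have hex : ∃ e ∈ H, φ e = g := ⟨e, he, hfe⟩
    simp only [hε, dif_pos hex]
    exact ⟨hex.choose_spec.1, hex.choose_spec.2⟩
  refine ⟨v, fun i => ε (s i), hv, ?_, ?_, ?_⟩
  · intro i j hij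
    apply hs
    have h1 := (key _ (hmem i)).2
    have h2 := (key _ (hmem j)).2
    simp only at hij
    rw [← h1, ← h2, hij]
  · intro i; exact (key _ (hmem i)).1
  · intro i
    have h1 : s i ⊆ ε (s i) := by
      have := (key _ (hmem i)).2
      conv_lhs => rw [← this]
      exact hφ _ (key _ (hmem i)).1
    exact ⟨h1 (hcond i).1, h1 (hcond i).2⟩


end Stmt8

open Stmt8 Finset

theorem stmt8 (ℓ r : ℕ) (hℓ : 3 ≤ ℓ) (hr : 3 ≤ r) :
    ∃ c : ℕ, ∀ m n : ℕ, 1 ≤ m → 1 ≤ n →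
      NleBerge r n m ℓ ≤ 2 ^ (c * m) * NleBerge (r - 1) n m ℓ ^ r := by
  classical
  refine ⟨30 * ℓ + 31, ?_⟩
  intro m n hm hn
  haveI : NeZero n := ⟨by omega⟩
  set c := 30 * ℓ + 31 with hc
  set S : Finset (Finset (Finset (Fin n))) := Finset.univ.filter
    (fun H => (∀ e ∈ H, e.card = r) ∧ H.card ≤ m ∧ ¬ IsBergeCycle H ℓ) with hS
  set Bf : Finset (Finset (Finset (Fin n))) := Finset.univ.filter
    (fun H => (∀ e ∈ H, e.card = r - 1) ∧ H.card ≤ m ∧ ¬ IsBergeCycle H ℓ) with hBf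
  have hNL : NleBerge r n m ℓ = S.card := by
    rw [NleBerge]
    have hset : {H : Finset (Finset (Fin n)) |
        (∀ e ∈ H, e.card = r) ∧ H.card ≤ m ∧ ¬ IsBergeCycle H ℓ} = ↑S := by
      ext H; simp [hS]
    rw [hset, Set.ncard_coe_finset]
  have hNR : NleBerge (r - 1) n m ℓ = Bf.card := by
    rw [NleBerge]
    have hset : {H : Finset (Finset (Fin n)) |
        (∀ e ∈ H, e.card = r - 1) ∧ H.card ≤ m ∧ ¬ IsBergeCycle H ℓ} = ↑Bf := by
      ext H; simp [hBf]
    rw [hset, Set.ncard_coe_finset]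
  set τ : Finset (Finset (Fin n)) →
      Finset (Finset (Fin n)) × Finset (Finset (Fin n)) × Finset (Finset (Fin n)) :=
    fun H => (H.image sh1, H.image sh2, H.image sh3) with hτ
  -- fiber bound
  have hfiber : ∀ q ∈ S.image τ, (S.filter (fun H => τ H = q)).card ≤ 2 ^ (c * m) := by
    intro q hq
    obtain ⟨H₀, hH₀S, hH₀q⟩ := mem_image.mp hq
    have hP₀ := (mem_filter.mp hH₀S).2
    have hfk : (Fk H₀ r).card ≤ (30 * ℓ + 30) * H₀.card :=
      fake_bound hP₀.1 hr hℓ hP₀.2.2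
    have hCand : (H₀ ∪ Fk H₀ r).card ≤ c * m := by
      calc (H₀ ∪ Fk H₀ r).card ≤ H₀.card + (Fk H₀ r).card := card_union_le _ _
        _ ≤ m + (30 * ℓ + 30) * m := by
            have h1 := hP₀.2.1
            have h2 : (30 * ℓ + 30) * H₀.card ≤ (30 * ℓ + 30) * m :=
              Nat.mul_le_mul_left _ h1
            omega
        _ = c * m := by rw [hc]; ring
    have hsubpow : S.filter (fun H => τ H = q) ⊆ (H₀ ∪ Fk H₀ r).powerset := by
      intro H' hH'
      rw [mem_filter] at hH'
      obtain ⟨hH'S, hH'q⟩ := hH'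
      have hP' := (mem_filter.mp hH'S).2
      rw [mem_powerset]
      intro f hf
      by_cases hf0 : f ∈ H₀
      · exact mem_union_left _ hf0
      · refine mem_union_right _ ?_
        have hττ : τ H' = τ H₀ := by rw [hH'q, hH₀q]
        rw [hτ, Prod.ext_iff, Prod.ext_iff] at hττ
        simp only at hττ
        rw [Fk, mem_filter]
        refine ⟨mem_univ _, hP'.1 f hf, hf0, ?_, ?_, ?_⟩
        · have : sh1 f ∈ H₀.image sh1 := by
            rw [← hττ.1]; exact mem_image_of_mem _ hf
          obtain ⟨e, he, heq⟩ := mem_image.mp this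
          exact ⟨e, he, heq⟩
        · have : sh2 f ∈ H₀.image sh2 := by
            rw [← hττ.2.1]; exact mem_image_of_mem _ hf
          obtain ⟨e, he, heq⟩ := mem_image.mp this
          exact ⟨e, he, heq⟩
        · have : sh3 f ∈ H₀.image sh3 := by
            rw [← hττ.2.2]; exact mem_image_of_mem _ hf
          obtain ⟨e, he, heq⟩ := mem_image.mp this
          exact ⟨e, he, heq⟩
    calc (S.filter (fun H => τ H = q)).card ≤ (H₀ ∪ Fk H₀ r).powerset.card :=
        card_le_card hsubpow
      _ = 2 ^ (H₀ ∪ Fk H₀ r).card := card_powerset _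
      _ ≤ 2 ^ (c * m) := Nat.pow_le_pow_right (by omega) hCand
  have hmain : S.card ≤ 2 ^ (c * m) * (S.image τ).card :=
    card_le_mul_card_image S (2 ^ (c * m)) hfiber
  -- image lands in Bf³
  have himg : S.image τ ⊆ Bf ×ˢ (Bf ×ˢ Bf) := by
    intro q hq
    obtain ⟨H, hHS, rfl⟩ := mem_image.mp hq
    have hP := (mem_filter.mp hHS).2
    have hH3 : ∀ e ∈ H, 3 ≤ e.card := fun e he => by rw [hP.1 e he]; exact hr
    have hshadow : ∀ (φ : Finset (Fin n) → Finset (Fin n)),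
        (∀ e ∈ H, φ e ⊆ e) → (∀ e ∈ H, (φ e).card = r - 1) → H.image φ ∈ Bf := by
      intro φ hsub hcard
      rw [hBf, mem_filter]
      refine ⟨mem_univ _, ?_, ?_, ?_⟩
      · intro s hs
        obtain ⟨e, he, rfl⟩ := mem_image.mp hs
        exact hcard e he
      · exact le_trans card_image_le hP.2.1
      · intro hcyc
        exact hP.2.2 (berge_lift hsub hcyc)
    rw [hτ, mem_product, mem_product]
    simp only
    refine ⟨?_, ?_, ?_⟩
    · refine hshadow sh1 (fun e he => erase_subset _ _) (fun e he => ?_)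
      rw [sh1, card_erase_of_mem (mn_mem (card_pos_of_three (hH3 e he))), hP.1 e he]
    · refine hshadow sh2 (fun e he => erase_subset _ _) (fun e he => ?_)
      rw [sh2, card_erase_of_mem (m1_mem (hH3 e he)), hP.1 e he]
    · refine hshadow sh3 (fun e he => erase_subset _ _) (fun e he => ?_)
      rw [sh3, card_erase_of_mem (m2_mem (hH3 e he)), hP.1 e he]
  have himgcard : (S.image τ).card ≤ Bf.card ^ 3 := by
    calc (S.image τ).card ≤ (Bf ×ˢ (Bf ×ˢ Bf)).card := card_le_card himg
      _ = Bf.card * (Bf.card * Bf.card) := by rw [card_product, card_product]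
      _ = Bf.card ^ 3 := by ring
  have hBfpos : 1 ≤ Bf.card := by
    rw [hBf]
    refine card_pos.mpr ⟨∅, ?_⟩
    rw [mem_filter]
    refine ⟨mem_univ _, fun e he => absurd he (notMem_empty e), by simp, ?_⟩
    rintro ⟨v, e, -, -, hmem, -⟩
    exact notMem_empty _ (hmem 0)
  have hpow : Bf.card ^ 3 ≤ Bf.card ^ r := Nat.pow_le_pow_right hBfpos hr
  calc NleBerge r n m ℓ = S.card := hNL
    _ ≤ 2 ^ (c * m) * (S.image τ).card := hmain
    _ ≤ 2 ^ (c * m) * Bf.card ^ 3 := Nat.mul_le_mul_left _ himgcard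
    _ ≤ 2 ^ (c * m) * Bf.card ^ r := Nat.mul_le_mul_left _ hpow
    _ = 2 ^ (c * m) * NleBerge (r - 1) n m ℓ ^ r := by rw [hNR]
end

section
/- Let F be an r-uniform Berge cycle of length p with 2 ≤ p ≤ ℓ, and let χ : V(F) → V(F') be a local isomorphism from F to an r-uniform hypergraph F'. Then F' contains a Berge cycle of length at most ℓ (i.e., F' has girth at most ℓ). -/
/-- From a closed walk of length `q ≥ 2` (consecutive vertices distinct, consecutive
edges distinct) one can extract a Berge cycle of length between `2` and `q`. -/
theorem key_walk {W : Type*} [DecidableEq W] (F' : Finset (Finset W)) :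
    ∀ q, 2 ≤ q → ∀ (u : ℕ → W) (f : ℕ → Finset W),
      (∀ k, k < q → f k ∈ F') →
      (∀ k, k < q → u k ∈ f k) →
      (∀ k, k + 1 < q → u (k + 1) ∈ f k) →
      u 0 ∈ f (q - 1) →
      (∀ k, k + 1 < q → u (k + 1) ≠ u k) →
      (∀ k, k + 1 < q → f (k + 1) ≠ f k) →
      ∃ q', 2 ≤ q' ∧ q' ≤ q ∧ IsBergeCycle F' q' := by
  intro q
  induction q using Nat.strong_induction_on with
  | _ q ih =>
  intro hq u f hfF huf hun hw hune hfne
  by_cases hrepf : ∃ i j, i < j ∧ j < q ∧ f i = f j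
  · -- a repeated edge: shortcut
    obtain ⟨i, j, hij, hjq, hf⟩ := hrepf
    have hd2 : i + 2 ≤ j := by
      by_contra h
      have hj : j = i + 1 := by omega
      exact hfne i (by omega) (hj ▸ hf.symm)
    obtain ⟨q', h1, h2, h3⟩ := ih (j - i) (by omega) (by omega)
      (fun k => u (i + 1 + k)) (fun k => f (i + 1 + k))
      (fun k hk => hfF _ (by omega))
      (fun k hk => huf _ (by omega))
      (fun k hk => by
        have h' : i + 1 + (k + 1) = (i + 1 + k) + 1 := by omega
        simp only [h']; exact hun _ (by omega))
      (by
        have e1 : i + 1 + 0 = i + 1 := by omega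
        have e2 : i + 1 + (j - i - 1) = j := by omega
        simp only [e1, e2, ← hf]
        exact hun i (by omega))
      (fun k hk => by
        have h' : i + 1 + (k + 1) = (i + 1 + k) + 1 := by omega
        simp only [h']; exact hune _ (by omega))
      (fun k hk => by
        have h' : i + 1 + (k + 1) = (i + 1 + k) + 1 := by omega
        simp only [h']; exact hfne _ (by omega))
    exact ⟨q', h1, by omega, h3⟩
  · by_cases hrepu : ∃ i j, i < j ∧ j < q ∧ u i = u j
    · -- a repeated vertex: shortcut
      obtain ⟨i, j, hij, hjq, hu⟩ := hrepu
      have hd2 : i + 2 ≤ j := by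
        by_contra h
        have hj : j = i + 1 := by omega
        exact hune i (by omega) (hj ▸ hu.symm)
      obtain ⟨q', h1, h2, h3⟩ := ih (j - i) (by omega) (by omega)
        (fun k => u (i + k)) (fun k => f (i + k))
        (fun k hk => hfF _ (by omega))
        (fun k hk => huf _ (by omega))
        (fun k hk => by
          have h' : i + (k + 1) = (i + k) + 1 := by omega
          simp only [h']; exact hun _ (by omega))
        (by
          have e1 : i + 0 = i := by omega
          have e2 : i + (j - i - 1) = j - 1 := by omega
          simp only [e1, e2, hu]
          have h3 := hun (j - 1) (by omega)
          have e4 : j - 1 + 1 = j := by omega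
          rw [e4] at h3
          exact h3)
        (fun k hk => by
          have h' : i + (k + 1) = (i + k) + 1 := by omega
          simp only [h']; exact hune _ (by omega))
        (fun k hk => by
          have h' : i + (k + 1) = (i + k) + 1 := by omega
          simp only [h']; exact hfne _ (by omega))
      exact ⟨q', h1, by omega, h3⟩
    · -- no repeats: the walk itself is a Berge q-cycle
      push_neg at hrepf hrepu
      have hfinj : ∀ a b, a < q → b < q → f a = f b → a = b := by
        intro a b ha hb hab
        by_contra hne
        rcases Nat.lt_or_ge a b with h | h
        · exact hrepf a b h hb hab
        · exact hrepf b a (by omega) ha hab.symm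
      have huinj : ∀ a b, a < q → b < q → u a = u b → a = b := by
        intro a b ha hb hab
        by_contra hne
        rcases Nat.lt_or_ge a b with h | h
        · exact hrepu a b h hb hab
        · exact hrepu b a (by omega) ha hab.symm
      refine ⟨q, hq, le_refl q, ?_⟩
      haveI : NeZero q := ⟨by omega⟩
      haveI : Fact (1 < q) := ⟨by omega⟩
      refine ⟨fun k => u k.val, fun k => f k.val, ?_, ?_, ?_, ?_⟩
      · intro a b hab
        exact ZMod.val_injective q (huinj _ _ (ZMod.val_lt a) (ZMod.val_lt b) hab)
      · intro a b hab
        exact ZMod.val_injective q (hfinj _ _ (ZMod.val_lt a) (ZMod.val_lt b) hab)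
      · intro i; exact hfF _ (ZMod.val_lt i)
      · intro i
        refine ⟨huf _ (ZMod.val_lt i), ?_⟩
        show u (i + 1).val ∈ f i.val
        have hv : (i + 1).val = (i.val + 1) % q := by
          rw [ZMod.val_add, ZMod.val_one]
        rcases Nat.lt_or_ge (i.val + 1) q with h | h
        · simp only [hv, Nat.mod_eq_of_lt h]
          exact hun _ h
        · have h1 : i.val = q - 1 := by have := ZMod.val_lt i; omega
          have h2 : (i + 1).val = 0 := by
            rw [hv]
            have h3 : i.val + 1 = q := by omega
            rw [h3, Nat.mod_self]
          rw [h2, h1]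
          exact hw

/-- If `F` is an `r`-uniform Berge `p`-cycle with `2 ≤ p ≤ ℓ` and `χ` is a local isomorphism
from `F` to the `r`-uniform hypergraph `F'`, then `F'` has girth at most `ℓ`. -/
theorem stmt10 {V W : Type*} [DecidableEq V] [DecidableEq W]
    (F : Finset (Finset V)) (F' : Finset (Finset W)) (r ℓ p : ℕ)
    (hr : 2 ≤ r) (hp2 : 2 ≤ p) (hpℓ : p ≤ ℓ)
    (hrF : ∀ e ∈ F, e.card = r) (hrF' : ∀ e ∈ F', e.card = r)
    -- F is exactly a Berge p-cycle with vertices v and hyperedges e: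
    (v : ZMod p → V) (e : ZMod p → Finset V)
    (hv : Function.Injective v) (he : Function.Injective e)
    (hF : ∀ s, s ∈ F ↔ ∃ i : ZMod p, s = e i)
    (hmem : ∀ i : ZMod p, v i ∈ e i ∧ v (i + 1) ∈ e i)
    -- χ is a local isomorphism from F to F':
    (χ : V → W)
    (hhom : ∀ f ∈ F, f.image χ ∈ F')
    (hloc : ∀ f ∈ F, ∀ g ∈ F, f ≠ g → (f ∩ g).Nonempty → f.image χ ≠ g.image χ) :
    ∃ q, 2 ≤ q ∧ q ≤ ℓ ∧ IsBergeCycle F' q := by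
  haveI : NeZero p := ⟨by omega⟩
  haveI : Fact (1 < p) := ⟨by omega⟩
  have heF : ∀ i : ZMod p, e i ∈ F := fun i => (hF _).2 ⟨i, rfl⟩
  -- χ is injective on each hyperedge of F
  have hinj : ∀ i : ZMod p, Set.InjOn χ (e i) := by
    intro i
    have h1 : (e i).image χ ∈ F' := hhom _ (heF i)
    have h2 : ((e i).image χ).card = (e i).card := by
      rw [hrF' _ h1, hrF _ (heF i)]
    exact Finset.card_image_iff.mp h2
  have hne1 : ∀ i : ZMod p, i + 1 ≠ i := by
    intro i h
    have : (1 : ZMod p) = 0 := by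
      have := add_eq_left.mp h
      exact this
    exact one_ne_zero this
  -- consecutive image edges are distinct
  have hEne : ∀ i : ZMod p, (e (i + 1)).image χ ≠ (e i).image χ := by
    intro i
    refine hloc _ (heF (i + 1)) _ (heF i) (fun h => hne1 i (he h)) ?_
    exact ⟨v (i + 1), Finset.mem_inter.mpr ⟨(hmem (i + 1)).1, (hmem i).2⟩⟩
  -- consecutive image vertices are distinct
  have hwne : ∀ i : ZMod p, χ (v (i + 1)) ≠ χ (v i) := by
    intro i h
    exact hne1 i (hv ((hinj i) (Finset.mem_coe.mpr (hmem i).2)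
      (Finset.mem_coe.mpr (hmem i).1) h))
  have hcast : ∀ k : ℕ, ((k + 1 : ℕ) : ZMod p) = (k : ZMod p) + 1 := by
    intro k; push_cast; ring
  have hlast : ((p - 1 : ℕ) : ZMod p) = -1 := by
    have h1 : ((p - 1 : ℕ) : ZMod p) = (p : ZMod p) - 1 := by
      rw [Nat.cast_sub (by omega : 1 ≤ p)]; norm_num
    rw [h1, ZMod.natCast_self]; ring
  obtain ⟨q, hq1, hq2, hq3⟩ := key_walk F' p hp2
    (fun k => χ (v (k : ZMod p))) (fun k => (e ((k : ZMod p))).image χ)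
    (fun k _ => hhom _ (heF _))
    (fun k _ => Finset.mem_image_of_mem χ (hmem _).1)
    (fun k _ => by
      simp only [hcast k]
      exact Finset.mem_image_of_mem χ (hmem _).2)
    (by
      simp only [hlast, Nat.cast_zero]
      have h0 : (0 : ZMod p) = -1 + 1 := by ring
      rw [h0]
      exact Finset.mem_image_of_mem χ (hmem (-1)).2)
    (fun k _ => by simp only [hcast k]; exact hwne _)
    (fun k _ => by simp only [hcast k]; exact hEne _)
  exact ⟨q, hq1, by omega, hq3⟩
end
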